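/- arXiv:2103.05618 — 12 statements merged into one kernel-verified Lean document; each statement's English description precedes it below -/
import Mathlib

section
/- Let N be a positive integer, let α be a real number with 1/N^{r-1} < α < 1/2, and let H be an r-uniform hypergraph on N vertices with density at least 1−α (i.e., the number of edges is at least (1−α)·C(N,r)). Then H contains a clique of size at least (1/4)·(1/α)^{1/(r−1)}. -/
/-!
Let `β = (1/α)^(1/(r-1))` and `k = ⌈β/4⌉`, so that `α k^(r-1) ≤ 1/2` and `2k ≤ N`.
A `2k`-set of vertices spans on average `α·C(2k, r) ≤ 2α k^r ≤ k` non-edges, so some `2k`-set `T`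
spans at most `k` of them; deleting one vertex of each non-edge inside `T` leaves a clique on at
least `k` vertices.
-/

open Finset

section Combinatorics

variable {V : Type*} [DecidableEq V]

theorem Finset.exists_subset_not_subset_card_le_add {F : Finset (Finset V)}
    (hF : ∀ f ∈ F, f.Nonempty) (T : Finset V) :
    ∃ S ⊆ T, (∀ f ∈ F, ¬f ⊆ S) ∧ #T ≤ #S + #{f ∈ F | f ⊆ T} := by
  induction T using Finset.strongInduction with
  | H T ih =>
    by_cases hT : ∃ f ∈ F, f ⊆ T
    · obtain ⟨f, hfF, hfT⟩ := hT
      obtain ⟨v, hvf⟩ := hF f hfF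
      obtain ⟨S, hS, hSF, hcard⟩ := ih (T.erase v) (erase_ssubset (hfT hvf))
      have hfewer : #{f ∈ F | f ⊆ T.erase v} < #{f ∈ F | f ⊆ T} := by
        refine card_lt_card ((ssubset_iff_of_subset ?_).mpr ⟨f, ?_, ?_⟩)
        · intro g
          simp only [mem_filter]
          exact fun ⟨hgF, hgT⟩ => ⟨hgF, hgT.trans (erase_subset v T)⟩
        · exact mem_filter.mpr ⟨hfF, hfT⟩
        · simp only [mem_filter, not_and]
          exact fun _ hf => notMem_erase v T (hf hvf)
      have := card_erase_add_one (hfT hvf)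
      exact ⟨S, hS.trans (erase_subset v T), hSF, by omega⟩
    · push Not at hT
      exact ⟨T, subset_rfl, hT, le_self_add⟩

theorem Finset.exists_mem_powersetCard_choose_mul_card_filter_subset_le (U : Finset V)
    {F : Finset (Finset V)} {r m : ℕ} (hF : ∀ f ∈ F, f ⊆ U ∧ #f = r) (hrm : r ≤ m)
    (hm : m ≤ #U) :
    ∃ T ∈ U.powersetCard m, (#U).choose r * #{f ∈ F | f ⊆ T} ≤ #F * m.choose r := by
  set P := U.powersetCard m
  have hcount : ∑ T ∈ P, #{f ∈ F | f ⊆ T} = #F * (#U - r).choose (m - r) := by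
    have := sum_card_bipartiteAbove_eq_sum_card_bipartiteBelow (s := P) (t := F)
      (r := fun T f => f ⊆ T)
    simp only [bipartiteAbove, bipartiteBelow] at this
    rw [this, sum_const_nat fun f hf => ?_]
    obtain ⟨hfU, hfr⟩ := hF f hf
    rw [card_filter_powersetCard_subset f U m hfU (hfr ▸ hrm), hfr]
  refine exists_le_of_sum_le (powersetCard_nonempty.mpr hm) (le_of_eq ?_)
  rw [← mul_sum, hcount, sum_const, card_powersetCard, smul_eq_mul, mul_left_comm,
    ← Nat.choose_mul hrm]
  ring

theorem Finset.exists_mem_powersetCard_card_filter_subset_le (U : Finset V)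
    {F : Finset (Finset V)} {r m : ℕ} {α : ℝ} (hF : ∀ f ∈ F, f ⊆ U ∧ #f = r) (hm : m ≤ #U)
    (hFα : (#F : ℝ) ≤ α * (#U).choose r) :
    ∃ T ∈ U.powersetCard m, (#{f ∈ F | f ⊆ T} : ℝ) ≤ α * m.choose r := by
  rcases lt_or_ge m r with hmr | hrm
  · obtain ⟨T, hT⟩ := powersetCard_nonempty.mpr hm
    refine ⟨T, hT, ?_⟩
    have : {f ∈ F | f ⊆ T} = ∅ := filter_eq_empty_iff.mpr fun f hf hfT => by
      have := card_le_card hfT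
      rw [(hF f hf).2, (mem_powersetCard.mp hT).2] at this
      omega
    simp [this, Nat.choose_eq_zero_of_lt hmr]
  · obtain ⟨T, hT, hle⟩ := exists_mem_powersetCard_choose_mul_card_filter_subset_le U hF hrm hm
    refine ⟨T, hT, ?_⟩
    have hpos : (0 : ℝ) < (#U).choose r := by exact_mod_cast Nat.choose_pos (hrm.trans hm)
    refine le_of_mul_le_mul_left ?_ hpos
    calc ((#U).choose r : ℝ) * #{f ∈ F | f ⊆ T} ≤ #F * m.choose r := by exact_mod_cast hle
      _ ≤ α * (#U).choose r * m.choose r := by gcongr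
      _ = _ := by ring

end Combinatorics

theorem Nat.choose_two_mul_le (k : ℕ) {r : ℕ} (hr : 0 < r) : (2 * k).choose r ≤ 2 * k ^ r := by
  obtain ⟨n, rfl⟩ : ∃ n, r = n + 1 := ⟨r - 1, by omega⟩
  have hfact : 2 ^ n ≤ (n + 1).factorial := by
    have := Nat.factorial_mul_pow_le_factorial (m := 1) (n := n)
    rwa [Nat.factorial_one, one_mul, Nat.add_comm 1 n] at this
  refine Nat.le_of_mul_le_mul_left ?_ (pow_pos two_pos n)
  calc 2 ^ n * (2 * k).choose (n + 1) ≤ (n + 1).factorial * (2 * k).choose (n + 1) := by gcongr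
    _ = (2 * k).descFactorial (n + 1) := (Nat.descFactorial_eq_factorial_mul_choose _ _).symm
    _ ≤ (2 * k) ^ (n + 1) := Nat.descFactorial_le_pow _ _
    _ = 2 ^ n * (2 * k ^ (n + 1)) := by ring

theorem Nat.ceil_le_max_one_two_mul {K : Type*} [Field K] [LinearOrder K] [IsStrictOrderedRing K]
    [FloorSemiring K] {x : K} (hx : 0 ≤ x) : (⌈x⌉₊ : K) ≤ max 1 (2 * x) := by
  rcases le_or_gt x 1 with hx1 | hx1
  · exact le_max_of_le_left (by exact_mod_cast Nat.ceil_le.mpr (by simpa using hx1))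
  · exact le_max_of_le_right (by linarith [Nat.ceil_lt_add_one hx])

namespace Hypergraph

variable {V : Type*}

def IsClique (E : Finset (Finset V)) (r : ℕ) (S : Finset V) : Prop :=
  ∀ e ⊆ S, #e = r → e ∈ E

variable [DecidableEq V] [Fintype V]

theorem exists_isClique_le_card {E : Finset (Finset V)} {r k : ℕ} {α : ℝ} (hr : 0 < r)
    (hα : 0 ≤ α) (hunif : ∀ e ∈ E, #e = r)
    (hdens : (1 - α) * ((Fintype.card V).choose r : ℝ) ≤ #E) (hk : 2 * k ≤ Fintype.card V)
    (hαk : α * k ^ (r - 1) ≤ 1 / 2) :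
    ∃ S, IsClique E r S ∧ k ≤ #S := by
  set F := univ.powersetCard r \ E
  have hE : E ⊆ univ.powersetCard r := fun e he =>
    mem_powersetCard.mpr ⟨subset_univ e, hunif e he⟩
  have hFα : (#F : ℝ) ≤ α * (#(univ : Finset V)).choose r := by
    rw [card_sdiff_of_subset hE, card_powersetCard,
      Nat.cast_sub ((card_le_card hE).trans_eq (card_powersetCard _ _)), card_univ]
    linarith
  obtain ⟨T, hT, hTF⟩ := exists_mem_powersetCard_card_filter_subset_le univ (m := 2 * k)
    (fun f hf => mem_powersetCard.mp (mem_sdiff.mp hf).1) (by simpa using hk) hFα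
  have hfew : #{f ∈ F | f ⊆ T} ≤ k := by
    have : (#{f ∈ F | f ⊆ T} : ℝ) ≤ k := calc
      _ ≤ α * (2 * k).choose r := hTF
      _ ≤ α * (2 * k ^ r : ℕ) := by gcongr; exact_mod_cast Nat.choose_two_mul_le k hr
      _ = 2 * (α * k ^ (r - 1)) * k := by push_cast; rw [← pow_sub_one_mul hr.ne']; ring
      _ ≤ k := by nlinarith
    exact_mod_cast this
  obtain ⟨S, -, hSF, hcard⟩ := exists_subset_not_subset_card_le_add (F := F)
    (fun f hf => card_pos.mp ((mem_powersetCard.mp (mem_sdiff.mp hf).1).2 ▸ hr)) T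
  refine ⟨S, fun e heS her => ?_, by rw [(mem_powersetCard.mp hT).2] at hcard; omega⟩
  by_contra heE
  exact hSF e (mem_sdiff.mpr ⟨mem_powersetCard.mpr ⟨subset_univ e, her⟩, heE⟩) heS

end Hypergraph

theorem mul_ceil_div_four_pow_le_half {α β : ℝ} {n : ℕ} (hn : n ≠ 0) (hα : 0 < α)
    (hα2 : α < 1 / 2) (hβ0 : 0 ≤ β) (hβ : β ^ n = 1 / α) :
    α * (⌈β / 4⌉₊ : ℝ) ^ n ≤ 1 / 2 := by
  rcases le_max_iff.mp (Nat.ceil_le_max_one_two_mul (x := β / 4) (by positivity)) with hk | hk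
  · calc α * (⌈β / 4⌉₊ : ℝ) ^ n ≤ α * 1 := by gcongr; exact pow_le_one₀ (by positivity) hk
      _ ≤ 1 / 2 := by linarith
  · calc α * (⌈β / 4⌉₊ : ℝ) ^ n ≤ α * (β / 2) ^ n := by gcongr; linarith
      _ = 1 / 2 ^ n := by rw [div_pow, hβ]; field_simp
      _ ≤ 1 / 2 := by gcongr; exact le_self_pow₀ one_le_two hn

theorem stmt_0_general (r N : ℕ) (hN : 0 < N) (α : ℝ)
    (hα1 : 1 / (N : ℝ) ^ (r - 1) < α) (hα2 : α < 1 / 2)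
    (V : Type) [Fintype V] (hV : Fintype.card V = N)
    (E : Finset (Finset V)) (hunif : ∀ e ∈ E, e.card = r)
    (hdens : (1 - α) * (N.choose r : ℝ) ≤ (E.card : ℝ)) :
    ∃ S : Finset V, (∀ e : Finset V, e ⊆ S → e.card = r → e ∈ E) ∧
      (1 / 4 : ℝ) * (1 / α) ^ ((1 : ℝ) / (r - 1)) ≤ (S.card : ℝ) := by
  classical
  have hα0 : 0 < α := lt_of_le_of_lt (by positivity) hα1
  have hn : r - 1 ≠ 0 := by
    intro h
    rw [h, pow_zero] at hα1
    linarith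
  have hexp : (1 : ℝ) / (r - 1) = ((r - 1 : ℕ) : ℝ)⁻¹ := by
    rw [Nat.cast_sub (by omega), Nat.cast_one, one_div]
  rw [hexp]
  set β := (1 / α) ^ ((r - 1 : ℕ) : ℝ)⁻¹
  have hβ : β ^ (r - 1) = 1 / α := Real.rpow_inv_natCast_pow (by positivity) hn
  have hβN : β < N := lt_of_pow_lt_pow_left₀ (r - 1) (Nat.cast_nonneg N)
    (hβ ▸ (one_div_lt (by positivity) hα0).mp hα1)
  have hβ1 : 1 < β := lt_of_pow_lt_pow_left₀ (r - 1) (by positivity) <| by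
    rw [hβ, one_pow, lt_one_div one_pos hα0]
    linarith
  have h2k : 2 * ⌈β / 4⌉₊ ≤ N := by
    have hN2 : (2 : ℝ) ≤ N := by exact_mod_cast (show 1 < N by exact_mod_cast hβ1.trans hβN)
    have hk := Nat.ceil_le_max_one_two_mul (x := β / 4) (by positivity)
    have : (2 * ⌈β / 4⌉₊ : ℝ) ≤ N := by rcases le_max_iff.mp hk with h | h <;> linarith
    exact_mod_cast this
  obtain ⟨S, hS, hkS⟩ := Hypergraph.exists_isClique_le_card (by omega) hα0.le hunif
    (by rwa [hV]) (hV ▸ h2k) (mul_ceil_div_four_pow_le_half hn hα0 hα2 (by positivity) hβ)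
  exact ⟨S, hS, by linarith [Nat.le_ceil (β / 4), (Nat.cast_le (α := ℝ)).mpr hkS]⟩

/-- A hypergraph of density ≥ 1-α contains a clique of size (1/4)(1/α)^(1/(r-1)). -/
theorem stmt_0 (r N : ℕ) (hr : 0 < r) (hN : 0 < N) (α : ℝ)
    (hα1 : 1 / (N : ℝ) ^ (r - 1) < α) (hα2 : α < 1 / 2)
    (V : Type) [Fintype V] (hV : Fintype.card V = N)
    (E : Finset (Finset V)) (hunif : ∀ e ∈ E, e.card = r)
    (hdens : (1 - α) * (N.choose r : ℝ) ≤ (E.card : ℝ)) :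
    ∃ S : Finset V, (∀ e : Finset V, e ⊆ S → e.card = r → e ∈ E) ∧
      (1 / 4 : ℝ) * (1 / α) ^ ((1 : ℝ) / (r - 1)) ≤ (S.card : ℝ) :=
  stmt_0_general r N hN α hα1 hα2 V hV E hunif hdens
end

section
/- Let G be a nonempty r-uniform hypergraph on M ≥ 100r vertices whose density is at most 1−α for some α > 0. Then there exists an (r−1)-element vertex set X such that 1 ≤ |N(X)| ≤ (1 − α/(2r))·M, where N(X) = {v : X ∪ {v} is an edge of G}. -/
/-!
Suppose every `(r-1)`-set with nonempty neighborhood had more than `K = (1 - α/(2r)) M`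
neighbors. Passing to links and double counting shows that `E` then has at least `K ^ r / r!`
edges, while Bernoulli's inequality gives `K ^ r ≥ (1 - α/2) M ^ r > (1 - α) r! C(M, r)`,
contradicting the density bound.
-/

open Finset Nat

namespace Finset

variable {α : Type*} [DecidableEq α] {𝒜 : Finset (Finset α)} {s : Finset α} {a : α} {r : ℕ}

theorem _root_.Set.Sized.memberSubfamily (h𝒜 : (𝒜 : Set (Finset α)).Sized r) :
    (𝒜.memberSubfamily a : Set (Finset α)).Sized (r - 1) := by
  intro s hs
  rw [mem_coe, mem_memberSubfamily] at hs
  have := h𝒜 hs.1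
  rw [card_insert_of_notMem hs.2] at this
  omega

variable [Fintype α]

def neighborhood (𝒜 : Finset (Finset α)) (s : Finset α) : Finset α :=
  univ.filter fun a => a ∉ s ∧ insert a s ∈ 𝒜

@[simp]
theorem mem_neighborhood : a ∈ 𝒜.neighborhood s ↔ a ∉ s ∧ insert a s ∈ 𝒜 := by
  simp [neighborhood]

theorem neighborhood_memberSubfamily (ha : a ∉ s) :
    (𝒜.memberSubfamily a).neighborhood s = 𝒜.neighborhood (insert a s) := by
  ext b
  simp only [mem_neighborhood, mem_memberSubfamily, mem_insert, not_or]
  constructor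
  · rintro ⟨hbs, hb𝒜, hab⟩
    exact ⟨⟨fun hba => hab.1 hba.symm, hbs⟩, insert_comm a b s ▸ hb𝒜⟩
  · rintro ⟨⟨hba, hbs⟩, hb𝒜⟩
    refine ⟨hbs, insert_comm a b s ▸ hb𝒜, ?_⟩
    simp [Ne.symm hba, ha]

theorem card_eq_of_neighborhood_nonempty (h𝒜 : (𝒜 : Set (Finset α)).Sized r)
    (hs : (𝒜.neighborhood s).Nonempty) : #s = r - 1 := by
  obtain ⟨a, ha⟩ := hs
  obtain ⟨has, ha𝒜⟩ := mem_neighborhood.1 ha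
  have := h𝒜 ha𝒜
  rw [card_insert_of_notMem has] at this
  omega

theorem sum_card_filter_mem (𝒜 : Finset (Finset α)) :
    ∑ a, #{s ∈ 𝒜 | a ∈ s} = ∑ s ∈ 𝒜, #s := by
  simpa [bipartiteAbove, bipartiteBelow] using
    sum_card_bipartiteAbove_eq_sum_card_bipartiteBelow (s := univ) (t := 𝒜) (· ∈ ·)

/-- Each vertex `b` of a neighborhood has a nonempty link `𝒜.memberSubfamily b` with the same
property, hence at least `K ^ r / r !` edges through `b` by induction; summing over the more than
`K` such vertices counts each edge at most `r + 1` times. -/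
theorem pow_le_factorial_mul_card_of_lt_card_neighborhood {K : ℝ} (hK : 0 ≤ K)
    (hsized : (𝒜 : Set (Finset α)).Sized r) (hne : 𝒜.Nonempty)
    (hK𝒜 : ∀ s, (𝒜.neighborhood s).Nonempty → K < #(𝒜.neighborhood s)) :
    K ^ r ≤ r ! * #𝒜 := by
  induction r generalizing 𝒜 with
  | zero => simpa using hne.card_pos
  | succ r ih =>
    obtain ⟨e, he⟩ := hne
    obtain ⟨a, ha⟩ : e.Nonempty := card_pos.1 (by rw [hsized he]; omega)
    set N := 𝒜.neighborhood (e.erase a)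
    have hN : N.Nonempty :=
      ⟨a, mem_neighborhood.2 ⟨notMem_erase a e, by rwa [insert_erase ha]⟩⟩
    have hlink : ∀ b ∈ N, K ^ r ≤ r ! * #{s ∈ 𝒜 | b ∈ s} := by
      intro b hb
      obtain ⟨hbs, hb𝒜⟩ := mem_neighborhood.1 hb
      have hlinkK : ∀ t, ((𝒜.memberSubfamily b).neighborhood t).Nonempty →
          K < #((𝒜.memberSubfamily b).neighborhood t) := by
        intro t ht
        obtain ⟨c, hc⟩ := ht
        have hbt : b ∉ t := fun hbt =>
          (mem_memberSubfamily.1 (mem_neighborhood.1 hc).2).2 (mem_insert_of_mem hbt)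
        rw [neighborhood_memberSubfamily hbt] at hc ⊢
        exact hK𝒜 _ ⟨c, hc⟩
      calc K ^ r ≤ r ! * #(𝒜.memberSubfamily b) :=
            ih hsized.memberSubfamily ⟨_, mem_memberSubfamily.2 ⟨hb𝒜, hbs⟩⟩ hlinkK
        _ ≤ r ! * #{s ∈ 𝒜 | b ∈ s} :=
            mul_le_mul_of_nonneg_left (mod_cast card_image_le) (by positivity)
    calc K ^ (r + 1) = K ^ r * K := pow_succ K r
      _ ≤ K ^ r * #N := by gcongr; exact (hK𝒜 _ hN).le
      _ = ∑ b ∈ N, K ^ r := by rw [sum_const, nsmul_eq_mul, mul_comm]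
      _ ≤ ∑ b ∈ N, (r ! * #{s ∈ 𝒜 | b ∈ s} : ℝ) := sum_le_sum hlink
      _ ≤ ∑ b, (r ! * #{s ∈ 𝒜 | b ∈ s} : ℝ) :=
            sum_le_sum_of_subset_of_nonneg (subset_univ N) (fun _ _ _ => by positivity)
      _ = (r + 1)! * #𝒜 := by
            rw [← mul_sum]
            norm_cast
            rw [sum_card_filter_mem, sum_const_nat fun s hs => hsized hs, factorial_succ]
            ring

end Finset

theorem one_sub_le_one_sub_div_pow (r : ℕ) {x : ℝ} (hx : 0 ≤ x) (hxr : x / r ≤ 2) :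
    1 - x ≤ (1 - x / r) ^ r := by
  rcases r.eq_zero_or_pos with rfl | hr
  · simpa using hx
  · have := one_add_mul_le_pow (a := -(x / r)) (by linarith) r
    rwa [mul_neg, mul_div_cancel₀ _ (by positivity), ← sub_eq_add_neg, ← sub_eq_add_neg] at this

theorem stmt_1_general (r M : ℕ) (α : ℝ) (hα : 0 < α)
    (V : Type) [Fintype V] [DecidableEq V]
    (E : Finset (Finset V)) (hunif : ∀ e ∈ E, e.card = r) (hne : E.Nonempty)
    (hdens : (E.card : ℝ) ≤ (1 - α) * (M.choose r : ℝ)) :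
    ∃ X : Finset V, X.card = r - 1 ∧
      1 ≤ ((Finset.univ.filter (fun v => v ∉ X ∧ insert v X ∈ E)).card : ℕ) ∧
      (((Finset.univ.filter (fun v => v ∉ X ∧ insert v X ∈ E)).card : ℝ)) ≤
        (1 - α / (2 * r)) * M := by
  by_contra! hcon
  have hsized : (E : Set (Finset V)).Sized r := fun e he => hunif e he
  have hE : (1 : ℝ) ≤ #E := mod_cast hne.card_pos
  have hα1 : α < 1 := by nlinarith [(M.choose r).cast_nonneg (α := ℝ)]
  have hx : α / 2 / r ≤ α / 2 := div_nat_le_self_of_nonnneg (by positivity) r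
  set K : ℝ := (1 - α / (2 * r)) * M
  have hK : 0 ≤ K := mul_nonneg (by rw [← div_div]; linarith) M.cast_nonneg
  have hKE : K ^ r ≤ r ! * #E :=
    pow_le_factorial_mul_card_of_lt_card_neighborhood hK hsized hne fun X hX =>
      hcon X (card_eq_of_neighborhood_nonempty hsized hX) hX.card_pos
  have hbern : (1 - α / 2) * (M : ℝ) ^ r ≤ K ^ r := by
    rw [mul_pow, ← div_div]
    gcongr
    exact one_sub_le_one_sub_div_pow r (by positivity) (by linarith)
  have hchoose : (r ! * M.choose r : ℝ) ≤ M ^ r := by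
    rw [← Nat.cast_mul, ← Nat.descFactorial_eq_factorial_mul_choose]
    exact_mod_cast M.descFactorial_le_pow r
  have hF : (1 : ℝ) ≤ r ! := mod_cast r.factorial_pos
  have hupper : (r ! * #E : ℝ) ≤ (1 - α) * M ^ r := by
    calc (r ! * #E : ℝ) ≤ r ! * ((1 - α) * M.choose r) := by gcongr
      _ = (1 - α) * (r ! * M.choose r) := by ring
      _ ≤ (1 - α) * M ^ r := by gcongr
  have hP : (M : ℝ) ^ r ≤ 0 := by nlinarith
  nlinarith

/-- A nonempty r-uniform hypergraph of density ≤ 1-α on M ≥ 100r vertices has an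
(r-1)-set X with 1 ≤ |N(X)| ≤ (1 - α/(2r))·M. -/
theorem stmt_1 (r M : ℕ) (hr : 0 < r) (hM : 100 * r ≤ M) (α : ℝ) (hα : 0 < α)
    (V : Type) [Fintype V] [DecidableEq V] (hV : Fintype.card V = M)
    (E : Finset (Finset V)) (hunif : ∀ e ∈ E, e.card = r) (hne : E.Nonempty)
    (hdens : (E.card : ℝ) ≤ (1 - α) * (M.choose r : ℝ)) :
    ∃ X : Finset V, X.card = r - 1 ∧
      1 ≤ ((Finset.univ.filter (fun v => v ∉ X ∧ insert v X ∈ E)).card : ℕ) ∧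
      (((Finset.univ.filter (fun v => v ∉ X ∧ insert v X ∈ E)).card : ℝ)) ≤
        (1 - α / (2 * r)) * M :=
  stmt_1_general r M α hα V E hunif hne hdens
end

section
/- Let T : A^r → F be an r-dimensional semi-diagonal tensor over a field F, where A is a finite set. Then the maximum over i ∈ [r] of the i-flattening rank of T is at least |A|/(r−1). -/
/-!
Write `T'(c₀, …, c_{n-1}) := T(c₀, …, c_{n-1}, c₀)` for the tensor obtained by identifying the
last coordinate with the first. Given `S ⊆ A` on which `T` vanishes at injective tuples, choose
`B ⊆ S` such that the last-coordinate slices `T(·, b)`, `b ∈ B`, span those indexed by `S`;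
then `|B|` is at most the last flattening rank. For an injective tuple `c` in `S \ B` each
`T(c, b)` with `b ∈ B` vanishes, hence so does `T(c, c₀) = T'(c)`. Since `T'` stays
semi-diagonal and its flattening ranks at coordinates `1, …, n-1` are bounded by those of `T`,
induction gives `|A| ≤ ∑_{i=1}^{r-1} frank_i(T) ≤ (r - 1) · max_i frank_i(T)`.
-/

open Finset Function

variable {F A : Type*} [Field F]

/-- Since `a i` is ignored, this is the `i`-flattening with its columns pulled back along the
restriction `(ι → A) → ({j // j ≠ i} → A)`. -/
def sliceMatrix {ι : Type*} [DecidableEq ι] (T : (ι → A) → F) (i : ι) : Matrix A (ι → A) F :=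
  Matrix.of fun x a => T (update a i x)

theorem exists_finset_card_le_rank_span_rows [Finite A] {ι : Type*} [Fintype ι]
    (N : Matrix A ι F) (S : Finset A) :
    ∃ B ⊆ S, #B ≤ N.rank ∧ ∀ x ∈ S, N x ∈ Submodule.span F (N '' B) := by
  obtain ⟨b, hbS, -, hspan, hindep⟩ :=
    exists_linearIndepOn_extension (linearIndepOn_empty F N) (Set.empty_subset (S : Set A))
  obtain ⟨B, rfl⟩ := (S.finite_toSet.subset hbS).exists_finset_coe
  refine ⟨B, coe_subset.1 hbS, ?_, fun x hx => hspan ⟨x, hx, rfl⟩⟩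
  calc #B = Module.finrank F (Submodule.span F (Set.range fun x : (B : Set A) => N x)) := by
        rw [finrank_span_eq_card hindep]
        simp
    _ ≤ Module.finrank F (Submodule.span F (Set.range N.row)) :=
        Submodule.finrank_mono (Submodule.span_mono (Set.range_comp_subset_range _ N))
    _ = N.rank := N.rank_eq_finrank_span_row.symm

theorem apply_eq_zero_of_mem_span {ι : Type*} {s : Set (ι → F)} {v : ι → F}
    (hv : v ∈ Submodule.span F s) (p : ι) (hs : ∀ u ∈ s, u p = 0) : v p = 0 :=
  (Submodule.span_le (p := LinearMap.ker (LinearMap.proj p)) |>.2 hs) hv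

theorem rank_sliceMatrix_comp_le [Fintype A] {ι κ : Type*} [DecidableEq ι] [DecidableEq κ]
    [Fintype ι] [Fintype κ] (T : (ι → A) → F) (φ : (κ → A) → ι → A) (i : κ) (j : ι)
    (hφ : ∀ c x, φ (update c i x) = update (φ c) j x) :
    (sliceMatrix (T ∘ φ) i).rank ≤ (sliceMatrix T j).rank := by
  have : sliceMatrix (T ∘ φ) i = (sliceMatrix T j).submatrix id φ := by
    ext x c
    simp [sliceMatrix, hφ]
  exact this ▸ Matrix.rank_submatrix_le _ _ _

theorem card_le_sum_rank_sliceMatrix [Fintype A] {n : ℕ} (T : (Fin (n + 1) → A) → F)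
    (hdiag : ∀ x : A, T (fun _ => x) ≠ 0) (S : Finset A)
    (hzero : ∀ a : Fin (n + 1) → A, Injective a → (∀ j, a j ∈ S) → T a = 0) :
    #S ≤ ∑ i : Fin n, (sliceMatrix T i.succ).rank := by
  classical
  induction n generalizing S with
  | zero =>
    rw [Finset.eq_empty_of_forall_notMem fun x hx =>
      hdiag x (hzero _ (fun j k _ => Subsingleton.elim (α := Fin 1) j k) fun _ => hx)]
    simp
  | succ n ih =>
    set N := sliceMatrix T (Fin.last (n + 1))
    obtain ⟨B, hBS, hBcard, hBspan⟩ := exists_finset_card_le_rank_span_rows N S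
    let collapse : (Fin (n + 1) → A) → Fin (n + 2) → A := fun c => Fin.snoc c (c 0)
    have hN : ∀ c x, N x (collapse c) = T (Fin.snoc c x) := fun c x => by
      simp [N, collapse, sliceMatrix, Fin.update_snoc_last]
    have hzero' : ∀ c, Injective c → (∀ j, c j ∈ S \ B) → (T ∘ collapse) c = 0 := by
      intro c hc hcSB
      rw [comp_apply, ← hN]
      refine apply_eq_zero_of_mem_span (hBspan _ (mem_sdiff.1 (hcSB 0)).1) _ ?_
      rintro _ ⟨b, hb, rfl⟩
      have hbc : b ∉ Set.range c := by
        rintro ⟨j, rfl⟩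
        exact (mem_sdiff.1 (hcSB j)).2 hb
      refine (hN c b).trans (hzero _ (Fin.snoc_injective_of_injective hc hbc) fun j => ?_)
      induction j using Fin.lastCases with
      | last => simpa using hBS hb
      | cast j => simpa using (mem_sdiff.1 (hcSB j)).1
    have hdiag' : ∀ x, (T ∘ collapse) (fun _ => x) ≠ 0 := fun x => by
      have : collapse (fun _ => x) = fun _ => x := by
        ext j
        induction j using Fin.lastCases <;> simp [collapse]
      simpa [this] using hdiag x
    have hrank : ∀ i : Fin n, (sliceMatrix (T ∘ collapse) i.succ).rank ≤
        (sliceMatrix T i.succ.castSucc).rank := fun i =>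
      rank_sliceMatrix_comp_le T collapse _ _ fun c x => by
        simp [collapse, Fin.snoc_update, update_of_ne (Fin.succ_ne_zero i).symm]
    calc #S = #(S \ B) + #B := (card_sdiff_add_card_eq_card hBS).symm
      _ ≤ ∑ i : Fin n, (sliceMatrix T i.succ.castSucc).rank + N.rank :=
        add_le_add ((ih _ hdiag' _ hzero').trans (sum_le_sum fun i _ => hrank i)) hBcard
      _ = ∑ i : Fin (n + 1), (sliceMatrix T i.succ).rank := by
        rw [Fin.sum_univ_castSucc, Fin.succ_last]
        simp only [Fin.succ_castSucc, N]

theorem rank_sliceMatrix_le_of_flattening [Fintype A] {r : ℕ} (T : (Fin r → A) → F) (i : Fin r)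
    (M : Matrix A ({j : Fin r // j ≠ i} → A) F)
    (hM : ∀ (a : A) (b : {j : Fin r // j ≠ i} → A),
      M a b = T (fun j => if h : j = i then a else b ⟨j, h⟩)) :
    (sliceMatrix T i).rank ≤ M.rank := by
  have : sliceMatrix T i = M.submatrix id fun a j => a j := by
    ext x a
    simp only [sliceMatrix, Matrix.of_apply, Matrix.submatrix_apply, id, hM]
    congr 1
    ext j
    by_cases hj : j = i <;> simp [hj]
  exact this ▸ Matrix.rank_submatrix_le _ _ _

theorem stmt_3_general (F : Type) [Field F] (A : Type) [Fintype A]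
    (r : ℕ) (hr : 0 < r) (T : (Fin r → A) → F)
    (hzero : ∀ a : Fin r → A, Function.Injective a → T a = 0)
    (hdiag : ∀ x : A, T (fun _ => x) ≠ 0)
    (M : (i : Fin r) → Matrix A ({j : Fin r // j ≠ i} → A) F)
    (hM : ∀ (i : Fin r) (a : A) (b : {j : Fin r // j ≠ i} → A),
      M i a b = T (fun j => if h : j = i then a else b ⟨j, h⟩)) :
    ∃ i : Fin r, (Fintype.card A : ℝ) / ((r : ℝ) - 1) ≤ ((M i).rank : ℝ) := by
  obtain ⟨n, rfl⟩ := Nat.exists_eq_add_one_of_ne_zero hr.ne'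
  obtain ⟨imax, hmax⟩ := Finite.exists_max fun i => (M i).rank
  have hcard : Fintype.card A ≤ n * (M imax).rank :=
    calc Fintype.card A ≤ ∑ i : Fin n, (sliceMatrix T i.succ).rank :=
          card_le_sum_rank_sliceMatrix T hdiag univ fun a ha _ => hzero a ha
      _ ≤ ∑ _i : Fin n, (M imax).rank := sum_le_sum fun i _ =>
          (rank_sliceMatrix_le_of_flattening T _ _ (hM _)).trans (hmax _)
      _ = n * (M imax).rank := by simp
  refine ⟨imax, div_le_of_le_mul₀ (by simp) (Nat.cast_nonneg _) ?_⟩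
  rw [Nat.cast_add_one, add_sub_cancel_right, mul_comm]
  exact_mod_cast hcard

/-- A semi-diagonal r-dimensional tensor on A^r has some flattening rank
at least |A|/(r-1). -/
theorem stmt_3 (F : Type) [Field F] (A : Type) [Fintype A] [DecidableEq A]
    (r : ℕ) (hr : 0 < r) (T : (Fin r → A) → F)
    (hzero : ∀ a : Fin r → A, Function.Injective a → T a = 0)
    (hdiag : ∀ x : A, T (fun _ => x) ≠ 0)
    (M : (i : Fin r) → Matrix A ({j : Fin r // j ≠ i} → A) F)
    (hM : ∀ (i : Fin r) (a : A) (b : {j : Fin r // j ≠ i} → A),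
      M i a b = T (fun j => if h : j = i then a else b ⟨j, h⟩)) :
    ∃ i : Fin r, (Fintype.card A : ℝ) / ((r : ℝ) - 1) ≤ ((M i).rank : ℝ) :=
  stmt_3_general F A r hr T hzero hdiag M hM
end

section
/- Let f : (F^n)^r → F be a polynomial of degree at most d, defining a directed r-uniform hypergraph H on a vertex set V ⊆ F^n where an r-tuple (v_1,…,v_r) of distinct vertices is an edge iff f(v_1,…,v_r) ≠ 0. Then for every k ∈ [r] and every s > C(n+d,d), there do not exist vertices u_{i,j} (i ∈ [s], j ∈ [r]) such that, defining X_{i,i'} to be the r-tuple with j-th coordinate u_{i,j} for j ≠ k and k-th coordinate u_{i',k}, we have f(X_{i,i}) ≠ 0 for all i ∈ [s] while f(X_{i,i'}) = 0 for all 1 ≤ i < i' ≤ s. -/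
/-!
Let `X i i'` be the `i`-th tuple with its `k`-th vertex replaced by `u i' k`. For fixed `i`, the
map `y ↦ f(X i with k-th vertex y)` is a polynomial function of `y ∈ F^n` built from the monomials
`y^μ` with `μ` the `k`-block exponents of `f`; these have degree at most `d`, so there are at most
`C(n+d,d)` of them (stars and bars after homogenizing). The matrix `f(X i i')` is lower triangular
with nonzero diagonal, so these `s` functions are linearly independent, forcing `s ≤ C(n+d,d)`.
-/

open MvPolynomial

theorem Finset.card_le_choose_of_forall_sum_le {n d : ℕ} (T : Finset (Fin n → ℕ))
    (hT : ∀ μ ∈ T, ∑ t, μ t ≤ d) : T.card ≤ (n + d).choose d := by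
  classical
  let homogenize : (Fin n → ℕ) → Fin (n + 1) →₀ ℕ :=
    fun μ ↦ Finsupp.equivFunOnFinite.symm (Fin.cons (d - ∑ t, μ t) μ)
  have hmaps : Set.MapsTo homogenize T
      (Finset.univ.finsuppAntidiag d : Finset (Fin (n + 1) →₀ ℕ)) := by
    intro μ hμ
    simpa [homogenize, Fin.sum_cons] using Nat.sub_add_cancel (hT μ hμ)
  have hinj : Set.InjOn homogenize T := fun μ _ ν _ h ↦
    (Fin.cons_injective2 (Finsupp.equivFunOnFinite.symm.injective h)).2
  calc T.card ≤ (Finset.univ.finsuppAntidiag d).card := Finset.card_le_card_of_injOn _ hmaps hinj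
    _ = (n + d).choose d := by
      rw [Finset.card_finsuppAntidiag_nat_eq_choose, Finset.card_univ, Fintype.card_fin]
      congr 1
      omega

theorem linearIndependent_of_triangular {ι R V : Type*} [Fintype ι] [LinearOrder ι]
    [CommRing R] [IsDomain R] [AddCommGroup V] [Module R V] (v : ι → V) (φ : ι → V →ₗ[R] R)
    (hdiag : ∀ i, φ i (v i) ≠ 0) (hlt : ∀ i i', i < i' → φ i' (v i) = 0) :
    LinearIndependent R v := by
  let M : Matrix ι ι R := Matrix.of fun i i' ↦ φ i' (v i)
  have hM : M.IsLowerTriangular := fun i i' h ↦ hlt i i' h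
  have hdet : M.det ≠ 0 := by
    rw [Matrix.det_of_isLowerTriangular M hM]
    exact Finset.prod_ne_zero_iff.2 fun i _ ↦ hdiag i
  exact (Matrix.linearIndependent_rows_of_det_ne_zero hdet).of_comp (LinearMap.pi φ)

namespace MvPolynomial

variable {ι σ R : Type*} [Fintype ι] [Fintype σ] [CommSemiring R]

def blockExponents (k : ι) (f : MvPolynomial (ι × σ) R) : Finset (σ → ℕ) :=
  f.support.image fun m t ↦ m (k, t)

theorem sum_le_totalDegree_of_mem_blockExponents {k : ι} {f : MvPolynomial (ι × σ) R}
    {μ : σ → ℕ} (hμ : μ ∈ f.blockExponents k) : ∑ t, μ t ≤ f.totalDegree := by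
  obtain ⟨m, hm, rfl⟩ := Finset.mem_image.1 hμ
  calc ∑ t, m (k, t) ≤ ∑ j, ∑ t, m (j, t) :=
        Finset.single_le_sum (f := fun j ↦ ∑ t, m (j, t)) (fun _ _ ↦ Nat.zero_le _)
          (Finset.mem_univ k)
    _ = m.sum fun _ e ↦ e := by
      rw [Finsupp.sum_fintype _ _ fun _ ↦ rfl, Fintype.sum_prod_type]
    _ ≤ f.totalDegree := le_totalDegree hm

theorem prod_update_pow [DecidableEq ι] (x : ι → σ → R) (k : ι) (y : σ → R) (m : ι × σ →₀ ℕ) :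
    ∏ p, Function.update x k y p.1 p.2 ^ m p =
      (∏ j ∈ Finset.univ.erase k, ∏ t, x j t ^ m (j, t)) * ∏ t, y t ^ m (k, t) := by
  rw [Fintype.prod_prod_type, ← Finset.prod_erase_mul _ _ (Finset.mem_univ k)]
  congr 1
  · refine Finset.prod_congr rfl fun j hj ↦ ?_
    simp only [Function.update_of_ne (Finset.ne_of_mem_erase hj)]
  · simp only [Function.update_self]

theorem eval_update_mem_span [DecidableEq ι] (f : MvPolynomial (ι × σ) R) (x : ι → σ → R)
    (k : ι) :
    (fun y ↦ eval (fun p ↦ Function.update x k y p.1 p.2) f) ∈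
      Submodule.span R
        (Set.range fun μ : f.blockExponents k ↦ fun y : σ → R ↦ ∏ t, y t ^ μ.1 t) := by
  have hexpand : (fun y ↦ eval (fun p ↦ Function.update x k y p.1 p.2) f) =
      ∑ m ∈ f.support, (f.coeff m * ∏ j ∈ Finset.univ.erase k, ∏ t, x j t ^ m (j, t)) •
        fun y : σ → R ↦ ∏ t, y t ^ m (k, t) := by
    ext y
    simp only [eval_eq', prod_update_pow, Finset.sum_apply, Pi.smul_apply, smul_eq_mul, mul_assoc]
  rw [hexpand]
  refine Submodule.sum_mem _ fun m hm ↦ Submodule.smul_mem _ _ (Submodule.subset_span ?_)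
  exact ⟨⟨_, Finset.mem_image_of_mem _ hm⟩, rfl⟩

end MvPolynomial

theorem stmt_4_general (F : Type) [Field F] (n d r s : ℕ)
    (hs : (n + d).choose d < s)
    (f : MvPolynomial (Fin r × Fin n) F) (hdeg : f.totalDegree ≤ d)
    (k : Fin r) :
    ¬ ∃ u : Fin s → Fin r → (Fin n → F),
      (∀ i : Fin s, eval (fun p : Fin r × Fin n =>
          (if p.1 = k then u i k else u i p.1) p.2) f ≠ 0) ∧
      (∀ i i' : Fin s, i < i' → eval (fun p : Fin r × Fin n =>
          (if p.1 = k then u i' k else u i p.1) p.2) f = 0) := by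
  rintro ⟨u, hdiag, hoff⟩
  let g : Fin s → (Fin n → F) → F :=
    fun i y ↦ eval (fun p ↦ Function.update (u i) k y p.1 p.2) f
  have hg : ∀ i i', g i (u i' k) = eval (fun p ↦ (if p.1 = k then u i' k else u i p.1) p.2) f :=
    fun i i' ↦ by simp only [g, Function.update_apply]
  have hindep : LinearIndependent F g :=
    linearIndependent_of_triangular g (fun i' ↦ LinearMap.proj (u i' k))
      (fun i ↦ (hg i i).trans_ne (hdiag i)) fun i i' h ↦ (hg i i').trans (hoff i i' h)
  let monomials : Set ((Fin n → F) → F) :=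
    Set.range fun μ : f.blockExponents k ↦ fun y ↦ ∏ t, y t ^ μ.1 t
  have hspan : Set.range g ⊆ Submodule.span F monomials := by
    rintro _ ⟨i, rfl⟩
    exact eval_update_mem_span f (u i) k
  have : FiniteDimensional F (Submodule.span F monomials) :=
    FiniteDimensional.span_of_finite F (Set.finite_range _)
  have hs_le : s ≤ (n + d).choose d :=
    calc s = Fintype.card (Fin s) := (Fintype.card_fin s).symm
      _ ≤ (Set.range g).finrank F := linearIndependent_iff_card_le_finrank_span.1 hindep
      _ ≤ monomials.finrank F := Submodule.finrank_mono (Submodule.span_le.2 hspan)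
      _ ≤ (f.blockExponents k).card := (finrank_range_le_card _).trans_eq (Fintype.card_coe _)
      _ ≤ (n + d).choose d := Finset.card_le_choose_of_forall_sum_le _ fun μ hμ ↦
        (sum_le_totalDegree_of_mem_blockExponents hμ).trans hdeg
  exact hs.not_ge hs_le

/-- An algebraic dihypergraph defined by a single degree-≤d polynomial contains no
member of M(r,s,k) for s > C(n+d,d). -/
theorem stmt_4 (F : Type) [Field F] (n d r s : ℕ) (hr : 0 < r)
    (hs : (n + d).choose d < s)
    (f : MvPolynomial (Fin r × Fin n) F) (hdeg : f.totalDegree ≤ d)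
    (k : Fin r) :
    ¬ ∃ u : Fin s → Fin r → (Fin n → F),
      (∀ i : Fin s, eval (fun p : Fin r × Fin n =>
          (if p.1 = k then u i k else u i p.1) p.2) f ≠ 0) ∧
      (∀ i i' : Fin s, i < i' → eval (fun p : Fin r × Fin n =>
          (if p.1 = k then u i' k else u i p.1) p.2) f = 0) :=
  stmt_4_general F n d r s hs f hdeg k
end

section
/- Let f_1,…,f_m : F^n → F be polynomials of degree at most d over a field F. Then the number of zero-patterns of (f_1,…,f_m) is at most C(md+n, n). Here a zero-pattern is a subset S ⊆ [m] for which there exists x ∈ F^n with f_i(x) = 0 exactly when i ∈ S. -/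
open MvPolynomial

/-- Rónyai–Babai–Ganapathy: m polynomials of degree ≤ d in n variables have at most
C(md+n, n) zero-patterns. -/
theorem stmt_5 (F : Type) [Field F] (n d m : ℕ)
    (f : Fin m → MvPolynomial (Fin n) F) (hdeg : ∀ i, (f i).totalDegree ≤ d) :
    {S : Finset (Fin m) | ∃ x : Fin n → F, ∀ i, eval x (f i) = 0 ↔ i ∈ S}.ncard ≤
      (m * d + n).choose n := by
  classical
  set N := m * d with hN
  set P := {S : Finset (Fin m) | ∃ x : Fin n → F, ∀ i, eval x (f i) = 0 ↔ i ∈ S} with hP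
  haveI fP : Fintype ↥P := Fintype.ofFinite _
  choose x hx using fun S : ↥P => S.2
  set g : Finset (Fin m) → MvPolynomial (Fin n) F := fun S => ∏ i ∈ Sᶜ, f i with hg
  have hmem : ∀ S, g S ∈ restrictTotalDegree (Fin n) F N := by
    intro S
    rw [mem_restrictTotalDegree]
    calc (g S).totalDegree ≤ ∑ i ∈ Sᶜ, (f i).totalDegree := totalDegree_finset_prod _ _
      _ ≤ ∑ _i ∈ Sᶜ, d := Finset.sum_le_sum fun i _ => hdeg i
      _ = Sᶜ.card * d := by rw [Finset.sum_const, smul_eq_mul]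
      _ ≤ m * d := Nat.mul_le_mul_right d (by simpa using Finset.card_le_univ Sᶜ)
  have hdiag : ∀ S : ↥P, eval (x S) (g S) ≠ 0 := by
    intro S
    rw [hg, map_prod, Finset.prod_ne_zero_iff]
    intro i hi
    rw [Finset.mem_compl] at hi
    exact fun h => hi ((hx S i).1 h)
  have hoff : ∀ S T : ↥P, ¬ (S : Finset (Fin m)) ⊆ (T : Finset (Fin m)) →
      eval (x S) (g T) = 0 := by
    intro S T hST
    obtain ⟨i, hiS, hiT⟩ := Finset.not_subset.1 hST
    rw [hg, map_prod]
    exact Finset.prod_eq_zero (Finset.mem_compl.2 hiT) ((hx S i).2 hiS)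
  have key : ∀ s : Finset ↥P, ∀ c : ↥P → F,
      ∑ T ∈ s, c T • g T = 0 → ∀ T ∈ s, c T = 0 := by
    intro s
    induction s using Finset.strongInduction with
    | _ s ih =>
      intro c hc T hT
      obtain ⟨S, hS, hmax⟩ := s.exists_max_image
        (fun S : ↥P => (S : Finset (Fin m)).card) ⟨T, hT⟩
      have hSc : c S = 0 := by
        have h0 : ∑ T' ∈ s, c T' * eval (x S) (g T') = 0 := by
          have := congrArg (eval (x S)) hc
          rw [map_sum, map_zero] at this
          simpa [smul_eval] using this
        have hsingle : ∑ T' ∈ s, c T' * eval (x S) (g T')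
            = c S * eval (x S) (g S) := by
          refine Finset.sum_eq_single S (fun T' hT' hne => ?_) (fun h => absurd hS h)
          rcases Classical.em ((S : Finset (Fin m)) ⊆ (T' : Finset (Fin m))) with hsub | hsub
          · have : (S : Finset (Fin m)) = (T' : Finset (Fin m)) :=
              Finset.eq_of_subset_of_card_le hsub (hmax T' hT')
            exact absurd (Subtype.ext this.symm) hne
          · rw [hoff S T' hsub, mul_zero]
        rw [hsingle] at h0
        exact (mul_eq_zero.1 h0).resolve_right (hdiag S)
      rcases eq_or_ne T S with hTS | hTS
      · rwa [hTS]
      · refine ih (s.erase S) (Finset.erase_ssubset hS) c ?_ T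
          (Finset.mem_erase.2 ⟨hTS, hT⟩)
        rw [Finset.sum_erase s (by rw [hSc, zero_smul])]
        exact hc
  have hli : LinearIndependent F
      (fun S : ↥P => (⟨g S, hmem S⟩ : restrictTotalDegree (Fin n) F N)) := by
    rw [linearIndependent_iff']
    intro s c hc
    refine key s c ?_
    have := congrArg (Submodule.subtype (restrictTotalDegree (Fin n) F N)) hc
    rw [map_sum, map_zero] at this
    simpa using this
  have hcard := hli.fintype_card_le_finrank
  haveI : Finite ↥{s : Fin n →₀ ℕ | (s.sum fun _ e => e) ≤ N} := by
    have h1 : {f : Fin n →₀ ℕ | ∀ a, f a ≤ N}.Finite :=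
      (Set.Finite.pi' fun _ => Set.finite_le_nat N).preimage DFunLike.coe_injective.injOn
    refine Set.finite_coe_iff.2 (h1.subset fun s hs i => ?_)
    rcases eq_or_ne (s i) 0 with h | h
    · omega
    · exact le_trans (Finset.single_le_sum (fun _ _ => Nat.zero_le _)
        (Finsupp.mem_support_iff.mpr h)) hs
  haveI : Fintype ↥{s : Fin n →₀ ℕ | (s.sum fun _ e => e) ≤ N} := Fintype.ofFinite _
  have hrank : Module.finrank F (restrictTotalDegree (Fin n) F N)
      = Fintype.card ↥{s : Fin n →₀ ℕ | (s.sum fun _ e => e) ≤ N} :=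
    Module.finrank_eq_card_basis
      (basisRestrictSupport F {s : Fin n →₀ ℕ | (s.sum fun _ e => e) ≤ N})
  have e1 : ↥{s : Fin n →₀ ℕ | (s.sum fun _ e => e) ≤ N}
      ≃ {p : Fin n → ℕ // ∑ i, p i ≤ N} :=
    Finsupp.equivFunOnFinite.subtypeEquiv fun s => by
      rw [Set.mem_setOf_eq, Finsupp.sum_fintype _ _ (fun _ => rfl)]; rfl
  have e2 : {p : Fin n → ℕ // ∑ i, p i ≤ N} ≃ {q : Fin (n + 1) → ℕ // ∑ i, q i = N} :=
    { toFun := fun p => ⟨Fin.cons (N - ∑ i, p.1 i) p.1, by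
        rw [Fin.sum_cons]; omega⟩
      invFun := fun q => ⟨fun i => q.1 i.succ, by
        show ∑ i : Fin n, q.1 i.succ ≤ N
        have h := q.2; rw [Fin.sum_univ_succ] at h; omega⟩
      left_inv := fun p => Subtype.ext (funext fun i => by simp [Fin.cons_succ])
      right_inv := fun q => Subtype.ext (funext fun j => by
        refine Fin.cases ?_ (fun i => by simp [Fin.cons_succ]) j
        have h := q.2; rw [Fin.sum_univ_succ] at h
        simp only [Fin.cons_zero]
        omega) }
  have e3 : {q : Fin (n + 1) → ℕ // ∑ i, q i = N} ≃ Sym (Fin (n + 1)) N :=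
    (Sym.equivNatSumOfFintype (Fin (n + 1)) N).symm
  have hcount : Fintype.card ↥{s : Fin n →₀ ℕ | (s.sum fun _ e => e) ≤ N}
      = (N + n).choose n := by
    rw [Fintype.card_congr ((e1.trans e2).trans e3), Sym.card_sym_eq_choose]
    simp only [Fintype.card_fin]
    have h : n + 1 + N - 1 = N + n := by omega
    rw [h, Nat.choose_symm_add]
  have : P.ncard = Fintype.card ↥P := by
    rw [Set.ncard_eq_toFinset_card', Set.toFinset_card]
  rw [this]
  calc Fintype.card ↥P ≤ Module.finrank F (restrictTotalDegree (Fin n) F N) := hcard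
    _ = (N + n).choose n := by rw [hrank, hcount]
end

section
/- Let G be a nonempty r-partite r-uniform hypergraph with vertex classes W_1,…,W_r, and suppose the density d(W_1,…,W_r) = |E(G)|/(|W_1|⋯|W_r|) is at most ε. Then there exist ℓ ∈ [r] and an (r−1)-element set X with exactly one vertex in each W_i for i ≠ ℓ, such that 1 ≤ |N(X)| ≤ ε^{1/r}·|W_ℓ|. -/
open Finset

lemma key_lemma (V : Type) [DecidableEq V] :
    ∀ (n : ℕ) (W : Fin n → Finset V) (E : Finset (Finset V)),
    (∀ i j, i ≠ j → Disjoint (W i) (W j)) →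
    (∀ e ∈ E, ∀ i, (e ∩ W i).card = 1) →
    ∀ (δ : Fin n → ℕ),
    (∀ e ∈ E, ∀ ℓ, δ ℓ ≤ ((W ℓ).filter (fun u => insert u (e \ W ℓ) ∈ E)).card) →
    E.Nonempty → ∏ ℓ, δ ℓ ≤ E.card := by
  intro n
  induction n with
  | zero =>
    intro W E _ _ δ _ hne
    simpa using hne.card_pos
  | succ n ih =>
    intro W E hdisj hpart δ hdeg hne
    set L := Fin.last n with hL
    -- link hypergraphs
    set Ev : V → Finset (Finset V) :=
      fun v => (E.filter (fun e => v ∈ e)).image (fun e => e.erase v) with hEv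
    have mem_Ev : ∀ v s, s ∈ Ev v ↔ v ∉ s ∧ insert v s ∈ E := by
      intro v s
      simp only [hEv, mem_image, mem_filter]
      constructor
      · rintro ⟨e, ⟨heE, hve⟩, rfl⟩
        exact ⟨Finset.notMem_erase v e, by rwa [Finset.insert_erase hve]⟩
      · rintro ⟨hvs, hE⟩
        exact ⟨insert v s, ⟨hE, mem_insert_self v s⟩, by rw [Finset.erase_insert hvs]⟩
    have card_Ev : ∀ v, (Ev v).card = (E.filter (fun e => v ∈ e)).card := by
      intro v
      apply Finset.card_image_of_injOn
      intro a ha b hb hab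
      simp only [Finset.coe_filter, Set.mem_setOf_eq] at ha hb
      have hab' : a.erase v = b.erase v := hab
      rw [← Finset.insert_erase ha.2, hab', Finset.insert_erase hb.2]
    obtain ⟨e₀, he₀⟩ := hne
    set X₀ := e₀ \ W L with hX₀
    set N := (W L).filter (fun v => insert v X₀ ∈ E) with hN
    have hNδ : δ L ≤ N.card := hdeg e₀ he₀ L
    -- every v in N gives a nonempty link with big product
    have hlink : ∀ v ∈ N, ∏ ℓ : Fin n, δ ℓ.castSucc ≤ (Ev v).card := by
      intro v hv
      rw [hN, mem_filter] at hv
      obtain ⟨hvW, hvE⟩ := hv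
      have hvnot : ∀ i : Fin n, v ∉ W i.castSucc := by
        intro i hvi
        exact Finset.disjoint_left.1 (hdisj _ _ (Fin.castSucc_lt_last i).ne) hvi hvW
      have hmemX₀ : v ∉ X₀ := by simp [hX₀, hvW]
      apply ih (fun i => W i.castSucc) (Ev v)
        (fun i j hij => hdisj _ _ (by simpa using hij))
      · -- partition property
        intro e' he' i
        rw [mem_Ev] at he'
        obtain ⟨hve', heE⟩ := he'
        have := hpart _ heE i.castSucc
        rwa [Finset.insert_inter_of_notMem (hvnot i)] at this
      · -- degree property
        intro e' he' ℓ
        rw [mem_Ev] at he'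
        obtain ⟨hve', heE⟩ := he'
        have hd := hdeg _ heE ℓ.castSucc
        have hset : ((W ℓ.castSucc).filter
              (fun u => insert u ((insert v e') \ W ℓ.castSucc) ∈ E)) =
            ((W ℓ.castSucc).filter (fun u => insert u (e' \ W ℓ.castSucc) ∈ Ev v)) := by
          apply Finset.filter_congr
          intro u hu
          have hvu : v ≠ u := by
            rintro rfl
            exact hvnot ℓ hu
          have h1 : (insert v e') \ W ℓ.castSucc = insert v (e' \ W ℓ.castSucc) :=
            Finset.insert_sdiff_of_notMem _ (hvnot ℓ)
          rw [h1, Finset.insert_comm, mem_Ev]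
          have hvni : v ∉ insert u (e' \ W ℓ.castSucc) := by
            simp only [Finset.mem_insert, Finset.mem_sdiff, not_or]
            exact ⟨hvu, fun h => absurd h.1 hve'⟩
          exact ⟨fun h => ⟨hvni, h⟩, fun h => h.2⟩
        rw [← hset]
        exact hd
      · exact ⟨X₀, (mem_Ev v X₀).2 ⟨hmemX₀, hvE⟩⟩
    -- fibers over distinct v are disjoint
    have hdisjf : ∀ v ∈ N, ∀ w ∈ N, v ≠ w →
        Disjoint (E.filter (fun e => v ∈ e)) (E.filter (fun e => w ∈ e)) := by
      intro v hv w hw hvw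
      rw [Finset.disjoint_left]
      intro e hev hew
      rw [mem_filter] at hev hew
      have h1 := hpart e hev.1 L
      have hvW : v ∈ W L := (mem_filter.1 hv).1
      have hwW : w ∈ W L := (mem_filter.1 hw).1
      obtain ⟨a, ha⟩ := Finset.card_eq_one.1 h1
      have hv' : v ∈ e ∩ W L := Finset.mem_inter.2 ⟨hev.2, hvW⟩
      have hw' : w ∈ e ∩ W L := Finset.mem_inter.2 ⟨hew.2, hwW⟩
      rw [ha, Finset.mem_singleton] at hv' hw'
      exact hvw (hv'.trans hw'.symm)
    have hbiU : (N.biUnion (fun v => E.filter (fun e => v ∈ e))) ⊆ E :=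
      Finset.biUnion_subset.2 (fun v _ => Finset.filter_subset _ _)
    calc ∏ ℓ, δ ℓ = (∏ ℓ : Fin n, δ ℓ.castSucc) * δ L := by
          rw [Fin.prod_univ_castSucc]
      _ = δ L * (∏ ℓ : Fin n, δ ℓ.castSucc) := mul_comm _ _
      _ ≤ N.card * (∏ ℓ : Fin n, δ ℓ.castSucc) := Nat.mul_le_mul_right _ hNδ
      _ ≤ ∑ v ∈ N, (Ev v).card := by
          calc N.card * (∏ ℓ : Fin n, δ ℓ.castSucc)
              = ∑ _v ∈ N, (∏ ℓ : Fin n, δ ℓ.castSucc) := by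
                rw [Finset.sum_const, smul_eq_mul]
            _ ≤ ∑ v ∈ N, (Ev v).card := Finset.sum_le_sum hlink
      _ = ∑ v ∈ N, (E.filter (fun e => v ∈ e)).card := by
          exact Finset.sum_congr rfl (fun v _ => card_Ev v)
      _ = (N.biUnion (fun v => E.filter (fun e => v ∈ e))).card :=
          (Finset.card_biUnion hdisjf).symm
      _ ≤ E.card := Finset.card_le_card hbiU

/-- In a nonempty r-partite r-uniform hypergraph of density ≤ ε there is an (r-1)-set
X with 1 ≤ |N(X)| ≤ ε^(1/r)·|W_ℓ|. -/
theorem stmt_8 (r : ℕ) (hr : 0 < r) (ε : ℝ)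
    (V : Type) [Fintype V] [DecidableEq V]
    (W : Fin r → Finset V) (hdisj : ∀ i j, i ≠ j → Disjoint (W i) (W j))
    (E : Finset (Finset V))
    (hpart : ∀ e ∈ E, e.card = r ∧ ∀ i, (e ∩ W i).card = 1)
    (hne : E.Nonempty)
    (hdens : (E.card : ℝ) ≤ ε * ∏ i, ((W i).card : ℝ)) :
    ∃ (ℓ : Fin r) (X : Finset V), X.card = r - 1 ∧
      (∀ i, i ≠ ℓ → (X ∩ W i).card = 1) ∧
      1 ≤ ((W ℓ).filter (fun v => insert v X ∈ E)).card ∧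
      ((((W ℓ).filter (fun v => insert v X ∈ E)).card : ℝ)) ≤
        ε ^ ((1 : ℝ) / r) * ((W ℓ).card : ℝ) := by
  by_contra hcon
  push_neg at hcon
  set t : ℝ := ε ^ ((1 : ℝ) / r) with ht
  -- basic positivity facts
  obtain ⟨e₀, he₀⟩ := hne
  have hWpos : ∀ i, 0 < (W i).card := by
    intro i
    have h1 := (hpart e₀ he₀).2 i
    have : (e₀ ∩ W i).Nonempty := Finset.card_pos.1 (by omega)
    obtain ⟨a, ha⟩ := this
    exact Finset.card_pos.2 ⟨a, (Finset.mem_inter.1 ha).2⟩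
  have hPpos : 0 < ∏ i, ((W i).card : ℝ) :=
    Finset.prod_pos (fun i _ => by exact_mod_cast hWpos i)
  have hEpos : (0 : ℝ) < E.card := by
    have : 0 < E.card := Finset.card_pos.2 ⟨e₀, he₀⟩
    exact_mod_cast this
  have hεpos : 0 < ε := by
    by_contra h
    push_neg at h
    have : ε * ∏ i, ((W i).card : ℝ) ≤ 0 := mul_nonpos_of_nonpos_of_nonneg h hPpos.le
    linarith
  have htpos : 0 < t := Real.rpow_pos_of_pos hεpos _
  -- every edge gives X with all properties and degree ≥ 1, hence degree > t * |W ℓ|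
  have hbig : ∀ e ∈ E, ∀ ℓ, t * ((W ℓ).card : ℝ) <
      (((W ℓ).filter (fun v => insert v (e \ W ℓ) ∈ E)).card : ℝ) := by
    intro e heE ℓ
    obtain ⟨hcard, hint⟩ := hpart e heE
    obtain ⟨w, hw⟩ := Finset.card_eq_one.1 (hint ℓ)
    have hwe : w ∈ e ∧ w ∈ W ℓ := by
      have : w ∈ e ∩ W ℓ := hw ▸ Finset.mem_singleton_self w
      exact ⟨(Finset.mem_inter.1 this).1, (Finset.mem_inter.1 this).2⟩
    have hXcard : (e \ W ℓ).card = r - 1 := by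
      have h := Finset.card_sdiff_add_card_inter e (W ℓ)
      have h2 := hint ℓ
      omega
    have hXint : ∀ i, i ≠ ℓ → ((e \ W ℓ) ∩ W i).card = 1 := by
      intro i hi
      have : (e \ W ℓ) ∩ W i = e ∩ W i := by
        ext a
        simp only [Finset.mem_inter, Finset.mem_sdiff]
        constructor
        · exact fun h => ⟨h.1.1, h.2⟩
        · intro h
          exact ⟨⟨h.1, fun hℓ => Finset.disjoint_left.1 (hdisj i ℓ hi) h.2 hℓ⟩, h.2⟩
      rw [this]; exact hint i
    have hins : insert w (e \ W ℓ) = e := by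
      ext a
      simp only [Finset.mem_insert, Finset.mem_sdiff]
      constructor
      · rintro (rfl | h)
        · exact hwe.1
        · exact h.1
      · intro ha
        by_cases h : a ∈ W ℓ
        · left
          have : a ∈ e ∩ W ℓ := Finset.mem_inter.2 ⟨ha, h⟩
          rw [hw, Finset.mem_singleton] at this
          exact this
        · right; exact ⟨ha, h⟩
    have hone : 1 ≤ ((W ℓ).filter (fun v => insert v (e \ W ℓ) ∈ E)).card := by
      refine Finset.card_pos.2 ⟨w, Finset.mem_filter.2 ⟨hwe.2, ?_⟩⟩
      rw [hins]; exact heE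
    exact hcon ℓ (e \ W ℓ) hXcard hXint hone
  -- integer lower bounds on degrees
  set δ : Fin r → ℕ := fun ℓ => ⌊t * ((W ℓ).card : ℝ)⌋₊ + 1 with hδ
  have hδle : ∀ e ∈ E, ∀ ℓ, δ ℓ ≤ ((W ℓ).filter (fun v => insert v (e \ W ℓ) ∈ E)).card := by
    intro e heE ℓ
    have h := hbig e heE ℓ
    have hfl : ⌊t * ((W ℓ).card : ℝ)⌋₊ <
        ((W ℓ).filter (fun v => insert v (e \ W ℓ) ∈ E)).card := by
      rw [Nat.floor_lt (by positivity : (0:ℝ) ≤ t * ((W ℓ).card : ℝ))]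
      exact_mod_cast h
    simp only [hδ]
    omega
  have hkey : ∏ ℓ, δ ℓ ≤ E.card :=
    key_lemma V r W E hdisj (fun e he => (hpart e he).2) δ hδle ⟨e₀, he₀⟩
  -- but ∏ δ > ∏ (t * |W ℓ|) = ε * ∏ |W ℓ| ≥ |E|
  have htr : t ^ r = ε := by
    rw [ht, ← Real.rpow_natCast (ε ^ ((1:ℝ)/r)) r, ← Real.rpow_mul hεpos.le]
    rw [one_div, inv_mul_cancel₀ (by exact_mod_cast hr.ne' : ((r:ℝ) ≠ 0)), Real.rpow_one]
  have hprodlt : ∏ ℓ, (t * ((W ℓ).card : ℝ)) < ∏ ℓ, ((δ ℓ : ℝ)) := by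
    apply Finset.prod_lt_prod_of_nonempty
    · intro i _
      have := hWpos i
      have : (1:ℝ) ≤ ((W i).card : ℝ) := by exact_mod_cast this
      nlinarith
    · intro i _
      have h1 : t * ((W i).card : ℝ) < ⌊t * ((W i).card : ℝ)⌋₊ + 1 :=
        Nat.lt_floor_add_one _
      rw [hδ]
      push_cast
      exact h1
    · exact ⟨⟨0, hr⟩, Finset.mem_univ _⟩
  have heq : ∏ ℓ, (t * ((W ℓ).card : ℝ)) = ε * ∏ i, ((W i).card : ℝ) := by
    rw [Finset.prod_mul_distrib, Finset.prod_const, Finset.card_univ, Fintype.card_fin, htr]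
  have hkey' : (∏ ℓ, ((δ ℓ : ℝ))) ≤ (E.card : ℝ) := by
    exact_mod_cast hkey
  rw [heq] at hprodlt
  linarith
end

section
/- Let H be a strongly-algebraic r-uniform hypergraph of complexity (n,d) over a field F. Then for every s > (r−1)·C(n+d,d), there do not exist s pairwise disjoint edges f_i = {u_{i,1},…,u_{i,r}} (i ∈ [s]) of H such that for every r-tuple (i_1,…,i_r) ∈ [s]^r with i_1,…,i_r pairwise distinct, the set {u_{i_1,1},…,u_{i_r,r}} is not an edge of H. -/
/-!
For `v : Fin r → Fin s` put `T v = f (u (v 1) 1, …, u (v r) r)`. The hypotheses make `T`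
semi-diagonal on `Fin s`: nonzero at constant tuples, zero at injective ones. Expanding `f` in
the `n` variables of one block writes every slice of a flattening of `T` as a combination of at
most `C(n+d,d)` fixed vectors, one per monomial of degree at most `d`, so every flattening rank is
at most `C(n+d,d)`.

On the other hand a semi-diagonal tensor on `A` with `card J` arguments has a flattening of rank
at least `|A| / (card J - 1)`. Choose `B ⊆ A` whose slices span the `m`-th flattening, with `|B|`
at most its rank, and restrict `T` to the tuples whose `m`-th argument equals the `k`-th one. The
restriction is semi-diagonal on `A \ B`: its value at an injective tuple `w` with entries in
`A \ B` is the `(w k)`-th slice of the `m`-th flattening evaluated at `w`, that slice is a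
combination of the slices of the `b ∈ B`, and each of these vanishes at `w` because setting the
`m`-th entry of `w` to `b` gives an injective tuple with entries in `A`. Its other flattenings
are images of those of `T`, so induction gives `|A \ B| ≤ (card J - 2) N`.
-/

open MvPolynomial

open Finset Function Module Submodule

theorem Finset.card_le_choose_of_forall_sum_le_s9 {n d : ℕ} (S : Finset (Fin n → ℕ))
    (hS : ∀ m ∈ S, ∑ i, m i ≤ d) : S.card ≤ (n + d).choose d := by
  classical
  let homogenize : (Fin n → ℕ) → Fin (n + 1) →₀ ℕ :=
    fun m => Finsupp.equivFunOnFinite.symm (Fin.snoc m (d - ∑ i, m i))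
  calc S.card ≤ (univ.finsuppAntidiag d).card := by
        refine card_le_card_of_injOn homogenize (fun m hm => ?_) (fun m _ m' _ h => ?_)
        · simpa [homogenize, mem_finsuppAntidiag, Fin.sum_univ_castSucc] using
            Nat.add_sub_of_le (hS m hm)
        · funext i
          simpa [homogenize] using congrArg (fun g => g (Fin.castSucc i)) h
    _ = (n + d).choose d := by
        rw [card_finsuppAntidiag_nat_eq_choose, card_univ, Fintype.card_fin, Nat.add_right_comm,
          Nat.add_sub_cancel]

theorem exists_subset_card_le_finrank_span {K V ι : Type*} [DivisionRing K] [AddCommGroup V]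
    [Module K V] (g : ι → V) (A : Finset ι) :
    ∃ B ⊆ A, B.card ≤ finrank K (span K (g '' A)) ∧
      span K (g '' A) ≤ span K (g '' B) := by
  obtain ⟨B, hBA, -, hAB, hB⟩ :=
    exists_linearIndepOn_extension (linearIndepOn_empty K g) (Set.empty_subset (A : Set ι))
  lift B to Finset ι using A.finite_toSet.subset hBA
  have : FiniteDimensional K (span K (g '' A)) :=
    FiniteDimensional.span_of_finite K (A.finite_toSet.image g)
  refine ⟨B, mod_cast hBA, ?_, span_le.mpr hAB⟩
  calc B.card = finrank K (span K (g '' B)) := by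
        rw [Set.image_eq_range, finrank_span_eq_card hB]; simp
    _ ≤ finrank K (span K (g '' A)) := finrank_mono (span_mono (Set.image_mono hBA))

section Tensor

variable {F ι J : Type*} [Field F]

structure IsSemiDiagonal (T : (J → ι) → F) (A : Set ι) : Prop where
  apply_const_ne_zero : ∀ a ∈ A, T (fun _ => a) ≠ 0
  apply_eq_zero : ∀ v : J → ι, (∀ j, v j ∈ A) → Injective v → T v = 0

theorem IsSemiDiagonal.eq_empty_of_subsingleton [Subsingleton J] {T : (J → ι) → F} {A : Set ι}
    (hT : IsSemiDiagonal T A) : A = ∅ :=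
  Set.eq_empty_of_forall_notMem fun a ha =>
    hT.apply_const_ne_zero a ha (hT.apply_eq_zero _ (fun _ => ha) (injective_of_subsingleton _))

variable [DecidableEq J]

def flattening (T : (J → ι) → F) (j : J) (a : ι) : (J → ι) → F :=
  fun v => T (update v j a)

noncomputable def flatteningRank (T : (J → ι) → F) (A : Set ι) (j : J) : ℕ :=
  finrank F (span F (flattening T j '' A))

/-- Precomposition with `foldOnto k` restricts a tensor to the tuples whose `m`-th and `k`-th
arguments agree. -/
def foldOnto {m : J} (k : {j : J // j ≠ m}) (j : J) : {j : J // j ≠ m} :=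
  if h : j = m then k else ⟨j, h⟩

@[simp] theorem foldOnto_self {m : J} (k : {j : J // j ≠ m}) : foldOnto k m = k := dif_pos rfl

@[simp] theorem foldOnto_of_ne {m j : J} (k : {j : J // j ≠ m}) (h : j ≠ m) :
    foldOnto k j = ⟨j, h⟩ := dif_neg h

theorem update_comp_foldOnto {m : J} {k j : {j : J // j ≠ m}} (hj : j ≠ k)
    (v : {j : J // j ≠ m} → ι) (a : ι) :
    update v j a ∘ foldOnto k = update (v ∘ foldOnto k) j a := by
  funext i
  by_cases hi : i = m
  · subst hi
    simp [update_of_ne hj.symm, update_of_ne j.2.symm]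
  · by_cases hij : i = j
    · subst hij; simp [hi]
    · have : (⟨i, hi⟩ : {j : J // j ≠ m}) ≠ j := fun h => hij (congrArg Subtype.val h)
      simp [hi, update_of_ne hij, update_of_ne this]

theorem injective_update_comp_foldOnto {m : J} (k : {j : J // j ≠ m})
    {v : {j : J // j ≠ m} → ι} (hv : Injective v) {b : ι} (hb : b ∉ Set.range v) :
    Injective (update (v ∘ foldOnto k) m b) := by
  intro i i' h
  by_cases hi : i = m <;> by_cases hi' : i' = m
  · rw [hi, hi']
  · exact absurd ⟨_, by simpa [hi, hi'] using h.symm⟩ hb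
  · exact absurd ⟨_, by simpa [hi, hi'] using h⟩ hb
  · exact congrArg Subtype.val (hv (by simpa [hi, hi'] using h))

theorem IsSemiDiagonal.comp_foldOnto [DecidableEq ι] {T : (J → ι) → F} {A B : Finset ι}
    (hT : IsSemiDiagonal T A) (hBA : B ⊆ A) {m : J}
    (hB : span F (flattening T m '' A) ≤ span F (flattening T m '' B))
    (k : {j : J // j ≠ m}) :
    IsSemiDiagonal (fun v => T (v ∘ foldOnto k)) ↑(A \ B) where
  apply_const_ne_zero a ha := hT.apply_const_ne_zero a (mem_sdiff.mp ha).1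
  apply_eq_zero v hvA hv := by
    have hvA' : ∀ j, v j ∈ A ∧ v j ∉ B := fun j => mem_sdiff.mp (hvA j)
    have hvanish :
        span F (flattening T m '' B) ≤ LinearMap.ker (LinearMap.proj (v ∘ foldOnto k)) := by
      refine span_le.mpr ?_
      rintro _ ⟨b, hb, rfl⟩
      refine hT.apply_eq_zero _ (fun j => ?_) (injective_update_comp_foldOnto k hv ?_)
      · by_cases hj : j = m
        · subst hj; simp [hBA hb]
        · simpa [hj] using (hvA' _).1
      · rintro ⟨j, rfl⟩; exact (hvA' j).2 hb
    have hfold : update (v ∘ foldOnto k) m (v k) = v ∘ foldOnto k := by simp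
    simpa [flattening, hfold] using hvanish (hB (subset_span ⟨v k, (hvA' k).1, rfl⟩))

theorem flatteningRank_comp_foldOnto_le (T : (J → ι) → F) {A A' : Finset ι} (hA : A' ⊆ A)
    {m : J} {k j : {j : J // j ≠ m}} (hj : j ≠ k) :
    flatteningRank (fun v => T (v ∘ foldOnto k)) A' j ≤ flatteningRank T A j := by
  let restrict : ((J → ι) → F) →ₗ[F] ({j : J // j ≠ m} → ι) → F :=
    LinearMap.funLeft F F (· ∘ foldOnto k)
  have hflat : flattening (fun v => T (v ∘ foldOnto k)) j = restrict ∘ flattening T j := by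
    funext a v
    simp [restrict, flattening, update_comp_foldOnto hj]
  have (S : Finset ι) : FiniteDimensional F (span F (flattening T j '' S)) :=
    FiniteDimensional.span_of_finite F (S.finite_toSet.image _)
  calc flatteningRank (fun v => T (v ∘ foldOnto k)) A' j
      = finrank F ((span F (flattening T j '' A')).map restrict) := by
        rw [flatteningRank, hflat, Set.image_comp, span_image]
    _ ≤ finrank F (span F (flattening T j '' A')) := finrank_map_le _ _
    _ ≤ flatteningRank T A j := finrank_mono (span_mono (Set.image_mono (mod_cast hA)))

theorem IsSemiDiagonal.card_le_of_flatteningRank_le_of_ne [Fintype J] {T : (J → ι) → F}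
    {A : Finset ι} (hT : IsSemiDiagonal T A) {N : ℕ} (k : J)
    (hrank : ∀ j ≠ k, flatteningRank T A j ≤ N) : A.card ≤ (Fintype.card J - 1) * N := by
  classical
  induction hcard : Fintype.card J using Nat.strong_induction_on generalizing J A with
  | _ c ih =>
  rcases subsingleton_or_nontrivial J with _ | _
  · simp [Finset.coe_eq_empty.mp hT.eq_empty_of_subsingleton]
  obtain ⟨m, hm⟩ := exists_ne k
  obtain ⟨c, rfl⟩ : ∃ c', c = c' + 2 :=
    ⟨c - 2, by have := Fintype.one_lt_card (α := J); omega⟩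
  obtain ⟨B, hBA, hBcard, hB⟩ := exists_subset_card_le_finrank_span (K := F) (flattening T m) A
  have hc : Fintype.card {j : J // j ≠ m} = c + 1 := by
    simp [Fintype.card_subtype_compl, hcard]
  have hAB : (A \ B).card ≤ c * N := by
    simpa [hc] using ih (c + 1) (by omega) (k := ⟨k, hm.symm⟩)
      (hT.comp_foldOnto hBA hB ⟨k, hm.symm⟩)
      (fun j hj => (flatteningRank_comp_foldOnto_le T sdiff_subset hj).trans
        (hrank j (fun h => hj (Subtype.ext h)))) hc
  calc A.card ≤ (A \ B).card + B.card := card_le_card_sdiff_add_card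
    _ ≤ c * N + N := add_le_add hAB (hBcard.trans (hrank m hm))
    _ = (c + 2 - 1) * N := by simp [add_mul]

theorem IsSemiDiagonal.card_le_of_flatteningRank_le [Fintype J] {T : (J → ι) → F}
    {A : Finset ι} (hT : IsSemiDiagonal T A) {N : ℕ}
    (hrank : ∀ j, flatteningRank T A j ≤ N) :
    A.card ≤ (Fintype.card J - 1) * N := by
  cases isEmpty_or_nonempty J
  · simp [Finset.coe_eq_empty.mp hT.eq_empty_of_subsingleton]
  · exact hT.card_le_of_flatteningRank_le_of_ne (Classical.arbitrary J) fun j _ => hrank j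

end Tensor

section Polynomial

variable {F J : Type*} [Field F] [Fintype J] {n : ℕ}

def blockExponent (c : J × Fin n →₀ ℕ) (j : J) : Fin n → ℕ := fun i => c (j, i)

theorem sum_blockExponent_le_totalDegree {f : MvPolynomial (J × Fin n) F}
    {c : J × Fin n →₀ ℕ} (hc : c ∈ f.support) (j : J) :
    ∑ i, blockExponent c j i ≤ f.totalDegree :=
  calc ∑ i, blockExponent c j i ≤ ∑ j', ∑ i, c (j', i) :=
        single_le_sum (f := fun j' => ∑ i, c (j', i)) (fun _ _ => Nat.zero_le _) (mem_univ j)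
    _ = c.sum fun _ e => e := by
        rw [← Fintype.sum_prod_type', Finsupp.sum_fintype _ _ (by simp)]
    _ ≤ f.totalDegree := le_totalDegree hc

variable [DecidableEq J]

def blockCoeff (f : MvPolynomial (J × Fin n) F) (j : J) (m : Fin n → ℕ)
    (y : J → Fin n → F) : F :=
  ∑ c ∈ f.support with blockExponent c j = m,
    coeff c f * ∏ j' ∈ univ.erase j, ∏ i, y j' i ^ c (j', i)

theorem eval_update_eq_sum_blockCoeff (f : MvPolynomial (J × Fin n) F) (y : J → Fin n → F)
    (j : J) (z : Fin n → F) :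
    eval (fun p => update y j z p.1 p.2) f =
      ∑ m ∈ f.support.image (blockExponent · j), (∏ i, z i ^ m i) * blockCoeff f j m y := by
  rw [eval_eq', ← sum_fiberwise_of_maps_to (fun c hc => mem_image_of_mem (blockExponent · j) hc)]
  refine sum_congr rfl fun m _ => ?_
  rw [blockCoeff, mul_sum]
  refine sum_congr rfl fun c hc => ?_
  rw [← (mem_filter.mp hc).2, Fintype.prod_prod_type, ← mul_prod_erase univ _ (mem_univ j)]
  have hrest : ∀ j' ∈ univ.erase j,
      ∏ i, update y j z j' i ^ c (j', i) = ∏ i, y j' i ^ c (j', i) :=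
    fun j' hj' => by rw [update_of_ne (ne_of_mem_erase hj')]
  simp only [prod_congr rfl hrest, update_self, blockExponent]
  ring

theorem flatteningRank_eval_le {ι : Type*} (P : ι → J → Fin n → F)
    {f : MvPolynomial (J × Fin n) F} {d : ℕ} (hf : f.totalDegree ≤ d) (A : Set ι) (j : J) :
    flatteningRank (fun v : J → ι => eval (fun p => P (v p.1) p.1 p.2) f) A j ≤
      (n + d).choose d := by
  classical
  set T : (J → ι) → F := fun v => eval (fun p => P (v p.1) p.1 p.2) f
  set S := f.support.image (blockExponent · j)
  let H : (Fin n → ℕ) → (J → ι) → F := fun m v => blockCoeff f j m fun j' => P (v j') j'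
  have hrow : ∀ a, flattening T j a = ∑ m ∈ S, (∏ i, P a j i ^ m i) • H m := fun a => by
    funext v
    simp only [T, flattening, Finset.sum_apply, Pi.smul_apply, smul_eq_mul, H,
      apply_update (fun j' (x : ι) => P x j')]
    exact eval_update_eq_sum_blockCoeff f _ j _
  have hspan : span F (flattening T j '' A) ≤ span F (S.image H : Set ((J → ι) → F)) := by
    refine span_le.mpr ?_
    rintro _ ⟨a, -, rfl⟩
    rw [hrow]
    exact sum_mem fun m hm => smul_mem _ _ (subset_span (mem_image_of_mem H hm))
  calc _ ≤ finrank F (span F (S.image H : Set ((J → ι) → F))) := finrank_mono hspan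
    _ ≤ (S.image H).card := finrank_span_finset_le_card _
    _ ≤ S.card := card_image_le
    _ ≤ (n + d).choose d := S.card_le_choose_of_forall_sum_le_s9 <| by
      simp only [S, forall_mem_image]
      exact fun c hc => (sum_blockExponent_le_totalDegree hc j).trans hf

end Polynomial

theorem stmt_9_general (F : Type) [Field F] [DecidableEq F] (n d r s : ℕ)
    (hs : (r - 1) * (n + d).choose d < s)
    (V : Finset (Fin n → F))
    (f : MvPolynomial (Fin r × Fin n) F) (hdeg : f.totalDegree ≤ d)
    (E : Finset (Finset (Fin n → F)))
    (hdef : ∀ w : Fin r → (Fin n → F), Function.Injective w → (∀ j, w j ∈ V) →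
      (Finset.image w Finset.univ ∈ E ↔
        eval (fun p : Fin r × Fin n => w p.1 p.2) f ≠ 0)) :
    ¬ ∃ u : Fin s → Fin r → (Fin n → F),
      Function.Injective (fun p : Fin s × Fin r => u p.1 p.2) ∧
      (∀ i j, u i j ∈ V) ∧
      (∀ i : Fin s, Finset.image (u i) Finset.univ ∈ E) ∧
      (∀ σ : Fin r → Fin s, Function.Injective σ →
        Finset.image (fun j => u (σ j) j) Finset.univ ∉ E) := by
  rintro ⟨u, hu, huV, hedge, hnon⟩
  have hinj (σ : Fin r → Fin s) : Injective fun j => u (σ j) j :=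
    hu.comp (f := fun j => (σ j, j)) fun _ _ h => (Prod.ext_iff.mp h).2
  have hsemi : IsSemiDiagonal (fun v : Fin r → Fin s => eval (fun p => u (v p.1) p.1 p.2) f)
      (univ : Finset (Fin s)) :=
    ⟨fun a _ => (hdef (u a) (hinj fun _ => a) (huV a)).mp (hedge a),
      fun σ _ hσ => not_not.mp fun h => hnon σ hσ ((hdef _ (hinj σ) fun j => huV _ j).mpr h)⟩
  have := hsemi.card_le_of_flatteningRank_le (flatteningRank_eval_le u hdeg _)
  simp only [card_univ, Fintype.card_fin] at this
  omega

/-- A strongly-algebraic r-uniform hypergraph of complexity (n,d) contains no member of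
the family N_{r,s} for s > (r-1)·C(n+d,d). -/
theorem stmt_9 (F : Type) [Field F] [DecidableEq F] (n d r s : ℕ) (hr : 0 < r)
    (hs : (r - 1) * (n + d).choose d < s)
    (V : Finset (Fin n → F))
    (f : MvPolynomial (Fin r × Fin n) F) (hdeg : f.totalDegree ≤ d)
    (E : Finset (Finset (Fin n → F)))
    (hE : ∀ e ∈ E, e.card = r ∧ e ⊆ V)
    (hdef : ∀ w : Fin r → (Fin n → F), Function.Injective w → (∀ j, w j ∈ V) →
      (Finset.image w Finset.univ ∈ E ↔
        eval (fun p : Fin r × Fin n => w p.1 p.2) f ≠ 0)) :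
    ¬ ∃ u : Fin s → Fin r → (Fin n → F),
      Function.Injective (fun p : Fin s × Fin r => u p.1 p.2) ∧
      (∀ i j, u i j ∈ V) ∧
      (∀ i : Fin s, Finset.image (u i) Finset.univ ∈ E) ∧
      (∀ σ : Fin r → Fin s, Function.Injective σ →
        Finset.image (fun j => u (σ j) j) Finset.univ ∉ E) :=
  stmt_9_general F n d r s hs V f hdeg E hdef
end

section
/- Let r, n, d, m be positive integers and set s = C(n+d,d)+1 and γ = 2r²m·s. There exists c = c(r,n,d,m) > 0 such that every r-uniform algebraic hypergraph H of complexity (n,d,m) on N vertices contains a clique or an independent set of size at least c·N^{1/γ}. -/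
/-!
Put `s = C(n+d,d) + 1`. Call a partial assignment `l` of the first `|l|` arguments *forced* for
`f_i` on a point set `X` if `f_i` vanishes whenever the remaining arguments are taken from `X`.
If some unforced `l` has at least `|X|^(1 - 1/2s)` forcing one-point extensions `v ∈ X`, pass from
`X` to the set of those `v`: a slice `v ↦ f_i(g[|l| := v])` is a polynomial of degree `≤ d`
vanishing there but not on `X`, so the dimension of the space of such polynomials restricted to
the current set drops. That dimension is at most `C(n+d,d)`, so after fewer than `s` steps we
reach `X` with `|X| ≥ |V|^(1/2)` on which forcing extensions are sparse. There `k` points can be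
chosen greedily so that no sublist of them becomes forced by appending a later point. Then every
`r`-subset is forced exactly when the empty assignment is, so the edge relation is constant on
the chosen points.
-/

open Finset MvPolynomial Module
open scoped List

theorem Nat.cast_rpow_le_rpow_of_exponent_le (N : ℕ) {a b : ℝ} (ha : 0 < a) (hab : a ≤ b) :
    (N : ℝ) ^ a ≤ (N : ℝ) ^ b := by
  rcases N.eq_zero_or_pos with rfl | hN
  · simp [Real.zero_rpow ha.ne', Real.zero_rpow (ha.trans_le hab).ne']
  · exact Real.rpow_le_rpow_of_exponent_le (by exact_mod_cast hN) hab

theorem Nat.sum_range_choose_le_mul_pow {j k : ℕ} (hjk : j < k) (r : ℕ) :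
    ∑ t ∈ range r, j.choose t ≤ r * k ^ (r - 1) := by
  refine (sum_le_card_nsmul _ _ (k ^ (r - 1)) fun t ht => ?_).trans (by simp)
  calc j.choose t ≤ j ^ t := Nat.choose_le_pow j t
    _ ≤ k ^ t := Nat.pow_le_pow_left hjk.le t
    _ ≤ k ^ (r - 1) := Nat.pow_le_pow_right (by omega) (by simp at ht; omega)

theorem Submodule.finrank_map_lt {K V V₂ : Type*} [DivisionRing K] [AddCommGroup V] [Module K V]
    [AddCommGroup V₂] [Module K V₂] {A : Submodule K V} [FiniteDimensional K A]
    (π : V →ₗ[K] V₂) {a : V} (ha : a ∈ A) (ha0 : a ≠ 0) (hπa : π a = 0) :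
    finrank K (A.map π) < finrank K A := by
  have hker : LinearMap.ker (π ∘ₗ A.subtype) ≠ ⊥ := fun h => ha0 <| by
    simpa using LinearMap.ker_eq_bot'.1 h ⟨a, ha⟩ hπa
  have := (π ∘ₗ A.subtype).finrank_range_add_finrank_ker
  rw [LinearMap.range_comp, Submodule.range_subtype] at this
  have := Submodule.finrank_eq_zero.not.2 hker
  omega

section RestrictRank

variable {F α : Type*} [Field F] (W : Submodule F (α → F))

noncomputable def restrictRank (X : Set α) : ℕ :=
  finrank F (W.map (LinearMap.funLeft F F ((↑) : X → α)))

variable [FiniteDimensional F W]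

theorem restrictRank_le (X : Set α) : restrictRank W X ≤ finrank F W :=
  Submodule.finrank_map_le _ _

theorem restrictRank_lt {X Y : Set α} (hYX : Y ⊆ X) {h : α → F} (hW : h ∈ W) {x : α}
    (hx : x ∈ X) (hx0 : h x ≠ 0) (hY : ∀ y ∈ Y, h y = 0) :
    restrictRank W Y < restrictRank W X := by
  let π := LinearMap.funLeft F F (Set.inclusion hYX)
  have : W.map (LinearMap.funLeft F F ((↑) : Y → α)) =
      (W.map (LinearMap.funLeft F F ((↑) : X → α))).map π := by
    rw [← Submodule.map_comp]; rfl
  rw [restrictRank, restrictRank, this]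
  exact Submodule.finrank_map_lt π ⟨h, hW, rfl⟩ (fun h0 => hx0 (congrFun h0 ⟨x, hx⟩))
    (funext fun y => hY y y.2)

end RestrictRank

section PolynomialFunctions

variable (F : Type*) [Field F]

theorem Finsupp.natCard_sum_le_le_choose (n d : ℕ) :
    Nat.card {s : Fin n →₀ ℕ | (s.sum fun _ e => e) ≤ d} ≤ (n + d).choose d := by
  let homogenize (s : {s : Fin n →₀ ℕ | (s.sum fun _ e => e) ≤ d}) :
      (univ : Finset (Fin (n + 1))).finsuppAntidiag d :=
    ⟨Finsupp.cons (d - s.1.sum fun _ e => e) s.1, by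
      simp only [mem_finsuppAntidiag', Finsupp.sum_cons, subset_univ, and_true]
      have : (s.1.sum fun _ e => e) ≤ d := s.2
      omega⟩
  have hinj : Function.Injective homogenize := fun s t hst => by
    have := congrArg (fun u => Finsupp.tail u.1) hst
    simpa [homogenize, Finsupp.tail_cons, Subtype.ext_iff] using this
  calc Nat.card _ ≤ Nat.card ((univ : Finset (Fin (n + 1))).finsuppAntidiag d) :=
        Nat.card_le_card_of_injective _ hinj
    _ = (n + d).choose d := by
        rw [Nat.card_eq_fintype_card, Fintype.card_coe, card_finsuppAntidiag_nat_eq_choose]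
        simp [Nat.add_right_comm n 1 d]

theorem MvPolynomial.totalDegree_bind₁_le {σ τ R : Type*} [CommSemiring R]
    (g : σ → MvPolynomial τ R) (hg : ∀ i, (g i).totalDegree ≤ 1) (f : MvPolynomial σ R) :
    (bind₁ g f).totalDegree ≤ f.totalDegree := by
  conv_lhs => rw [f.as_sum]
  simp only [map_sum, bind₁_monomial]
  refine (totalDegree_finsetSum_le fun s hs => ?_)
  refine (totalDegree_mul _ _).trans ?_
  rw [totalDegree_C, zero_add]
  refine (totalDegree_finsetProd _ _).trans ?_
  refine le_trans ?_ (le_totalDegree hs)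
  rw [Finsupp.sum]
  refine sum_le_sum fun i _ => (totalDegree_pow _ _).trans ?_
  simpa using Nat.mul_le_mul_left (s i) (hg i)

noncomputable def polyFunctions (σ : Type*) (d : ℕ) : Submodule F ((σ → F) → F) :=
  (restrictTotalDegree σ F d).map (LinearMap.pi fun x => (aeval x).toLinearMap)

instance (n d : ℕ) : FiniteDimensional F (polyFunctions F (Fin n) d) := by
  unfold polyFunctions; infer_instance

theorem finrank_polyFunctions_le (n d : ℕ) :
    Module.finrank F (polyFunctions F (Fin n) d) ≤ (n + d).choose d :=
  (Submodule.finrank_map_le _ _).trans <| by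
    rw [restrictTotalDegree, Module.finrank_eq_nat_card_basis (basisRestrictSupport F _)]
    exact Finsupp.natCard_sum_le_le_choose n d

variable {F}

theorem eval_update_mem_polyFunctions {ι σ : Type*} [DecidableEq ι] {d : ℕ}
    {f : MvPolynomial (ι × σ) F} (hf : f.totalDegree ≤ d) (g : ι → σ → F) (k : ι) :
    (fun v => eval (fun p => Function.update g k v p.1 p.2) f) ∈ polyFunctions F σ d := by
  let slice : ι × σ → MvPolynomial σ F := fun p => if p.1 = k then X p.2 else C (g p.1 p.2)
  refine ⟨bind₁ slice f, (mem_restrictTotalDegree _ _ _).2 <|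
    (totalDegree_bind₁_le slice (fun p => ?_) f).trans hf, funext fun v => ?_⟩
  · by_cases hp : p.1 = k <;> simp [slice, hp]
  · simp only [LinearMap.pi_apply, AlgHom.toLinearMap_apply, aeval_bind₁]
    rw [← aeval_eq_eval]
    congr 2
    funext p
    by_cases hp : p.1 = k <;> simp [slice, hp]

end PolynomialFunctions

section Forcing

variable {α ι : Type*} {r : ℕ} (Z : ι → (Fin r → α) → Prop) (X : Finset α)

/-- `Z i` holds on every tuple that starts with `l` and continues with entries from `X`. -/
def Forced (i : ι) (l : List α) : Prop :=
  ∀ g : Fin r → α, (∀ (j : Fin r) (h : (j : ℕ) < l.length), g j = l[(j : ℕ)]) →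
    (∀ j : Fin r, l.length ≤ j → g j ∈ X) → Z i g

open scoped Classical in
def IsForcingSparse (β : ℝ) : Prop :=
  ∀ i l, l.length < r → ¬Forced Z X i l →
    (#{v ∈ X | Forced Z X i (l ++ [v])} : ℝ) < (#X : ℝ) ^ (1 - β)

def ForcingStable (ws : List α) : Prop :=
  ∀ i l v, l ++ [v] <+ ws → l.length < r → ¬Forced Z X i l → ¬Forced Z X i (l ++ [v])

variable {Z X}

theorem Forced.snoc {i : ι} {l : List α} (h : Forced Z X i l) {v : α} (hv : v ∈ X) :
    Forced Z X i (l ++ [v]) := by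
  intro g hpre hX
  refine h g (fun j hj => by rw [hpre j (by simp; omega), List.getElem_append_left hj])
    (fun j hj => ?_)
  rcases hj.eq_or_lt with hj | hj
  · rw [hpre j (by simp; omega)]
    simpa [← hj] using hv
  · exact hX j (by simpa using hj)

theorem forced_ofFn_iff {i : ι} (w : Fin r → α) : Forced Z X i (List.ofFn w) ↔ Z i w := by
  refine ⟨fun h => h w (fun j _ => by simp) (fun j hj => absurd hj (by simp)), fun h g hpre _ => ?_⟩
  convert h
  funext j
  simpa using hpre j (by simp)

theorem Forced.update_snoc {i : ι} {l : List α} {y : α} (h : Forced Z X i (l ++ [y]))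
    (hl : l.length < r) {g : Fin r → α}
    (hpre : ∀ (j : Fin r) (h : (j : ℕ) < l.length), g j = l[(j : ℕ)])
    (hX : ∀ j : Fin r, l.length ≤ j → g j ∈ X) :
    Z i (Function.update g ⟨l.length, hl⟩ y) := by
  refine h _ (fun j hj => ?_) (fun j hj => ?_)
  · rcases (Nat.lt_succ_iff.1 (by simpa using hj)).lt_or_eq with hj | hj
    · rw [Function.update_of_ne (Fin.ne_of_lt hj), hpre j hj, List.getElem_append_left hj]
    · obtain rfl : j = ⟨l.length, hl⟩ := Fin.ext hj
      simp
  · simp only [List.length_append, List.length_singleton] at hj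
    rw [Function.update_of_ne (by simp [Fin.ext_iff]; omega)]
    exact hX j (by omega)

theorem ForcingStable.snoc {ws : List α} (hst : ForcingStable Z X ws) {v : α}
    (hv : ∀ i l, l <+ ws → l.length < r → ¬Forced Z X i l → ¬Forced Z X i (l ++ [v])) :
    ForcingStable Z X (ws ++ [v]) := by
  intro i l v' hl
  obtain ⟨l₁, l₂, heq, hl₁, hl₂⟩ := List.sublist_append_iff.1 hl
  rcases List.sublist_singleton.1 hl₂ with rfl | rfl
  · exact hst i l v' (by simpa [heq] using hl₁)
  · obtain ⟨rfl, hv'⟩ := List.append_inj' heq rfl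
    obtain rfl : v' = v := by simpa using hv'
    exact hv i l hl₁

theorem ForcingStable.forced_iff_forced_nil {ws : List α} (hst : ForcingStable Z X ws)
    (hws : ∀ v ∈ ws, v ∈ X) {l : List α} (hl : l <+ ws) (hlr : l.length ≤ r) (i : ι) :
    Forced Z X i l ↔ Forced Z X i [] := by
  induction l using List.reverseRecOn with
  | nil => rfl
  | append_singleton l v ih =>
    rw [List.length_append, List.length_singleton] at hlr
    rw [← ih ((List.sublist_append_left l [v]).trans hl) (by omega)]
    exact ⟨fun h => by_contra fun hn => hst i l v hl (by omega) hn h,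
      fun h => h.snoc (hws v (hl.subset (by simp)))⟩

theorem IsForcingSparse.exists_snoc [Fintype ι] {β : ℝ} (hX : IsForcingSparse Z X β)
    (ws : List α) (hws : (ws.length : ℝ) + Fintype.card ι *
      (∑ t ∈ range r, (ws.length.choose t : ℝ)) * (#X : ℝ) ^ (1 - β) < #X) :
    ∃ v ∈ X, v ∉ ws ∧
      ∀ i l, l <+ ws → l.length < r → ¬Forced Z X i l → ¬Forced Z X i (l ++ [v]) := by
  classical
  let bad (i : ι) (t : ℕ) : Finset α :=
    ((ws.sublistsLen t).toFinset.filter fun l => ¬Forced Z X i l).biUnion fun l =>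
      {v ∈ X | Forced Z X i (l ++ [v])}
  let B := ws.toFinset ∪ univ.biUnion fun i => (range r).biUnion (bad i)
  have hbad : ∀ i, ∀ t < r, (#(bad i t) : ℝ) ≤ ws.length.choose t * (#X : ℝ) ^ (1 - β) := by
    intro i t ht
    refine (Nat.cast_le.2 card_biUnion_le).trans ?_
    push_cast
    refine (sum_le_card_nsmul _ _ ((#X : ℝ) ^ (1 - β)) fun l hl => ?_).trans ?_
    · rw [mem_filter, List.mem_toFinset, List.mem_sublistsLen] at hl
      exact (hX i l (hl.1.2 ▸ ht) hl.2).le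
    · rw [nsmul_eq_mul]
      gcongr
      exact_mod_cast (card_filter_le _ _).trans <|
        (List.toFinset_card_le _).trans (List.length_sublistsLen t ws).le
  have hB : (#B : ℝ) < #X := calc
    (#B : ℝ) ≤ #ws.toFinset + ∑ i, ∑ t ∈ range r, (#(bad i t) : ℝ) := by
      exact_mod_cast (card_union_le _ _).trans <| add_le_add le_rfl
        (card_biUnion_le.trans (sum_le_sum fun i _ => card_biUnion_le))
    _ ≤ ws.length + ∑ _i : ι, ∑ t ∈ range r, ws.length.choose t * (#X : ℝ) ^ (1 - β) := by
      gcongr with i _ t ht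
      · exact_mod_cast ws.toFinset_card_le
      · exact hbad i t (mem_range.1 ht)
    _ < #X := by simpa [sum_mul, mul_sum, mul_assoc] using hws
  obtain ⟨v, hvX, hvB⟩ := exists_mem_notMem_of_card_lt_card (s := B) (by exact_mod_cast hB)
  refine ⟨v, hvX, fun h => hvB (mem_union_left _ (List.mem_toFinset.2 h)),
    fun i l hl hlr hn hf => hvB (mem_union_right _ ?_)⟩
  simp only [bad, mem_biUnion, mem_filter]
  exact ⟨i, mem_univ _, l.length, mem_range.2 hlr, l,
    ⟨List.mem_toFinset.2 (List.mem_sublistsLen_self hl), hn⟩, hvX, hf⟩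

theorem IsForcingSparse.exists_forcingStable [Fintype ι] {β : ℝ} (hX : IsForcingSparse Z X β)
    {k : ℕ} (hkX : 2 * k ≤ #X) (hk : 2 * Fintype.card ι * r * k ^ (r - 1) ≤ (#X : ℝ) ^ β) :
    ∃ ws : List α, ws.length = k ∧ ws.Nodup ∧ (∀ v ∈ ws, v ∈ X) ∧ ForcingStable Z X ws := by
  have hstep : ∀ j < k, (j : ℝ) + Fintype.card ι * (∑ t ∈ range r, (j.choose t : ℝ)) *
      (#X : ℝ) ^ (1 - β) < #X := by
    intro j hj
    have hsum : (∑ t ∈ range r, (j.choose t : ℝ)) ≤ r * k ^ (r - 1) := by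
      exact_mod_cast Nat.sum_range_choose_le_mul_pow hj r
    have hsplit : (#X : ℝ) ^ β * (#X : ℝ) ^ (1 - β) = #X := by
      rw [← Real.rpow_add' (by positivity) (by simp), add_sub_cancel, Real.rpow_one]
    have hj' : (2 * j : ℝ) < #X := by exact_mod_cast (by omega : 2 * j < #X)
    calc (j : ℝ) + Fintype.card ι * (∑ t ∈ range r, (j.choose t : ℝ)) * (#X : ℝ) ^ (1 - β)
        ≤ j + (#X : ℝ) ^ β / 2 * (#X : ℝ) ^ (1 - β) := by
          gcongr
          nlinarith [Nat.cast_nonneg (α := ℝ) (Fintype.card ι)]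
      _ < #X := by linarith
  induction k with
  | zero => exact ⟨[], rfl, List.nodup_nil, by simp, fun i l v h => by simpa using h.length_le⟩
  | succ k ih =>
    obtain ⟨ws, rfl, hnd, hwsX, hst⟩ := ih (by omega) (le_trans (by gcongr; omega) hk)
      fun j hj => hstep j (by omega)
    obtain ⟨v, hvX, hvws, hv⟩ := hX.exists_snoc ws (hstep _ (by omega))
    refine ⟨ws ++ [v], by simp, ?_, ?_, hst.snoc hv⟩
    · exact hnd.append (List.nodup_singleton v) (by simpa using hvws)
    · simpa [or_imp, forall_and, hvX] using hwsX

end Forcing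

theorem Finset.exists_subset_rpow_pow_le {α : Type*} {P : Finset α → Prop} (μ : Finset α → ℕ)
    {θ : ℝ} (hθ0 : 0 < θ) (hθ1 : θ ≤ 1)
    (h : ∀ X, ¬P X → ∃ Y ⊆ X, μ Y < μ X ∧ (#X : ℝ) ^ θ ≤ #Y) (X : Finset α) :
    ∃ Y ⊆ X, P Y ∧ (#X : ℝ) ^ (θ ^ μ X) ≤ #Y := by
  induction hμ : μ X using Nat.strong_induction_on generalizing X with
  | _ t ih =>
  by_cases hX : P X
  · refine ⟨X, subset_rfl, hX, ?_⟩
    calc (#X : ℝ) ^ (θ ^ t) ≤ (#X : ℝ) ^ (1 : ℝ) :=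
          Nat.cast_rpow_le_rpow_of_exponent_le _ (pow_pos hθ0 t) (pow_le_one₀ hθ0.le hθ1)
      _ = #X := Real.rpow_one _
  · obtain ⟨Y, hYX, hμY, hY⟩ := h X hX
    obtain ⟨Z, hZY, hZ, hYZ⟩ := ih _ (hμ ▸ hμY) Y rfl
    refine ⟨Z, hZY.trans hYX, hZ, ?_⟩
    calc (#X : ℝ) ^ (θ ^ t) ≤ (#X : ℝ) ^ (θ * θ ^ μ Y) := by
          refine Nat.cast_rpow_le_rpow_of_exponent_le _ (pow_pos hθ0 t) ?_
          rw [← pow_succ']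
          exact pow_le_pow_of_le_one hθ0.le hθ1 (by omega)
      _ = ((#X : ℝ) ^ θ) ^ (θ ^ μ Y) := Real.rpow_mul (by positivity) _ _
      _ ≤ (#Y : ℝ) ^ (θ ^ μ Y) := Real.rpow_le_rpow (by positivity) hY (by positivity)
      _ ≤ #Z := hYZ

section DensityIncrement

variable {F α ι : Type*} [Field F] {r : ℕ} {Z : ι → (Fin r → α) → Prop}
  {W : Submodule F (α → F)} [FiniteDimensional F W]

theorem exists_restrictRank_lt_of_not_isForcingSparse
    (hZ : ∀ i g k, ∃ h ∈ W, ∀ v, Z i (Function.update g k v) ↔ h v = 0) {β : ℝ}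
    {X : Finset α} (hX : ¬IsForcingSparse Z X β) :
    ∃ Y ⊆ X, restrictRank W Y < restrictRank W X ∧ (#X : ℝ) ^ (1 - β) ≤ #Y := by
  classical
  simp only [IsForcingSparse, not_forall, not_lt] at hX
  obtain ⟨i, l, hlr, hl, hY⟩ := hX
  obtain ⟨g, hpre, hgX, hg⟩ : ∃ g : Fin r → α,
      (∀ (j : Fin r) (h : (j : ℕ) < l.length), g j = l[(j : ℕ)]) ∧
      (∀ j : Fin r, l.length ≤ j → g j ∈ X) ∧ ¬Z i g := by
    simpa [Forced] using hl
  obtain ⟨h, hW, hh⟩ := hZ i g ⟨l.length, hlr⟩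
  refine ⟨_, ?_, ?_, hY⟩
  · exact filter_subset _ _
  refine restrictRank_lt W (coe_subset.2 (filter_subset _ _)) hW (hgX ⟨l.length, hlr⟩ le_rfl) ?_
    fun y hy => ?_
  · rwa [Ne, ← hh, Function.update_eq_self]
  · exact (hh y).1 ((mem_filter.1 hy).2.update_snoc hlr hpre hgX)

theorem exists_isForcingSparse_card_le_sq
    (hZ : ∀ i g k, ∃ h ∈ W, ∀ v, Z i (Function.update g k v) ↔ h v = 0) {s : ℕ}
    (hs : finrank F W < s) (V : Finset α) :
    ∃ X ⊆ V, IsForcingSparse Z X (2 * s : ℝ)⁻¹ ∧ #V ≤ #X ^ 2 := by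
  have hs1 : (1 : ℝ) ≤ s := by exact_mod_cast hs.trans_le' (Nat.zero_le _)
  have hβ0 : (0 : ℝ) < (2 * s : ℝ)⁻¹ := by positivity
  have hβ1 : (2 * s : ℝ)⁻¹ ≤ 2⁻¹ := by gcongr; linarith
  obtain ⟨X, hXV, hX, hVX⟩ := exists_subset_rpow_pow_le
    (P := fun X => IsForcingSparse Z X (2 * s : ℝ)⁻¹) (θ := 1 - (2 * s : ℝ)⁻¹)
    (fun Y => restrictRank W Y) (by linarith) (sub_le_self _ hβ0.le)
    (fun X hX => exists_restrictRank_lt_of_not_isForcingSparse hZ hX) V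
  refine ⟨X, hXV, hX, ?_⟩
  have hρ : (restrictRank W V : ℝ) ≤ s := by
    exact_mod_cast ((restrictRank_le W V).trans hs.le)
  have hhalf : (2⁻¹ : ℝ) ≤ (1 - (2 * s : ℝ)⁻¹) ^ restrictRank W V := by
    refine le_trans ?_ (one_add_mul_le_pow (by linarith) _)
    have : (restrictRank W V : ℝ) * (2 * s : ℝ)⁻¹ ≤ 2⁻¹ := by
      rw [← div_eq_mul_inv, div_le_iff₀ (by positivity)]
      linarith
    linarith
  have hsqrt : (#V : ℝ) ^ (2⁻¹ : ℝ) ≤ #X :=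
    (Nat.cast_rpow_le_rpow_of_exponent_le _ (by norm_num) hhalf).trans hVX
  have : (#V : ℝ) ≤ (#X : ℝ) ^ 2 := calc
    (#V : ℝ) = ((#V : ℝ) ^ (2⁻¹ : ℝ)) ^ 2 := by
      rw [← Real.rpow_natCast, ← Real.rpow_mul (by positivity)]; norm_num
    _ ≤ (#X : ℝ) ^ 2 := by gcongr
  exact_mod_cast this

end DensityIncrement

section Homogeneous

variable {α : Type*} {r : ℕ}

def IsHomogeneousSet (r : ℕ) (E : Finset (Finset α)) (S : Finset α) : Prop :=
  (∀ e ⊆ S, #e = r → e ∈ E) ∨ ∀ e ∈ E, ¬e ⊆ S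

theorem isHomogeneousSet_of_card_le {E : Finset (Finset α)} (hE : ∀ e ∈ E, #e = r)
    {S : Finset α} (hS : #S ≤ r) : IsHomogeneousSet r E S := by
  by_cases hSE : S ∈ E
  · exact Or.inl fun e he hcard => eq_of_subset_of_card_le he (hcard ▸ hS) ▸ hSE
  · exact Or.inr fun e heE he => hSE (eq_of_subset_of_card_le he ((hE e heE).symm ▸ hS) ▸ heE)

theorem List.Nodup.exists_ofFn_sublist [DecidableEq α] {ws : List α} (hnd : ws.Nodup)
    {e : Finset α} (he : e ⊆ ws.toFinset) (hcard : #e = r) :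
    ∃ w : Fin r → α, List.ofFn w <+ ws ∧ Function.Injective w ∧ image w univ = e := by
  set l := ws.filter (· ∈ e)
  have hmem : ∀ x, x ∈ l ↔ x ∈ e := fun x => by
    simpa [l] using fun hx => List.mem_toFinset.1 (he hx)
  have hl : l.length = r := by
    rw [← hcard, ← List.toFinset_card_of_nodup (hnd.filter _)]
    congr 1; ext x; rw [List.mem_toFinset]; exact hmem x
  obtain ⟨w, hw⟩ : ∃ w : Fin r → α, List.ofFn w = l :=
    ⟨fun j => l[(j : ℕ)], List.ext_getElem (by simp [hl]) (by simp)⟩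
  refine ⟨w, hw ▸ List.filter_sublist, List.nodup_ofFn.1 (hw ▸ hnd.filter _), ?_⟩
  ext x
  simp [← hmem, ← hw, List.mem_ofFn]

theorem isHomogeneousSet_toFinset [DecidableEq α] {ι : Type*} {Z : ι → (Fin r → α) → Prop}
    {Q : ι → Prop} {ws : List α} (hnd : ws.Nodup)
    (hws : ∀ w : Fin r → α, List.ofFn w <+ ws → ∀ i, Z i w ↔ Q i)
    {V : Finset α} (hwsV : ∀ v ∈ ws, v ∈ V) {E : Finset (Finset α)} {φ : (ι → Prop) → Prop}
    (hE : ∀ e ∈ E, #e = r)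
    (hEdge : ∀ w : Fin r → α, Function.Injective w → (∀ j, w j ∈ V) →
      (image w univ ∈ E ↔ φ fun i => Z i w)) :
    IsHomogeneousSet r E ws.toFinset := by
  have hφ : ∀ e ⊆ ws.toFinset, #e = r → (e ∈ E ↔ φ Q) := by
    intro e he hcard
    obtain ⟨w, hw, hinj, rfl⟩ := hnd.exists_ofFn_sublist he hcard
    rw [hEdge w hinj fun j => hwsV _ (hw.subset (List.mem_ofFn.2 ⟨j, rfl⟩))]
    exact iff_of_eq (congrArg φ (funext fun i => propext (hws w hw i)))
  by_cases hQ : φ Q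
  · exact Or.inl fun e he hcard => (hφ e he hcard).2 hQ
  · exact Or.inr fun e heE he => hQ ((hφ e he (hE e heE)).1 heE)

end Homogeneous

theorem exists_isHomogeneousSet_card_eq {F α ι : Type*} [Field F] [DecidableEq α] [Fintype ι]
    {r : ℕ}
    {Z : ι → (Fin r → α) → Prop} {W : Submodule F (α → F)} [FiniteDimensional F W]
    (hZ : ∀ i g k, ∃ h ∈ W, ∀ v, Z i (Function.update g k v) ↔ h v = 0) {s : ℕ}
    (hs : finrank F W < s) {V : Finset α} {E : Finset (Finset α)} {φ : (ι → Prop) → Prop}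
    (hE : ∀ e ∈ E, #e = r)
    (hEdge : ∀ w : Fin r → α, Function.Injective w → (∀ j, w j ∈ V) →
      (image w univ ∈ E ↔ φ fun i => Z i w))
    {k : ℕ} (hkV : (2 * k) ^ 2 ≤ #V) (hk : (2 * Fintype.card ι * r * k ^ (r - 1)) ^ (4 * s) ≤ #V) :
    ∃ S ⊆ V, IsHomogeneousSet r E S ∧ #S = k := by
  obtain ⟨X, hXV, hX, hVX⟩ := exists_isForcingSparse_card_le_sq hZ hs V
  have hkX : 2 * k ≤ #X := (Nat.pow_le_pow_iff_left two_ne_zero).1 (hkV.trans hVX)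
  have hLX : (2 * Fintype.card ι * r * k ^ (r - 1)) ^ (2 * s) ≤ #X := by
    rw [← Nat.pow_le_pow_iff_left two_ne_zero, ← pow_mul, show 2 * s * 2 = 4 * s by ring]
    exact hk.trans hVX
  have hL : (2 * Fintype.card ι * r * k ^ (r - 1) : ℝ) ≤ (#X : ℝ) ^ (2 * s : ℝ)⁻¹ := by
    have := Real.rpow_le_rpow (by positivity) (Nat.cast_le (α := ℝ).2 hLX)
      (inv_nonneg.2 (Nat.cast_nonneg (2 * s)))
    rw [Nat.cast_pow, Real.pow_rpow_inv_natCast (by positivity) (by omega)] at this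
    exact_mod_cast this
  obtain ⟨ws, rfl, hnd, hwsX, hst⟩ := hX.exists_forcingStable hkX hL
  refine ⟨ws.toFinset, fun v hv => hXV (hwsX v (List.mem_toFinset.1 hv)), ?_,
    List.toFinset_card_of_nodup hnd⟩
  exact isHomogeneousSet_toFinset hnd (fun w hw i => (forced_ofFn_iff w).symm.trans
    (hst.forced_iff_forced_nil hwsX hw (by simp) i)) (fun v hv => hXV (hwsX v hv)) hE hEdge

theorem Nat.pow_le_of_mul_pow_le {m r s k N : ℕ} (hm : 1 ≤ m) (hr : 1 ≤ r) (hs : 1 ≤ s)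
    (hk : 1 ≤ k) (h : 4 * (2 * m * r) ^ (4 * s) * k ^ (2 * r ^ 2 * m * s) ≤ N) :
    (2 * k) ^ 2 ≤ N ∧ (2 * m * r * k ^ (r - 1)) ^ (4 * s) ≤ N := by
  obtain ⟨r, rfl⟩ : ∃ r', r = r' + 1 := ⟨r - 1, by omega⟩
  have hC : 1 ≤ (2 * m * (r + 1)) ^ (4 * s) := Nat.one_le_pow _ _ (by positivity)
  have hr2 : 2 * r ≤ (r + 1) ^ 2 * m := by nlinarith
  refine ⟨le_trans ?_ h, le_trans ?_ h⟩
  · calc (2 * k) ^ 2 = 4 * 1 * k ^ 2 := by ring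
      _ ≤ 4 * (2 * m * (r + 1)) ^ (4 * s) * k ^ (2 * (r + 1) ^ 2 * m * s) :=
        Nat.mul_le_mul (Nat.mul_le_mul_left 4 hC) (Nat.pow_le_pow_right hk (by nlinarith))
  · calc (2 * m * (r + 1) * k ^ (r + 1 - 1)) ^ (4 * s)
        = 1 * (2 * m * (r + 1)) ^ (4 * s) * k ^ (4 * s * r) := by
          rw [Nat.add_sub_cancel, mul_pow, ← pow_mul]; ring
      _ ≤ 4 * (2 * m * (r + 1)) ^ (4 * s) * k ^ (2 * (r + 1) ^ 2 * m * s) :=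
        Nat.mul_le_mul (Nat.mul_le_mul_right _ (by norm_num))
          (Nat.pow_le_pow_right hk (by nlinarith))

theorem exists_pos_forall_mul_rpow_inv_le (C G : ℕ) (hC : 0 < C) (hG : 0 < G) :
    ∃ c : ℝ, 0 < c ∧ ∀ N : ℕ, ∃ k : ℕ, (k ≤ 1 ∧ k ≤ N ∨ 1 ≤ k ∧ C * k ^ G ≤ N) ∧
      c * (N : ℝ) ^ (G : ℝ)⁻¹ ≤ k := by
  have hCG : 0 < (C : ℝ) ^ (G : ℝ)⁻¹ := Real.rpow_pos_of_pos (by exact_mod_cast hC) _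
  refine ⟨(2 * (C : ℝ) ^ (G : ℝ)⁻¹)⁻¹, by positivity, fun N => ?_⟩
  have hcx : (2 * (C : ℝ) ^ (G : ℝ)⁻¹)⁻¹ * (N : ℝ) ^ (G : ℝ)⁻¹ =
      ((N : ℝ) / C) ^ (G : ℝ)⁻¹ / 2 := by
    rw [Real.div_rpow (Nat.cast_nonneg _) (Nat.cast_nonneg _)]
    field_simp
  rw [hcx]
  set x := ((N : ℝ) / C) ^ (G : ℝ)⁻¹
  by_cases hx : x < 1
  · refine ⟨min 1 N, Or.inl ⟨min_le_left _ _, min_le_right _ _⟩, ?_⟩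
    rcases N.eq_zero_or_pos with rfl | hN
    · simp [x, Real.zero_rpow (inv_pos.2 (Nat.cast_pos.2 hG)).ne']
    · rw [min_eq_left hN]; push_cast; linarith
  · have hfloor : 1 ≤ ⌊x⌋₊ := Nat.one_le_floor_iff _ |>.2 (not_lt.1 hx)
    refine ⟨⌊x⌋₊, Or.inr ⟨hfloor, ?_⟩, ?_⟩
    · have hxG : x ^ G = N / C := Real.rpow_inv_natCast_pow (by positivity) hG.ne'
      have : (C : ℝ) * ⌊x⌋₊ ^ G ≤ N := calc
        (C : ℝ) * ⌊x⌋₊ ^ G ≤ C * x ^ G := by gcongr; exact Nat.floor_le (by positivity)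
        _ = N := by rw [hxG]; field_simp
      exact_mod_cast this
    · have := Nat.lt_floor_add_one x
      have : (1 : ℝ) ≤ ⌊x⌋₊ := by exact_mod_cast hfloor
      linarith

theorem stmt_10_general (r n d m : ℕ) (hr : 0 < r) (hm : 0 < m) :
    ∃ c : ℝ, 0 < c ∧
      ∀ (F : Type) [Field F] [DecidableEq F]
        (V : Finset (Fin n → F))
        (f : Fin m → MvPolynomial (Fin r × Fin n) F)
        (_ : ∀ i, (f i).totalDegree ≤ d)
        (φ : (Fin m → Prop) → Prop)
        (E : Finset (Finset (Fin n → F)))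
        (_ : ∀ e ∈ E, e.card = r ∧ e ⊆ V)
        (_ : ∀ w : Fin r → (Fin n → F), Function.Injective w → (∀ j, w j ∈ V) →
          (Finset.image w Finset.univ ∈ E ↔
            φ (fun i => eval (fun p : Fin r × Fin n => w p.1 p.2) (f i) = 0))),
        ∃ S : Finset (Fin n → F), S ⊆ V ∧
          ((∀ e : Finset (Fin n → F), e ⊆ S → e.card = r → e ∈ E) ∨
            (∀ e ∈ E, ¬ e ⊆ S)) ∧
          c * (V.card : ℝ) ^
            ((1 : ℝ) / (2 * r ^ 2 * m * ((n + d).choose d + 1))) ≤ (S.card : ℝ) := by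
  set s := (n + d).choose d + 1
  obtain ⟨c, hc, hk⟩ := exists_pos_forall_mul_rpow_inv_le (4 * (2 * m * r) ^ (4 * s))
    (2 * r ^ 2 * m * s) (by simp [Nat.pos_iff_ne_zero, hr.ne', hm.ne'])
    (by simp [Nat.pos_iff_ne_zero, hr.ne', hm.ne', s])
  refine ⟨c, hc, fun F _ _ V f hf φ E hE hEdge => ?_⟩
  rw [show (1 : ℝ) / (2 * r ^ 2 * m * ((n + d).choose d + 1)) =
    ((2 * r ^ 2 * m * s : ℕ) : ℝ)⁻¹ by push_cast [s]; ring]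
  obtain ⟨k, ⟨hk1, hkV⟩ | ⟨hk1, hkV⟩, hck⟩ := hk #V
  · obtain ⟨S, hSV, rfl⟩ := exists_subset_card_eq hkV
    exact ⟨S, hSV, isHomogeneousSet_of_card_le (fun e he => (hE e he).1) (hk1.trans hr), hck⟩
  · obtain ⟨h2k, hL⟩ := Nat.pow_le_of_mul_pow_le hm hr (by omega) hk1 hkV
    obtain ⟨S, hSV, hS, rfl⟩ := exists_isHomogeneousSet_card_eq (W := polyFunctions F (Fin n) d)
      (Z := fun i (w : Fin r → Fin n → F) => eval (fun p : Fin r × Fin n => w p.1 p.2) (f i) = 0)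
      (fun i g k => ⟨_, eval_update_mem_polyFunctions (hf i) g k, fun _ => Iff.rfl⟩)
      ((finrank_polyFunctions_le F n d).trans_lt (Nat.lt_succ_self _))
      (fun e he => (hE e he).1) hEdge h2k (by simpa using hL)
    exact ⟨S, hSV, hS, hck⟩

/-- Every r-uniform algebraic hypergraph of complexity (n,d,m) on N vertices has a
clique or independent set of size ≥ c·N^(1/γ) with γ = 2r²m(C(n+d,d)+1). -/
theorem stmt_10 (r n d m : ℕ) (hr : 0 < r) (hn : 0 < n) (hd : 0 < d) (hm : 0 < m) :
    ∃ c : ℝ, 0 < c ∧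
      ∀ (F : Type) [Field F] [DecidableEq F]
        (V : Finset (Fin n → F))
        (f : Fin m → MvPolynomial (Fin r × Fin n) F)
        (_ : ∀ i, (f i).totalDegree ≤ d)
        (φ : (Fin m → Prop) → Prop)
        (E : Finset (Finset (Fin n → F)))
        (_ : ∀ e ∈ E, e.card = r ∧ e ⊆ V)
        (_ : ∀ w : Fin r → (Fin n → F), Function.Injective w → (∀ j, w j ∈ V) →
          (Finset.image w Finset.univ ∈ E ↔
            φ (fun i => eval (fun p : Fin r × Fin n => w p.1 p.2) (f i) = 0))),
        ∃ S : Finset (Fin n → F), S ⊆ V ∧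
          ((∀ e : Finset (Fin n → F), e ⊆ S → e.card = r → e ∈ E) ∨
            (∀ e ∈ E, ¬ e ⊆ S)) ∧
          c * (V.card : ℝ) ^
            ((1 : ℝ) / (2 * r ^ 2 * m * ((n + d).choose d + 1))) ≤ (S.card : ℝ) :=
  stmt_10_general r n d m hr hm
end

section
/- Let H_1,…,H_m be r-uniform directed hypergraphs on a common N-element vertex set V, and suppose each H_i contains no member of the family M(r,s). Then there exists U ⊆ V with |U| ≥ c·N^{1/(2r²ms)}, where c = c(r,s,m) > 0, such that for every i ∈ [m], the induced sub-dihypergraph H_i[U] is either a clique (every r-tuple of distinct vertices of U in every order is an edge) or an independent set (no r-tuple from U is an edge). -/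
/-!
For an edge `g` of `H` and a coordinate `k`, the holes of `(g, k)` in `X` are the `y ∈ X` for
which replacing the `k`-th vertex of `g` by `y` gives a non-edge. Passing from `X` to the holes
of `(g, k)` with `g k ∈ X` strictly shortens the longest `M(r, ·, k)`-chain with `k`-th vertices
in `X` (prepend `g`), so, the chains having length `< s`, this happens at most `r m (s - 1)`
times. Doing it whenever some `(g, k)` has at least a `1/κ` fraction of holes, we reach a set
`X` with `|X| ≥ N / κ^(r m (s-1))` in which every `(g, k)` has fewer than `|X| / κ` holes.

Inside such an `X` we choose vertices greedily, keeping the invariant that every injective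
partial tuple on the chosen vertices extends to an edge of `H_i` inside `X` (unless `H_i` has
no edge inside `X` at all). A new vertex keeps the invariant as soon as it avoids the holes of
one fixed extension of each partial tuple at each free coordinate; there are at most
`m r (u + 1)^r |X| / κ` such holes. The chosen set is homogeneous for every `H_i`, and the
choice `κ = 2 m r (u + 1)^r` yields `u ≈ N^(1/(2 r² m s))`.
-/

open Finset Function
open scoped Classical

theorem pow_mul_pow_le_pow {c x r t a : ℕ} (hx : 0 < x) (ha : a ≠ 0) (hrt : r * t ≤ a) :
    (c * x ^ r) ^ t ≤ (c ^ t * x) ^ a := by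
  rw [mul_pow, mul_pow, ← pow_mul]
  exact Nat.mul_le_mul (Nat.le_self_pow ha _) (Nat.pow_le_pow_right hx hrt)

theorem pow_le_of_le_rpow_one_div {y : ℝ} {N a : ℕ} (hy : 0 ≤ y) (ha : 0 < a)
    (h : y ≤ (N : ℝ) ^ ((1 : ℝ) / a)) : y ^ a ≤ N := by
  rw [one_div, Real.le_rpow_inv_iff_of_pos hy (Nat.cast_nonneg N) (by positivity)] at h
  exact_mod_cast h

theorem exists_nat_mul_succ_le {B x : ℝ} (hB : 0 < B) (hx : 4 * B ≤ x) :
    ∃ u : ℕ, B * (u + 1) ≤ x ∧ x / (4 * B) ≤ u := by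
  refine ⟨⌊x / (2 * B)⌋₊, ?_, ?_⟩
  · have := Nat.floor_le (a := x / (2 * B)) (div_nonneg (by linarith) (by positivity))
    rw [le_div_iff₀ (by positivity)] at this
    nlinarith
  · have := Nat.sub_one_lt_floor (x / (2 * B))
    have h1 : 1 ≤ x / (4 * B) := by rwa [le_div_iff₀ (by positivity), one_mul]
    have h2 : x / (2 * B) = 2 * (x / (4 * B)) := by field_simp; ring
    linarith

namespace Dihypergraph

variable {V : Type*} {r m : ℕ}

/-- A copy in `E` of a member of `M(r, t, k)` whose vertices `u_{a,k}` lie in `X`. -/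
def HasChain (E : Set (Fin r → V)) (k : Fin r) (X : Finset V) (t : ℕ) : Prop :=
  ∃ f : Fin t → Fin r → V, (∀ a, f a ∈ E ∧ f a k ∈ X) ∧
    ∀ a a', a < a' → update (f a) k (f a' k) ∉ E

noncomputable def holes (E : Set (Fin r → V)) (g : Fin r → V) (k : Fin r) (X : Finset V) :
    Finset V :=
  X.filter fun y => update g k y ∉ E

theorem holes_subset (E : Set (Fin r → V)) (g : Fin r → V) (k : Fin r) (X : Finset V) :
    holes E g k X ⊆ X :=
  filter_subset _ _

section Chain

variable {E : Set (Fin r → V)} {k : Fin r} {X Y : Finset V} {t n : ℕ}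

theorem hasChain_zero : HasChain E k X 0 :=
  ⟨finZeroElim, finZeroElim, finZeroElim⟩

theorem HasChain.mono (hXY : X ⊆ Y) : HasChain E k X t → HasChain E k Y t :=
  fun ⟨f, hf, hne⟩ => ⟨f, fun a => ⟨(hf a).1, hXY (hf a).2⟩, hne⟩

theorem HasChain.cons {g : Fin r → V} (hg : g ∈ E) (hgk : g k ∈ X)
    (h : HasChain E k (holes E g k X) t) : HasChain E k X (t + 1) := by
  obtain ⟨f, hf, hne⟩ := h
  refine ⟨Fin.cons g f, Fin.cases ⟨hg, hgk⟩ fun a => ⟨(hf a).1, holes_subset _ _ _ _ (hf a).2⟩,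
    fun a a' haa' => ?_⟩
  obtain ⟨b', rfl⟩ :=
    Fin.exists_succ_eq.2 (Fin.pos_iff_ne_zero.1 (lt_of_le_of_lt (Fin.zero_le a) haa'))
  induction a using Fin.cases with
  | zero => simpa using (mem_filter.1 (hf b').2).2
  | succ b => simpa using hne b b' (Fin.succ_lt_succ_iff.1 haa')

theorem not_hasChain_univ [Fintype V] {s : ℕ}
    (h : ¬ ∃ u : Fin s → Fin r → V, (∀ a, (fun j => if j = k then u a k else u a j) ∈ E) ∧
      ∀ a a', a < a' → (fun j => if j = k then u a' k else u a j) ∉ E) :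
    ¬ HasChain E k univ s := by
  have hupd (g : Fin r → V) (x : V) : (fun j => if j = k then x else g j) = update g k x :=
    funext fun j => (update_apply g k x j).symm
  rintro ⟨f, hf, hne⟩
  exact h ⟨f, fun a => by simpa [hupd] using (hf a).1,
    fun a a' h => by simpa [hupd] using hne a a' h⟩

noncomputable def chainRank (E : Set (Fin r → V)) (k : Fin r) (n : ℕ) (X : Finset V) : ℕ :=
  Nat.findGreatest (HasChain E k X) n

theorem chainRank_le : chainRank E k n X ≤ n :=
  Nat.findGreatest_le n

theorem chainRank_mono (hXY : X ⊆ Y) : chainRank E k n X ≤ chainRank E k n Y :=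
  Nat.findGreatest_mono_left (fun _ => HasChain.mono hXY) n

/-- Prepend `g` to a longest chain among the holes of `(g, k)`. -/
theorem chainRank_holes_lt (hX : ¬ HasChain E k X (n + 1)) {g : Fin r → V} (hg : g ∈ E)
    (hgk : g k ∈ X) : chainRank E k n (holes E g k X) < chainRank E k n X := by
  have hlong : HasChain E k X (chainRank E k n (holes E g k X) + 1) :=
    (Nat.findGreatest_spec (Nat.zero_le n) hasChain_zero).cons hg hgk
  have hle : chainRank E k n (holes E g k X) + 1 ≤ n := by
    rcases chainRank_le.lt_or_eq with h | h
    · exact h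
    · exact absurd (h ▸ hlong) hX
  exact Nat.le_findGreatest hle hlong

end Chain

noncomputable def potential (E : Fin m → Set (Fin r → V)) (n : ℕ) (X : Finset V) : ℕ :=
  ∑ q : Fin m × Fin r, chainRank (E q.1) q.2 n X

def IsRobust (E : Set (Fin r → V)) (κ : ℕ) (X : Finset V) : Prop :=
  ∀ g ∈ E, ∀ k, g k ∈ X → κ * #(holes E g k X) < #X

section Potential

variable {E : Fin m → Set (Fin r → V)} {n : ℕ}

theorem potential_le (X : Finset V) : potential E n X ≤ m * r * n := by
  calc potential E n X ≤ ∑ _q : Fin m × Fin r, n := sum_le_sum fun _ _ => chainRank_le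
    _ = m * r * n := by simp

theorem potential_holes_lt {X : Finset V} (hX : ∀ i k, ¬ HasChain (E i) k X (n + 1))
    {i : Fin m} {k : Fin r} {g : Fin r → V} (hg : g ∈ E i) (hgk : g k ∈ X) :
    potential E n (holes (E i) g k X) < potential E n X :=
  sum_lt_sum (fun _ _ => chainRank_mono (holes_subset _ _ _ _))
    ⟨(i, k), mem_univ _, chainRank_holes_lt (hX i k) hg hgk⟩

theorem exists_robust_subset {κ : ℕ} (hκ : 0 < κ) (X : Finset V)
    (hX : ∀ i k, ¬ HasChain (E i) k X (n + 1)) :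
    ∃ Y ⊆ X, (∀ i, IsRobust (E i) κ Y) ∧ #X ≤ κ ^ potential E n X * #Y := by
  induction h : potential E n X using Nat.strong_induction_on generalizing X with
  | _ p ih =>
  by_cases hrob : ∀ i, IsRobust (E i) κ X
  · exact ⟨X, subset_rfl, hrob, Nat.le_mul_of_pos_left _ (pow_pos hκ _)⟩
  simp only [IsRobust, not_forall, not_lt] at hrob
  obtain ⟨i, g, hg, k, hgk, hbig⟩ := hrob
  have hlt := potential_holes_lt hX hg hgk
  obtain ⟨Z, hZ, hrob, hcard⟩ := ih _ (h ▸ hlt) (holes (E i) g k X)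
    (fun i k hc => hX i k (hc.mono (holes_subset _ _ _ _))) rfl
  refine ⟨Z, hZ.trans (holes_subset _ _ _ _), hrob, ?_⟩
  calc #X ≤ κ * #(holes (E i) g k X) := hbig
    _ ≤ κ * (κ ^ potential E n (holes (E i) g k X) * #Z) := by gcongr
    _ = κ ^ (potential E n (holes (E i) g k X) + 1) * #Z := by ring
    _ ≤ κ ^ p * #Z := by rw [← h]; gcongr; exact hlt

end Potential

def Extendable (E : Set (Fin r → V)) (X : Finset V) (p : Fin r → Option V) : Prop :=
  ∃ w ∈ E, (∀ j, w j ∈ X) ∧ ∀ j x, p j = some x → w j = x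

/-- `p` is an injective partial tuple with values in `U`, `none` marking a free coordinate. -/
def IsPattern (U : Finset V) (p : Fin r → Option V) : Prop :=
  (∀ j x, p j = some x → x ∈ U) ∧ ∀ j j' x, p j = some x → p j' = some x → j = j'

def Saturated (E : Set (Fin r → V)) (X U : Finset V) : Prop :=
  Extendable E X (fun _ => none) → ∀ p, IsPattern U p → Extendable E X p

def IsGoodVertex (E : Set (Fin r → V)) (X U : Finset V) (v : V) : Prop :=
  ∀ p, IsPattern U p → ∀ j, p j = none → Extendable E X p →
    Extendable E X (update p j (some v))

def IsHomogeneous (E : Set (Fin r → V)) (U : Finset V) : Prop :=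
  (∀ w : Fin r → V, Injective w → (∀ j, w j ∈ U) → w ∈ E) ∨
    (∀ w : Fin r → V, (∀ j, w j ∈ U) → w ∉ E)

section Greedy

variable {E : Set (Fin r → V)} {X U : Finset V}

theorem saturated_empty : Saturated E X ∅ := by
  intro h p hp
  convert h using 1
  funext j
  cases hpj : p j with
  | none => rfl
  | some x => exact absurd (hp.1 j x hpj) (notMem_empty x)

theorem Saturated.insert {v : V} (hU : Saturated E X U) (hv : IsGoodVertex E X U v) :
    Saturated E X (insert v U) := by
  intro h0 p ⟨hpU, hpinj⟩
  by_cases hv' : ∃ j, p j = some v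
  · obtain ⟨j, hj⟩ := hv'
    have hfree : IsPattern U (update p j none) := by
      refine ⟨fun j' x hj' => ?_, fun j₁ j₂ x h₁ h₂ => ?_⟩
      · rcases eq_or_ne j' j with rfl | hne
        · simp at hj'
        rw [update_of_ne hne] at hj'
        exact (mem_insert.1 (hpU j' x hj')).resolve_left
          fun hxv => hne (hpinj j' j v (hxv ▸ hj') hj)
      · rcases eq_or_ne j₁ j with rfl | h₁j
        · simp at h₁
        rcases eq_or_ne j₂ j with rfl | h₂j
        · simp at h₂
        exact hpinj j₁ j₂ x (by simpa [h₁j] using h₁) (by simpa [h₂j] using h₂)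
    simpa [← hj] using hv _ hfree j (update_self _ _ _) (hU h0 _ hfree)
  · push Not at hv'
    exact hU h0 p ⟨fun j x hj => (mem_insert.1 (hpU j x hj)).resolve_left
      (by rintro rfl; exact hv' j hj), hpinj⟩

/-- The bad set: the holes, at each free coordinate, of one chosen extension per pattern. -/
theorem exists_card_le_isGoodVertex_of_notMem {κ : ℕ} (hκ : 0 < κ) (hX : IsRobust E κ X)
    (U : Finset V) :
    ∃ B : Finset V, #B ≤ (#U + 1) ^ r * (r * (#X / κ)) ∧
      ∀ v ∈ X, v ∉ B → IsGoodVertex E X U v := by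
  refine ⟨(Fintype.piFinset fun _ => insertNone U).biUnion fun p => univ.biUnion fun j =>
    if h : Extendable E X p then holes E h.choose j X else ∅, ?_, ?_⟩
  · have hhole (p : Fin r → Option V) (j : Fin r) :
        #(if h : Extendable E X p then holes E h.choose j X else ∅) ≤ #X / κ := by
      split_ifs with h
      · obtain ⟨hw, hwX, -⟩ := h.choose_spec
        rw [Nat.le_div_iff_mul_le hκ, mul_comm]
        exact (hX _ hw j (hwX j)).le
      · simp
    refine (card_biUnion_le_card_mul _ _ _ fun p _ =>
      card_biUnion_le_card_mul _ _ _ fun j _ => hhole p j).trans ?_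
    simp [Fintype.card_piFinset]
  · intro v hvX hvB p hp j hpj hext
    obtain ⟨hw, hwX, hwp⟩ := hext.choose_spec
    have hmem : update hext.choose j v ∈ E := by
      by_contra hne
      refine hvB (mem_biUnion.2 ⟨p, Fintype.mem_piFinset.2 fun j' =>
        mem_insertNone.2 fun x hx => hp.1 j' x hx, mem_biUnion.2 ⟨j, mem_univ _, ?_⟩⟩)
      rw [dif_pos hext]
      exact mem_filter.2 ⟨hvX, hne⟩
    refine ⟨_, hmem, fun j' => ?_, fun j' x hj' => ?_⟩
    · rcases eq_or_ne j' j with rfl | hne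
      · simpa using hvX
      · simpa [hne] using hwX j'
    · rcases eq_or_ne j' j with rfl | hne
      · simpa using hj'
      · simp only [update_of_ne hne] at hj' ⊢
        exact hwp j' x hj'

theorem Saturated.isHomogeneous (hUX : U ⊆ X) (hU : Saturated E X U) : IsHomogeneous E U := by
  by_cases h0 : Extendable E X fun _ => none
  · refine Or.inl fun w hw hwU => ?_
    obtain ⟨w', hw', -, hext⟩ := hU h0 (some ∘ w)
      ⟨fun j x hx => Option.some_inj.1 hx ▸ hwU j, fun j j' x hj hj' => hw (by simp_all)⟩
    rwa [show w' = w from funext fun j => hext j _ rfl] at hw'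
  · exact Or.inr fun w hwU hw => h0 ⟨w, hw, fun j => hUX (hwU j), by simp⟩

theorem isHomogeneous_of_card_le_one (hU : #U ≤ 1) : IsHomogeneous E U := by
  by_cases h : ∃ w ∈ E, ∀ j, w j ∈ U
  · obtain ⟨w, hw, hwU⟩ := h
    exact Or.inl fun w' _ hw'U => by
      rwa [funext fun j => card_le_one.1 hU _ (hw'U j) _ (hwU j)]
  · push Not at h
    exact Or.inr fun w hwU hw => (h w hw).elim fun j hj => hj (hwU j)

end Greedy

section Family

variable {E : Fin m → Set (Fin r → V)} {X : Finset V} {κ : ℕ}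

theorem exists_isGoodVertex (hκ : 0 < κ) (hX : ∀ i, IsRobust (E i) κ X) {U : Finset V}
    (hUκ : 2 * (m * r * (#U + 1) ^ r) ≤ κ) (hUX : 2 * #U < #X) :
    ∃ v ∈ X, v ∉ U ∧ ∀ i, IsGoodVertex (E i) X U v := by
  choose B hB hgood using fun i => exists_card_le_isGoodVertex_of_notMem hκ (hX i) U
  have hcard : 2 * #(univ.biUnion B) ≤ #X :=
    calc 2 * #(univ.biUnion B) ≤ 2 * (m * ((#U + 1) ^ r * (r * (#X / κ)))) := by
          gcongr; simpa using card_biUnion_le_card_mul univ B _ fun i _ => hB i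
      _ = 2 * (m * r * (#U + 1) ^ r) * (#X / κ) := by ring
      _ ≤ κ * (#X / κ) := by gcongr
      _ ≤ #X := Nat.mul_div_le _ _
  obtain ⟨v, hvX, hv⟩ := exists_mem_notMem_of_card_lt_card (s := U ∪ univ.biUnion B) (t := X)
    (by have := card_union_le U (univ.biUnion B); omega)
  rw [mem_union, not_or, mem_biUnion] at hv
  exact ⟨v, hvX, hv.1, fun i => hgood i v hvX fun hvB => hv.2 ⟨i, mem_univ _, hvB⟩⟩

theorem exists_saturated_subset (hκ : 0 < κ) (hX : ∀ i, IsRobust (E i) κ X) {u : ℕ}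
    (hκu : 2 * (m * r * (u + 1) ^ r) ≤ κ) (hXu : 2 * u ≤ #X) :
    ∃ U ⊆ X, #U = u ∧ ∀ i, Saturated (E i) X U := by
  induction u with
  | zero => exact ⟨∅, empty_subset _, card_empty, fun _ => saturated_empty⟩
  | succ u ih =>
    obtain ⟨U, hUX, rfl, hU⟩ := ih (le_trans (by gcongr; omega) hκu) (by omega)
    obtain ⟨v, hvX, hvU, hv⟩ :=
      exists_isGoodVertex (U := U) hκ hX (le_trans (by gcongr; omega) hκu) (by omega)
    exact ⟨insert v U, insert_subset hvX hUX, card_insert_of_notMem hvU,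
      fun i => (hU i).insert (hv i)⟩

theorem exists_homogeneous_of_pow_le_card [Fintype V] (hr : 0 < r) (hm : 0 < m) {n : ℕ}
    (hE : ∀ i k, ¬ HasChain (E i) k univ (n + 1)) (u : ℕ)
    (hN : (2 * (m * r) * (u + 1) ^ r) ^ (m * r * n + 1) ≤ Fintype.card V) :
    ∃ U : Finset V, #U = u ∧ ∀ i, IsHomogeneous (E i) U := by
  set κ := 2 * (m * r) * (u + 1) ^ r
  have hκ : 0 < κ := by positivity
  have hκu : 2 * (u + 1) ≤ κ := by
    have h1 : 1 ≤ m * r := Nat.mul_pos hm hr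
    have h2 : u + 1 ≤ (u + 1) ^ r := Nat.le_self_pow hr.ne' _
    calc 2 * (u + 1) = 2 * 1 * (u + 1) := by ring
      _ ≤ κ := Nat.mul_le_mul (Nat.mul_le_mul_left 2 h1) h2
  obtain ⟨X, -, hX, hcard⟩ := exists_robust_subset hκ univ hE
  have hXκ : κ ≤ #X := by
    refine Nat.le_of_mul_le_mul_left ?_ (pow_pos hκ (m * r * n))
    calc κ ^ (m * r * n) * κ = κ ^ (m * r * n + 1) := (pow_succ _ _).symm
      _ ≤ #(univ : Finset V) := hN
      _ ≤ κ ^ potential E n univ * #X := hcard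
      _ ≤ κ ^ (m * r * n) * #X := by gcongr; exact potential_le _
  obtain ⟨U, hUX, hU, hsat⟩ := exists_saturated_subset hκ hX (mul_assoc _ _ _).ge (by omega)
  exact ⟨U, hU, fun i => (hsat i).isHomogeneous hUX⟩

end Family

end Dihypergraph

/-- If dihypergraphs H₁,…,H_m on N vertices contain no member of M(r,s), there is a set
of ≥ c·N^(1/(2r²ms)) vertices on which each H_i is a clique or an independent set. -/
theorem stmt_11 (r s m : ℕ) (hr : 0 < r) (hs : 0 < s) (hm : 0 < m) :
    ∃ c : ℝ, 0 < c ∧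
      ∀ (V : Type) [Fintype V] (N : ℕ), Fintype.card V = N →
      ∀ E : Fin m → Set (Fin r → V),
      (∀ i, ∀ w ∈ E i, Function.Injective w) →
      (∀ i : Fin m, ∀ k : Fin r, ¬ ∃ u : Fin s → Fin r → V,
        (∀ a : Fin s, (fun j => if j = k then u a k else u a j) ∈ E i) ∧
        (∀ a a' : Fin s, a < a' →
          (fun j => if j = k then u a' k else u a j) ∉ E i)) →
      ∃ U : Finset V,
        c * (N : ℝ) ^ ((1 : ℝ) / (2 * r ^ 2 * m * s)) ≤ (U.card : ℝ) ∧
        ∀ i : Fin m,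
          (∀ w : Fin r → V, Function.Injective w → (∀ j, w j ∈ U) → w ∈ E i) ∨
          (∀ w : Fin r → V, (∀ j, w j ∈ U) → w ∉ E i) := by
  obtain ⟨n, rfl⟩ : ∃ n, s = n + 1 := ⟨s - 1, by omega⟩
  set B : ℕ := (2 * (m * r)) ^ (m * r * n + 1)
  have hB : 0 < B := by positivity
  refine ⟨1 / (4 * B), by positivity, fun V _ N hN E _ hM => ?_⟩
  set a := 2 * r ^ 2 * m * (n + 1)
  have ha : 0 < a := by positivity
  have hra : r * (m * r * n + 1) ≤ a := by
    have : r ≤ r * (r * m) := Nat.le_mul_of_pos_right _ (by positivity)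
    simp only [a]
    nlinarith
  rw [show (2 * (r : ℝ) ^ 2 * m * ((n + 1 : ℕ) : ℝ)) = a by simp only [a]; push_cast; ring,
    one_div_mul_eq_div]
  by_cases hx : 4 * (B : ℝ) ≤ (N : ℝ) ^ ((1 : ℝ) / a)
  · obtain ⟨u, hBu, hu⟩ := exists_nat_mul_succ_le (by positivity) hx
    have hκN : (2 * (m * r) * (u + 1) ^ r) ^ (m * r * n + 1) ≤ Fintype.card V :=
      calc _ ≤ (B * (u + 1)) ^ a := pow_mul_pow_le_pow u.succ_pos ha.ne' hra
        _ ≤ Fintype.card V := by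
          exact_mod_cast hN ▸ pow_le_of_le_rpow_one_div (by positivity) ha hBu
    obtain ⟨U, rfl, hU⟩ := Dihypergraph.exists_homogeneous_of_pow_le_card hr hm
      (fun i k => Dihypergraph.not_hasChain_univ (hM i k)) u hκN
    exact ⟨U, hu, hU⟩
  · obtain ⟨U, -, hU⟩ := exists_subset_card_eq (min_le_right 1 #(univ : Finset V))
    refine ⟨U, ?_, fun i => Dihypergraph.isHomogeneous_of_card_le_one (hU ▸ min_le_left _ _)⟩
    rcases N.eq_zero_or_pos with rfl | hN0
    · rw [Nat.cast_zero, Real.zero_rpow (by positivity), zero_div]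
      positivity
    · rw [hU, card_univ, hN, min_eq_left hN0, Nat.cast_one, div_le_one (by positivity)]
      exact (not_le.1 hx).le
end

section
/- Let G be a nonempty r-uniform directed hypergraph on M ≥ 100r vertices such that the undirected hypergraph [G] of complete r-sets has density at most 1−α. Then there exist ℓ ∈ [r] and an (r−1)-tuple Y of distinct vertices such that 1 ≤ |N_{[r]∖{ℓ}}(Y)| ≤ (1 − α/(2r·r!))·M, where N_{[r]∖{ℓ}}(Y) is the set of vertices v for which inserting v at position ℓ into Y yields a directed edge. -/
/-!
Put `ε = α / (2r·r!)` and `n = (1 - ε) M`, and suppose every nonempty neighbourhood has more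
than `n` vertices. Fix a position `ℓ`. In the set of `(r-1)`-tuples `Y` with `N_ℓ(Y) ≠ ∅`, any
coordinate of a member can be changed to at least `n` values without leaving the set: insert a
vertex of `N_ℓ(Y)`, and the neighbourhood of the resulting edge at the changed position supplies
the new values. Hence there are at least `n^(r-1)` such tuples and at least `n^r` edges. On the
other hand every non-complete `r`-set is the vertex set of an injective non-edge, so there are at
most `(r! - α)·C(M, r)` edges, and Bernoulli's inequality `(1 - ε)^r ≥ 1 - rε` makes this smaller
than `n^r`.
-/

open Finset Function

section Tuples

variable {ι V : Type*} [DecidableEq ι]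

def insertAt (ℓ : ι) (Y : {j : ι // j ≠ ℓ} → V) (v : V) : ι → V :=
  fun j => if h : j = ℓ then v else Y ⟨j, h⟩

def eraseAt (ℓ : ι) (u : ι → V) : {j : ι // j ≠ ℓ} → V :=
  fun j => u j

@[simp]
theorem insertAt_apply_self (ℓ : ι) (Y : {j : ι // j ≠ ℓ} → V) (v : V) :
    insertAt ℓ Y v ℓ = v := by
  simp [insertAt]

@[simp]
theorem insertAt_apply_coe (ℓ : ι) (Y : {j : ι // j ≠ ℓ} → V) (v : V) (j : {j : ι // j ≠ ℓ}) :
    insertAt ℓ Y v j = Y j := by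
  simp [insertAt, j.2]

theorem insertAt_eraseAt (ℓ : ι) (u : ι → V) (v : V) :
    insertAt ℓ (eraseAt ℓ u) v = update u ℓ v := by
  funext j
  by_cases h : j = ℓ
  · subst h; simp
  · simp [insertAt, eraseAt, h]

@[simp]
theorem insertAt_eraseAt_self (ℓ : ι) (u : ι → V) : insertAt ℓ (eraseAt ℓ u) (u ℓ) = u := by
  rw [insertAt_eraseAt, update_eq_self]

@[simp]
theorem eraseAt_insertAt (ℓ : ι) (Y : {j : ι // j ≠ ℓ} → V) (v : V) :
    eraseAt ℓ (insertAt ℓ Y v) = Y := by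
  funext j
  simp [eraseAt]

theorem insertAt_update (ℓ : ι) (Y : {j : ι // j ≠ ℓ} → V) (v : V) (i : {j : ι // j ≠ ℓ})
    (x : V) : insertAt ℓ (update Y i x) v = update (insertAt ℓ Y v) i x := by
  funext j
  by_cases h : j = ℓ
  · subst h; simp [update_of_ne (Ne.symm i.2)]
  · by_cases hi : j = i
    · subst hi; simp
    · lift j to {j : ι // j ≠ ℓ} using h
      have hji : j ≠ i := fun h' => hi (congrArg Subtype.val h')
      simp [update_of_ne hi, update_of_ne hji]

theorem Function.Injective.of_insertAt {ℓ : ι} {Y : {j : ι // j ≠ ℓ} → V} {v : V}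
    (h : Injective (insertAt ℓ Y v)) : Injective Y := fun i j hij =>
  Subtype.ext (h (by simpa using hij))

/-- The paper's `N_{[r]∖{ℓ}}(Y)`. -/
def nbhd (E : Set (ι → V)) (ℓ : ι) (Y : {j : ι // j ≠ ℓ} → V) : Set V :=
  {v | insertAt ℓ Y v ∈ E}

theorem ncard_eq_sum_ncard_nbhd [Fintype ι] [Fintype V] [DecidableEq V] (E : Set (ι → V))
    (ℓ : ι) : E.ncard = ∑ Y, (nbhd E ℓ Y).ncard := by
  classical
  rw [Set.ncard_eq_toFinset_card' E,
    card_eq_sum_card_fiberwise (f := eraseAt ℓ) (t := univ) (fun _ _ => mem_univ _)]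
  refine sum_congr rfl fun Y _ => ?_
  rw [Set.ncard_eq_toFinset_card']
  have hmem : ∀ v, v ∈ (nbhd E ℓ Y).toFinset ↔ insertAt ℓ Y v ∈ E := fun v => Set.mem_toFinset
  refine card_nbij' (fun u => u ℓ) (insertAt ℓ Y) ?_ ?_ ?_ ?_ <;>
    simp only [Set.MapsTo, Set.LeftInvOn, coe_filter, mem_coe, hmem, Set.mem_toFinset,
      Set.mem_ofPred_eq]
  · rintro u ⟨hu, rfl⟩
    simpa using hu
  · intro v hv
    simpa using hv
  · rintro u ⟨-, rfl⟩
    simp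
  · simp

end Tuples

theorem pow_card_le_card_of_le_card_update {ι W : Type*} [Fintype ι] [DecidableEq ι] [Fintype W]
    [DecidableEq W] {A : Finset (ι → W)} (hA : A.Nonempty) {n : ℝ} (hn : 0 ≤ n)
    (hupd : ∀ Y ∈ A, ∀ i, n ≤ #{x | update Y i x ∈ A}) :
    n ^ Fintype.card ι ≤ #A := by
  have hcount : ∀ s : Finset ι, ∀ Y ∈ A, n ^ #s ≤ #{Z ∈ A | ∀ j ∉ s, Z j = Y j} := by
    intro s
    induction s using Finset.induction_on with
    | empty =>
      intro Y hY
      simpa using card_pos.2 ⟨Y, mem_filter.2 ⟨hY, by simp⟩⟩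
    | insert i s hi ih =>
      intro Y hY
      set L : Finset W := {x | update Y i x ∈ A}
      set T : W → Finset (ι → W) := fun x => {Z ∈ A | ∀ j ∉ s, Z j = update Y i x j}
      have hdisj : (L : Set W).PairwiseDisjoint T := by
        intro x _ x' _ hxx'
        refine disjoint_left.2 fun Z hZ hZ' => hxx' ?_
        have h := (mem_filter.1 hZ).2 i hi
        have h' := (mem_filter.1 hZ').2 i hi
        simp only [update_self] at h h'
        rw [← h, ← h']
      have hsub : L.biUnion T ⊆ {Z ∈ A | ∀ j ∉ insert i s, Z j = Y j} := by
        intro Z hZ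
        obtain ⟨x, -, hZ⟩ := mem_biUnion.1 hZ
        obtain ⟨hZA, hZ⟩ := mem_filter.1 hZ
        refine mem_filter.2 ⟨hZA, fun j hj => ?_⟩
        rw [mem_insert, not_or] at hj
        rw [hZ j hj.2, update_of_ne hj.1]
      calc n ^ #(insert i s) = n * n ^ #s := by rw [card_insert_of_notMem hi, pow_succ']
        _ ≤ #L * n ^ #s := by gcongr; exact hupd Y hY i
        _ = ∑ x ∈ L, n ^ #s := by rw [sum_const, nsmul_eq_mul]
        _ ≤ ∑ x ∈ L, (#(T x) : ℝ) :=
          sum_le_sum fun x hx => ih _ (mem_filter.1 hx).2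
        _ = #(L.biUnion T) := by rw [card_biUnion hdisj]; push_cast; rfl
        _ ≤ _ := by exact_mod_cast card_le_card hsub
  obtain ⟨Y, hY⟩ := hA
  calc n ^ Fintype.card ι = n ^ #(univ : Finset ι) := rfl
    _ ≤ #{Z ∈ A | ∀ j ∉ (univ : Finset ι), Z j = Y j} := hcount univ Y hY
    _ ≤ #A := by exact_mod_cast card_filter_le _ _

theorem pow_card_le_ncard_of_le_ncard_nbhd {ι V : Type*} [Fintype ι] [DecidableEq ι] [Nonempty ι]
    [Fintype V] [DecidableEq V] {E : Set (ι → V)} (hE : E.Nonempty) {n : ℝ} (hn : 0 ≤ n)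
    (hdeg : ∀ ℓ Y, (nbhd E ℓ Y).Nonempty → n ≤ (nbhd E ℓ Y).ncard) :
    n ^ Fintype.card ι ≤ E.ncard := by
  classical
  obtain ⟨ℓ⟩ := ‹Nonempty ι›
  set A : Finset ({j : ι // j ≠ ℓ} → V) := {Y | (nbhd E ℓ Y).Nonempty}
  have hA : A.Nonempty := by
    obtain ⟨u, hu⟩ := hE
    exact ⟨eraseAt ℓ u, mem_filter.2 ⟨mem_univ _, u ℓ, by simpa [nbhd] using hu⟩⟩
  have hupd : ∀ Y ∈ A, ∀ i, n ≤ #{x | update Y i x ∈ A} := by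
    intro Y hY i
    obtain ⟨v, hv⟩ := (mem_filter.1 hY).2
    set u := insertAt ℓ Y v
    have hline : nbhd E i (eraseAt (i : ι) u) ⊆ ({x | update Y i x ∈ A} : Finset V) := by
      intro x hx
      refine mem_coe.2 <| mem_filter.2 ⟨mem_univ _, mem_filter.2 ⟨mem_univ _, v, ?_⟩⟩
      change insertAt i.1 (eraseAt i.1 u) x ∈ E at hx
      rwa [insertAt_eraseAt, ← insertAt_update] at hx
    have hle : (nbhd E i (eraseAt (i : ι) u)).ncard ≤ #{x | update Y i x ∈ A} :=
      (Set.ncard_le_ncard hline).trans_eq (Set.ncard_coe_finset _)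
    calc n ≤ (nbhd E i (eraseAt (i : ι) u)).ncard :=
          hdeg _ _ ⟨u i, show insertAt i.1 (eraseAt i.1 u) (u i) ∈ E by rwa [insertAt_eraseAt_self]⟩
      _ ≤ _ := by exact_mod_cast hle
  have hcard : Fintype.card {j : ι // j ≠ ℓ} + 1 = Fintype.card ι := by
    rw [Fintype.card_subtype_compl, Fintype.card_subtype_eq]
    have := Fintype.card_pos (α := ι)
    omega
  calc n ^ Fintype.card ι = n ^ Fintype.card {j : ι // j ≠ ℓ} * n := by rw [← hcard, pow_succ]
    _ ≤ #A * n := by gcongr; exact pow_card_le_card_of_le_card_update hA hn hupd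
    _ = ∑ Y ∈ A, n := by rw [sum_const, nsmul_eq_mul]
    _ ≤ ∑ Y ∈ A, ((nbhd E ℓ Y).ncard : ℝ) := sum_le_sum fun Y hY => hdeg ℓ Y (mem_filter.1 hY).2
    _ ≤ ∑ Y, ((nbhd E ℓ Y).ncard : ℝ) := sum_le_sum_of_subset_of_nonneg (subset_univ A)
          fun _ _ _ => Nat.cast_nonneg _
    _ = E.ncard := by rw [ncard_eq_sum_ncard_nbhd E ℓ]; push_cast; rfl

section Complete

variable {r : ℕ} {V : Type*}

def IsCompleteSet [DecidableEq V] (E : Set (Fin r → V)) (S : Finset V) : Prop :=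
  ∀ w : Fin r → V, Injective w → image w univ = S → w ∈ E

theorem card_filter_injective [Fintype V] [DecidableEq V] :
    #{w : Fin r → V | Injective w} = (Fintype.card V).descFactorial r := by
  rw [← Fintype.card_subtype, Fintype.card_congr (Equiv.subtypeInjectiveEquivEmbedding _ _),
    Fintype.card_embedding_eq, Fintype.card_fin]

theorem ncard_add_choose_le_descFactorial_add [Fintype V] [DecidableEq V] {E : Set (Fin r → V)}
    (hEinj : ∀ w ∈ E, Injective w) :
    E.ncard + (Fintype.card V).choose r ≤
      (Fintype.card V).descFactorial r + {S : Finset V | S.card = r ∧ IsCompleteSet E S}.ncard := by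
  classical
  set P := powersetCard r (univ : Finset V)
  set I := P.filter (¬ IsCompleteSet E ·)
  have hcomplete :
      {S : Finset V | S.card = r ∧ IsCompleteSet E S}.ncard = #(P.filter (IsCompleteSet E)) := by
    rw [← Set.ncard_coe_finset]
    congr
    ext S
    simp [P, mem_powersetCard]
  have hP : #(P.filter (IsCompleteSet E)) + #I = (Fintype.card V).choose r := by
    rw [card_filter_add_card_filter_not, card_powersetCard, card_univ]
  set N : Finset (Fin r → V) := {w | Injective w ∧ w ∉ E}
  have hI : I ⊆ N.image (fun w => image w univ) := by
    intro S hS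
    have hS' := (mem_filter.1 hS).2
    simp only [IsCompleteSet, not_forall] at hS'
    obtain ⟨w, hw, hwS, hwE⟩ := hS'
    exact mem_image.2 ⟨w, mem_filter.2 ⟨mem_univ _, hw, hwE⟩, hwS⟩
  have hdisj : Disjoint E.toFinset N :=
    disjoint_right.2 fun w hw hwE => (mem_filter.1 hw).2.2 (Set.mem_toFinset.1 hwE)
  have hsub : E.toFinset ∪ N ⊆ ({w | Injective w} : Finset (Fin r → V)) := by
    intro w hw
    refine mem_filter.2 ⟨mem_univ _, ?_⟩
    rcases mem_union.1 hw with hw | hw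
    · exact hEinj w (Set.mem_toFinset.1 hw)
    · exact (mem_filter.1 hw).2.1
  calc E.ncard + (Fintype.card V).choose r
      ≤ #(E.toFinset ∪ N) + #(P.filter (IsCompleteSet E)) := by
        rw [card_union_of_disjoint hdisj, Set.ncard_eq_toFinset_card', ← hP]
        have := (card_le_card hI).trans card_image_le
        omega
    _ ≤ _ := by
        rw [hcomplete, ← card_filter_injective]
        gcongr

end Complete

section Arithmetic

open Nat

theorem div_two_mul_mul_factorial_le_one {r : ℕ} (hr : 0 < r) {α : ℝ} (hα1 : α ≤ 1) :
    α / (2 * r * r !) ≤ 1 := by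
  have : (1 : ℝ) ≤ r := by exact_mod_cast hr
  have : (1 : ℝ) ≤ r ! := by exact_mod_cast r.factorial_pos
  rw [div_le_one (by positivity)]
  nlinarith

theorem factorial_sub_mul_choose_lt_pow {r M : ℕ} (hr : 0 < r) (hrM : r ≤ M) {α : ℝ}
    (hα : 0 < α) (hα1 : α ≤ 1) :
    ((r ! : ℝ) - α) * M.choose r < ((1 - α / (2 * r * r !)) * M) ^ r := by
  set ε := α / (2 * r * r !)
  set c := α / (r ! : ℝ)
  have hc : 0 < c := by positivity
  have hc1 : c ≤ 1 := (div_le_one (by positivity)).2 (hα1.trans (mod_cast r.factorial_pos))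
  have hMpow : (0 : ℝ) < (M : ℝ) ^ r := by
    have : (0 : ℝ) < M := by exact_mod_cast hr.trans_le hrM
    positivity
  have hchoose : (r ! : ℝ) * M.choose r ≤ (M : ℝ) ^ r := by
    exact_mod_cast (descFactorial_eq_factorial_mul_choose M r).symm.trans_le
      (descFactorial_le_pow M r)
  have hbernoulli : 1 - c / 2 ≤ (1 - ε) ^ r := by
    have hrε : (r : ℝ) * ε = c / 2 := by
      simp only [ε, c]
      field_simp
    have := one_add_mul_sub_le_pow (a := 1 - ε)
      (by linarith [div_two_mul_mul_factorial_le_one hr hα1]) r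
    linarith
  calc ((r ! : ℝ) - α) * M.choose r = (1 - c) * (r ! * M.choose r) := by
        simp only [c]; field_simp
    _ ≤ (1 - c) * (M : ℝ) ^ r := by gcongr
    _ < (1 - c / 2) * (M : ℝ) ^ r := by gcongr; linarith
    _ ≤ (1 - ε) ^ r * (M : ℝ) ^ r := by gcongr
    _ = ((1 - ε) * M) ^ r := (mul_pow _ _ _).symm

end Arithmetic

/-- Medium-degree lemma for directed hypergraphs: if [G] has density ≤ 1-α, there is a
position ℓ and an (r-1)-tuple Y with 1 ≤ |N_{[r]∖{ℓ}}(Y)| ≤ (1-α/(2r·r!))·M. -/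
theorem stmt_12 (r M : ℕ) (hr : 0 < r) (hM : 100 * r ≤ M) (α : ℝ) (hα : 0 < α)
    (V : Type) [Fintype V] [DecidableEq V] (hV : Fintype.card V = M)
    (E : Set (Fin r → V)) (hEinj : ∀ w ∈ E, Function.Injective w)
    (hne : E.Nonempty)
    (hdens : ({S : Finset V | S.card = r ∧ ∀ w : Fin r → V, Function.Injective w →
        Finset.image w Finset.univ = S → w ∈ E}.ncard : ℝ) ≤ (1 - α) * (M.choose r : ℝ)) :
    ∃ (ℓ : Fin r) (Y : {j : Fin r // j ≠ ℓ} → V), Function.Injective Y ∧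
      1 ≤ {v : V | (fun j : Fin r =>
            if h : j = ℓ then v else Y ⟨j, h⟩) ∈ E}.ncard ∧
      ({v : V | (fun j : Fin r =>
            if h : j = ℓ then v else Y ⟨j, h⟩) ∈ E}.ncard : ℝ) ≤
        (1 - α / (2 * r * (r.factorial : ℝ))) * M := by
  by_contra! hlarge
  have hrM : r ≤ M := by omega
  have hα1 : α ≤ 1 := by
    have : (0 : ℝ) < M.choose r := by exact_mod_cast Nat.choose_pos hrM
    nlinarith [(Nat.cast_nonneg _ : (0 : ℝ) ≤ _).trans hdens]
  have hn : 0 ≤ (1 - α / (2 * r * (r.factorial : ℝ))) * M :=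
    mul_nonneg (sub_nonneg.2 (div_two_mul_mul_factorial_le_one hr hα1)) M.cast_nonneg
  have : Nonempty (Fin r) := ⟨⟨0, hr⟩⟩
  have hlower := pow_card_le_ncard_of_le_ncard_nbhd hne hn fun ℓ Y ⟨v, hv⟩ =>
    (hlarge ℓ Y (hEinj _ hv).of_insertAt ((Set.ncard_pos).2 ⟨v, hv⟩)).le
  rw [Fintype.card_fin] at hlower
  have hupper := ncard_add_choose_le_descFactorial_add hEinj
  rw [hV, Nat.descFactorial_eq_factorial_mul_choose] at hupper
  have hupper' : (E.ncard : ℝ) + M.choose r ≤ r.factorial * M.choose r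
      + {S : Finset V | S.card = r ∧ IsCompleteSet E S}.ncard := by exact_mod_cast hupper
  have hdens' : ({S : Finset V | S.card = r ∧ IsCompleteSet E S}.ncard : ℝ)
      ≤ (1 - α) * M.choose r := hdens
  linarith [factorial_sub_mul_choose_lt_pow hr hrM hα hα1]
end

section
/- Let r, s be positive integers. There exists c = c(r,s) > 0 such that the following holds for every ε_0 > 0. Let H be an r-uniform hypergraph with disjoint vertex subsets U_1,…,U_L, and suppose H contains no focused copy of a member of M(r,s) with respect to this partition. Let G be an r-uniform hypergraph on [L] such that every edge {i_1,…,i_r} of G satisfies d_H(U_{i_1},…,U_{i_r}) ≤ ε_0. Then for each i ∈ [L] there exists V_i ⊆ U_i with |V_i| ≥ (1 − c·ε_0^{1/r!})·|U_i| such that (V_{i_1},…,V_{i_r}) spans no edge of H for every edge {i_1,…,i_r} of G. -/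
/-
Call a set `Y` of vertices, meeting the parts indexed by `P`, `α`-heavy if for some
completion `Q` of `P` to an edge of `G` it lies in more than `α ∏_{q ∈ Q} |U_q|` edges of `H`
crossing the parts `P ∪ Q`. Put `δ = (2ε₀)^(1/r)` and `α_j = ε₀ δ^(-j)`, and delete from `U_m`
every vertex `z` that turns a set which is not `α_j`-heavy into an `α_{j+1}`-heavy one (adding
the part `m`).

A crossing edge over an edge of `G` surviving the deletion is built from `∅` one part at a
time: `∅` is not `α_0`-heavy by sparsity, and no step can create heaviness, so the edge itself
is not `α_r`-heavy, although it lies in one crossing edge and `α_r = 1/2`.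

Few vertices are deleted: double counting shows that each deleted `z` lies in a crossing edge
`{z} ∪ Z` with fewer than `δ |U_m|` extensions `{v} ∪ Z ∈ H`, `v ∈ U_m`. Greedily picking
deleted vertices outside the extensions of all previously picked links builds a focused member
of `M(r, s)` as soon as more than `(s - 1) δ |U_m|` vertices of `U_m` are deleted at one level.
-/

open Finset Function

variable {V ι : Type*} [DecidableEq V]

section Crossing

variable {U W : ι → Finset V} {g : Finset ι} {e : Finset V}

theorem biUnion_inter_eq_of_card_inter_eq_one (hU : Pairwise (Disjoint on U))
    (hWU : ∀ p, W p ⊆ U p) (he : #e ≤ #g) (hcross : ∀ p ∈ g, #(e ∩ W p) = 1) :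
    g.biUnion (fun p => e ∩ W p) = e := by
  have hW : (g : Set ι).PairwiseDisjoint fun p => e ∩ W p := fun p _ q _ hpq =>
    (hU hpq).mono (inter_subset_right.trans (hWU p)) (inter_subset_right.trans (hWU q))
  refine eq_of_subset_of_card_le (biUnion_subset.2 fun _ _ => inter_subset_left) ?_
  rw [card_biUnion hW, sum_congr rfl hcross, sum_const, smul_eq_mul, mul_one]
  exact he

theorem subset_biUnion_of_card_inter_eq_one (hU : Pairwise (Disjoint on U))
    (hWU : ∀ p, W p ⊆ U p) (he : #e ≤ #g) (hcross : ∀ p ∈ g, #(e ∩ W p) = 1) :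
    e ⊆ g.biUnion W := by
  rw [← biUnion_inter_eq_of_card_inter_eq_one hU hWU he hcross]
  exact biUnion_mono fun _ _ => inter_subset_right

theorem mem_of_mem_inter_of_card_inter_eq_one (hU : Pairwise (Disjoint on U))
    (hWU : ∀ p, W p ⊆ U p) (he : #e ≤ #g) (hcross : ∀ p ∈ g, #(e ∩ W p) = 1)
    {l : ι} {x : V} (hx : x ∈ e ∩ U l) : l ∈ g ∧ x ∈ W l := by
  obtain ⟨hxe, hxU⟩ := mem_inter.1 hx
  obtain ⟨p, hp, hxp⟩ :=
    mem_biUnion.1 (subset_biUnion_of_card_inter_eq_one hU hWU he hcross hxe)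
  obtain rfl : p = l := hU.eq <| not_disjoint_iff.2 ⟨x, hWU p hxp, hxU⟩
  exact ⟨hp, hxp⟩

theorem inter_eq_inter_of_card_inter_eq_one (hU : Pairwise (Disjoint on U))
    (hWU : ∀ p, W p ⊆ U p) (he : #e ≤ #g) (hcross : ∀ p ∈ g, #(e ∩ W p) = 1) (l : ι) :
    e ∩ U l = e ∩ W l :=
  Subset.antisymm
    (fun _ hx => mem_inter.2 ⟨(mem_inter.1 hx).1,
      (mem_of_mem_inter_of_card_inter_eq_one hU hWU he hcross hx).2⟩)
    (inter_subset_inter_left (hWU l))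

theorem card_inter_le_one_of_card_inter_eq_one (hU : Pairwise (Disjoint on U))
    (he : #e ≤ #g) (hcross : ∀ p ∈ g, #(e ∩ U p) = 1) (l : ι) : #(e ∩ U l) ≤ 1 := by
  by_cases hl : l ∈ g
  · exact (hcross l hl).le
  · have : e ∩ U l = ∅ := eq_empty_of_forall_notMem fun _ hx =>
      hl (mem_of_mem_inter_of_card_inter_eq_one hU (fun _ => subset_rfl) he hcross hx).1
    simp [this]

theorem disjoint_erase_of_card_inter_eq_one {e S : Finset V} {z : V} (hze : z ∈ e)
    (hzS : z ∈ S) (h : #(e ∩ S) = 1) : Disjoint (e.erase z) S := by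
  obtain ⟨w, hw⟩ := card_eq_one.1 h
  obtain rfl : z = w := mem_singleton.1 (hw ▸ mem_inter.2 ⟨hze, hzS⟩)
  rw [disjoint_iff_inter_eq_empty, erase_inter, hw, erase_singleton]

end Crossing

section Heavy

variable (U : ι → Finset V) (E : Finset (Finset V)) (G : Set (Finset ι))

/-- For `Y = ∅` and `g = {i₁, …, i_r}` this is the set of edges counted by
`d_H(U_{i₁}, …, U_{i_r})`. -/
def crossingEdges (g : Finset ι) (Y : Finset V) : Finset (Finset V) :=
  E.filter fun e => Y ⊆ e ∧ ∀ p ∈ g, #(e ∩ U p) = 1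

variable {U E} in
theorem sum_card_extensions_le (hU : Pairwise (Disjoint on U)) {m : ι} {g : Finset ι}
    {z : V} {Y : Finset V} (hm : m ∈ g) (hz : z ∈ U m) (hzY : z ∉ Y) :
    ∑ e ∈ crossingEdges U E g (insert z Y), #{v ∈ U m | insert v (e.erase z) ∈ E} ≤
      #(crossingEdges U E g Y) := by
  have hlink : ∀ e ∈ crossingEdges U E g (insert z Y),
      z ∈ e ∧ Y ⊆ e.erase z ∧ Disjoint (e.erase z) (U m) ∧ ∀ p ∈ g, #(e ∩ U p) = 1 := by
    intro e he
    obtain ⟨-, hYe, hcross⟩ := mem_filter.1 he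
    have hze : z ∈ e := hYe (mem_insert_self z Y)
    exact ⟨hze, subset_erase.2 ⟨(subset_insert z Y).trans hYe, hzY⟩,
      disjoint_erase_of_card_inter_eq_one hze hz (hcross m hm), hcross⟩
  have hinter : ∀ e ∈ crossingEdges U E g (insert z Y), ∀ v ∈ U m,
      insert v (e.erase z) ∩ U m = {v} := by
    intro e he v hv
    rw [insert_inter_of_mem hv, disjoint_iff_inter_eq_empty.1 (hlink e he).2.2.1]
    rfl
  rw [← card_sigma]
  refine card_le_card_of_injOn (fun x => insert x.2 (x.1.erase z)) ?_ ?_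
  · rintro ⟨e, v⟩ hev
    obtain ⟨he, hv⟩ := mem_sigma.1 hev
    obtain ⟨hvU, hvE⟩ := mem_filter.1 hv
    obtain ⟨hze, hYe, -, hcross⟩ := hlink e he
    refine mem_filter.2 ⟨hvE, hYe.trans (subset_insert _ _), fun p hp => ?_⟩
    obtain rfl | hpm := eq_or_ne p m
    · rw [hinter e he v hvU, card_singleton]
    · have hpm' := hU hpm.symm
      rw [insert_inter_of_notMem (disjoint_left.1 hpm' hvU), ← hcross p hp, erase_inter,
        erase_eq_of_notMem fun h => disjoint_left.1 hpm' hz (mem_inter.1 h).2]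
  · rintro ⟨e, v⟩ hev ⟨e', v'⟩ hev' heq
    obtain ⟨he, hv⟩ := mem_sigma.1 hev
    obtain ⟨he', hv'⟩ := mem_sigma.1 hev'
    simp only at heq
    obtain rfl : v = v' := singleton_injective <| by
      rw [← hinter e he v (mem_filter.1 hv).1, ← hinter e' he' v' (mem_filter.1 hv').1, heq]
    have hvZ : ∀ e ∈ crossingEdges U E g (insert z Y), v ∉ e.erase z := fun e he hve =>
      disjoint_left.1 (hlink e he).2.2.1 hve (mem_filter.1 hv).1
    rw [← insert_erase (hlink e he).1, ← insert_erase (hlink e' he').1,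
      ← erase_insert (hvZ e he), ← erase_insert (hvZ e' he'), heq]

variable [DecidableEq ι]

variable {U E} in
theorem crossingEdges_empty_eq_filter {r : ℕ} {σ : Fin r → ι} {g : Finset ι}
    (hσ : univ.image σ = g) :
    crossingEdges U E g ∅ = E.filter fun e => ∀ j, #(e ∩ U (σ j)) = 1 := by
  subst hσ
  ext e
  simp [crossingEdges]

def IsHeavy (α : ℝ) (Y : Finset V) (P : Finset ι) : Prop :=
  ∃ Q : Finset ι, Disjoint P Q ∧ P ∪ Q ∈ G ∧
    α * ∏ q ∈ Q, (#(U q) : ℝ) < #(crossingEdges U E (P ∪ Q) Y)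

open scoped Classical in
noncomputable def deletionSet (α β : ℝ) (m : ι) : Finset V :=
  (U m).filter fun z => ∃ (P : Finset ι) (Y : Finset V), m ∉ P ∧ z ∉ Y ∧
    ¬ IsHeavy U E G α Y P ∧ IsHeavy U E G β (insert z Y) (insert m P)

variable {U E G}

theorem mem_deletionSet {α β : ℝ} {m : ι} {z : V} :
    z ∈ deletionSet U E G α β m ↔
      z ∈ U m ∧ ∃ (P : Finset ι) (Y : Finset V), m ∉ P ∧ z ∉ Y ∧
        ¬ IsHeavy U E G α Y P ∧ IsHeavy U E G β (insert z Y) (insert m P) := by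
  classical exact mem_filter

theorem deletionSet_subset {α β : ℝ} {m : ι} : deletionSet U E G α β m ⊆ U m :=
  fun _ hz => (mem_deletionSet.1 hz).1

theorem exists_sparse_link (hU : Pairwise (Disjoint on U)) {α β γ : ℝ} (hγ : 0 < γ)
    (hαβ : α ≤ β * γ) {m : ι} {z : V} (hz : z ∈ deletionSet U E G α β m) :
    ∃ (Z : Finset V) (g : Finset ι), g ∈ G ∧ z ∉ Z ∧ insert z Z ∈ E ∧
      (∀ p ∈ g, #(insert z Z ∩ U p) = 1) ∧
      (#{v ∈ U m | insert v Z ∈ E} : ℝ) < γ * #(U m) := by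
  obtain ⟨hzU, P, Y, hmP, hzY, hlight, Q, hdisj, hG, hheavy⟩ := mem_deletionSet.1 hz
  obtain ⟨hmQ, hPQ⟩ := disjoint_insert_left.1 hdisj
  set g := insert m P ∪ Q
  set F := crossingEdges U E g (insert z Y)
  have hg : P ∪ insert m Q = g := (union_insert m P Q).trans (insert_union m P Q).symm
  have hlight' : (#(crossingEdges U E g Y) : ℝ) ≤ α * (#(U m) * ∏ q ∈ Q, (#(U q) : ℝ)) := by
    have := not_lt.1 fun h =>
      hlight ⟨insert m Q, disjoint_insert_right.2 ⟨hmP, hPQ⟩, hg ▸ hG, h⟩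
    rwa [prod_insert hmQ, hg] at this
  have hUm : (0 : ℝ) < #(U m) := by exact_mod_cast card_pos.2 ⟨z, hzU⟩
  have hprod : (0 : ℝ) ≤ #(U m) * ∏ q ∈ Q, (#(U q) : ℝ) := by positivity
  obtain ⟨e, he, hsparse⟩ :
      ∃ e ∈ F, (#{v ∈ U m | insert v (e.erase z) ∈ E} : ℝ) < γ * #(U m) := by
    apply exists_lt_of_sum_lt
    calc ∑ e ∈ F, (#{v ∈ U m | insert v (e.erase z) ∈ E} : ℝ)
        ≤ #(crossingEdges U E g Y) := by
          exact_mod_cast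
            sum_card_extensions_le hU (mem_union_left Q (mem_insert_self m P)) hzU hzY
      _ ≤ α * (#(U m) * ∏ q ∈ Q, (#(U q) : ℝ)) := hlight'
      _ ≤ β * γ * (#(U m) * ∏ q ∈ Q, (#(U q) : ℝ)) :=
        mul_le_mul_of_nonneg_right hαβ hprod
      _ = γ * #(U m) * (β * ∏ q ∈ Q, (#(U q) : ℝ)) := by ring
      _ < γ * #(U m) * #F := mul_lt_mul_of_pos_left hheavy (mul_pos hγ hUm)
      _ = ∑ e ∈ F, γ * #(U m) := by rw [sum_const, nsmul_eq_mul, mul_comm]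
  obtain ⟨heE, hYe, hcross⟩ := mem_filter.1 he
  have hze : z ∈ e := hYe (mem_insert_self z Y)
  refine ⟨e.erase z, g, hG, notMem_erase z e, ?_, ?_, hsparse⟩ <;> rw [insert_erase hze]
  exacts [heE, hcross]

end Heavy

section FocusedCopy

variable {r : ℕ} {U : ι → Finset V} {E : Finset (Finset V)}

variable (r U E) in
/-- A member of `M(r, t)` with `z i ∈ S`, each of whose edges meets every part at most once;
for `S = U l` this is a focused copy. -/
def IsFocusedCopy (S : Finset V) {t : ℕ} (Z : Fin t → Finset V) (z : Fin t → V) : Prop :=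
  (∀ i, #(Z i) = r - 1) ∧ (∀ i, z i ∈ S) ∧ (∀ i, z i ∉ Z i) ∧ (∀ i, insert (z i) (Z i) ∈ E) ∧
    (∀ i i', i < i' → insert (z i') (Z i) ∉ E) ∧ (∀ i l, #(insert (z i) (Z i) ∩ U l) ≤ 1)

theorem IsFocusedCopy.mono {S T : Finset V} {t : ℕ} {Z : Fin t → Finset V} {z : Fin t → V}
    (h : IsFocusedCopy r U E S Z z) (hST : S ⊆ T) : IsFocusedCopy r U E T Z z :=
  ⟨h.1, fun i => hST (h.2.1 i), h.2.2⟩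

theorem IsFocusedCopy.snoc {S : Finset V} {t : ℕ} {Z : Fin t → Finset V} {z : Fin t → V}
    (h : IsFocusedCopy r U E S Z z) {Z' : Finset V} {z' : V} (hZ' : #Z' = r - 1)
    (hz'S : z' ∈ S) (hz'Z' : z' ∉ Z') (hE : insert z' Z' ∈ E)
    (hfocus : ∀ l, #(insert z' Z' ∩ U l) ≤ 1) (hfree : ∀ i, insert z' (Z i) ∉ E) :
    IsFocusedCopy r U E S (Fin.snoc Z Z' : Fin (t + 1) → Finset V) (Fin.snoc z z') := by
  obtain ⟨hZ, hzS, hzZ, hzE, hpair, hzfocus⟩ := h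
  refine ⟨?_, ?_, ?_, ?_, ?_, ?_⟩ <;>
    simp only [Fin.forall_fin_succ', Fin.snoc_castSucc, Fin.snoc_last,
      Fin.castSucc_lt_castSucc_iff, Fin.castSucc_lt_last, not_lt_of_ge (Fin.le_last _),
      true_implies, false_implies, implies_true, and_true]
  exacts [⟨hZ, hZ'⟩, ⟨hzS, hz'S⟩, ⟨hzZ, hz'Z'⟩, ⟨hzE, hE⟩, fun i => ⟨hpair i, hfree i⟩,
    ⟨hzfocus, hfocus⟩]

theorem exists_isFocusedCopy {S : Finset V} {d : ℝ} (hd : 0 ≤ d)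
    (hlink : ∀ z ∈ S, ∃ Z : Finset V, #Z = r - 1 ∧ z ∉ Z ∧ insert z Z ∈ E ∧
      (∀ l, #(insert z Z ∩ U l) ≤ 1) ∧ (#{v ∈ S | insert v Z ∈ E} : ℝ) ≤ d) :
    ∀ t : ℕ, ((t : ℝ) - 1) * d < #S → ∃ (Z : Fin t → Finset V) (z : Fin t → V),
      IsFocusedCopy r U E S Z z ∧ (#S : ℝ) - t * d ≤ #{v ∈ S | ∀ i, insert v (Z i) ∉ E}
  | 0, _ => ⟨Fin.elim0, Fin.elim0, by simp [IsFocusedCopy], by simp⟩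
  | t + 1, hS => by
    push_cast at hS
    obtain ⟨Z, z, hcopy, hfree⟩ := exists_isFocusedCopy hd hlink t (by nlinarith)
    set A := {v ∈ S | ∀ i, insert v (Z i) ∉ E}
    obtain ⟨z', hz'⟩ : A.Nonempty := card_pos.1 <| by
      have : (0 : ℝ) < #A := by linarith
      exact_mod_cast this
    obtain ⟨hz'S, hz'free⟩ := mem_filter.1 hz'
    obtain ⟨Z', hZ', hz'Z', hE', hfocus', hsparse⟩ := hlink z' hz'S
    refine ⟨_, _, hcopy.snoc hZ' hz'S hz'Z' hE' hfocus' hz'free, ?_⟩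
    have hA : {v ∈ S | ∀ i, insert v ((Fin.snoc Z Z' : Fin (t + 1) → Finset V) i) ∉ E} =
        {v ∈ A | insert v Z' ∉ E} := by
      simp only [A, filter_filter, Fin.forall_fin_succ', Fin.snoc_castSucc, Fin.snoc_last]
    have hsplit : (#A : ℝ) = #{v ∈ A | insert v Z' ∈ E} + #{v ∈ A | insert v Z' ∉ E} := by
      exact_mod_cast (card_filter_add_card_filter_not _).symm
    have hsub : (#{v ∈ A | insert v Z' ∈ E} : ℝ) ≤ #{v ∈ S | insert v Z' ∈ E} := by
      exact_mod_cast card_le_card (filter_subset_filter _ (filter_subset _ _))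
    rw [hA]
    push_cast
    linarith

end FocusedCopy

section Cleaning

variable [DecidableEq ι] {U : ι → Finset V} {E : Finset (Finset V)} {G : Set (Finset ι)}
  {r s : ℕ}

theorem card_deletionSet_le (hU : Pairwise (Disjoint on U)) (hE : ∀ e ∈ E, #e = r)
    (hG : ∀ g ∈ G, #g = r) {α β γ : ℝ} (hγ : 0 < γ) (hαβ : α ≤ β * γ) {m : ι}
    (hM : ¬ ∃ (Z : Fin s → Finset V) (z : Fin s → V), IsFocusedCopy r U E (U m) Z z) :
    (#(deletionSet U E G α β m) : ℝ) ≤ (s - 1) * (γ * #(U m)) := by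
  by_contra! h
  have hlink : ∀ z ∈ deletionSet U E G α β m, ∃ Z : Finset V, #Z = r - 1 ∧ z ∉ Z ∧
      insert z Z ∈ E ∧ (∀ l, #(insert z Z ∩ U l) ≤ 1) ∧
      (#{v ∈ deletionSet U E G α β m | insert v Z ∈ E} : ℝ) ≤ γ * #(U m) := by
    intro z hz
    obtain ⟨Z, g, hg, hzZ, hZE, hcross, hsparse⟩ := exists_sparse_link hU hγ hαβ hz
    have hcard : #(insert z Z) = r := hE _ hZE
    refine ⟨Z, ?_, hzZ, hZE, card_inter_le_one_of_card_inter_eq_one hU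
      (hcard.trans (hG g hg).symm).le hcross, le_trans ?_ hsparse.le⟩
    · rw [card_insert_of_notMem hzZ] at hcard
      omega
    · exact Nat.cast_le.2 (card_le_card (filter_subset_filter _ deletionSet_subset))
  obtain ⟨Z, z, hcopy, -⟩ := exists_isFocusedCopy (by positivity) hlink s h
  exact hM ⟨Z, z, hcopy.mono deletionSet_subset⟩

variable (U E G) in
noncomputable def deletedVertices (α : ℕ → ℝ) (r : ℕ) (m : ι) : Finset V :=
  (range r).biUnion fun j => deletionSet U E G (α j) (α (j + 1)) m

theorem card_deletedVertices_le (hU : Pairwise (Disjoint on U)) (hE : ∀ e ∈ E, #e = r)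
    (hG : ∀ g ∈ G, #g = r) {α : ℕ → ℝ} {γ : ℝ} (hγ : 0 < γ)
    (hα : ∀ j, α j ≤ α (j + 1) * γ) {m : ι}
    (hM : ¬ ∃ (Z : Fin s → Finset V) (z : Fin s → V), IsFocusedCopy r U E (U m) Z z) :
    (#(deletedVertices U E G α r m) : ℝ) ≤ r * ((s - 1) * (γ * #(U m))) :=
  calc (#(deletedVertices U E G α r m) : ℝ)
      ≤ ∑ j ∈ range r, (#(deletionSet U E G (α j) (α (j + 1)) m) : ℝ) := by
        exact_mod_cast card_biUnion_le
    _ ≤ ∑ _j ∈ range r, (s - 1) * (γ * #(U m)) :=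
        sum_le_sum fun j _ => card_deletionSet_le hU hE hG hγ (hα j) hM
    _ = r * ((s - 1) * (γ * #(U m))) := by rw [sum_const, card_range, nsmul_eq_mul]

theorem not_isHeavy_inter_biUnion (hU : Pairwise (Disjoint on U)) {α : ℕ → ℝ}
    (hα₀ : ∀ Q ∈ G, (#(crossingEdges U E Q ∅) : ℝ) ≤ α 0 * ∏ q ∈ Q, (#(U q) : ℝ))
    {g : Finset ι} {e : Finset V} (hg : #g ≤ r)
    (hsurv : ∀ p ∈ g, ∃ v ∉ deletedVertices U E G α r p, e ∩ U p = {v}) :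
    ∀ P ⊆ g, ¬ IsHeavy U E G (α #P) (e ∩ P.biUnion U) P := by
  intro P
  induction P using Finset.induction_on with
  | empty =>
    rintro - ⟨Q, -, hQ, hheavy⟩
    simp only [card_empty, biUnion_empty, inter_empty, empty_union] at hQ hheavy
    exact not_lt.2 (hα₀ Q hQ) hheavy
  | insert p P hpP ih =>
    intro hsub hheavy
    obtain ⟨v, hvD, hv⟩ := hsurv p (hsub (mem_insert_self p P))
    have hvU : v ∈ U p := (mem_inter.1 (hv ▸ mem_singleton_self v)).2
    have hvY : v ∉ e ∩ P.biUnion U := fun h => by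
      obtain ⟨q, hq, hvq⟩ := mem_biUnion.1 (mem_inter.1 h).2
      exact disjoint_left.1 (hU (ne_of_mem_of_not_mem hq hpP)) hvq hvU
    have hY : e ∩ (insert p P).biUnion U = insert v (e ∩ P.biUnion U) := by
      rw [biUnion_insert, inter_union_distrib_left, hv, insert_eq]
    have hP : #P < r := by
      have := card_le_card hsub
      rw [card_insert_of_notMem hpP] at this
      omega
    refine hvD (mem_biUnion.2 ⟨#P, mem_range.2 hP, mem_deletionSet.2
      ⟨hvU, P, _, hpP, hvY, ih ((subset_insert p P).trans hsub), ?_⟩⟩)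
    rwa [← hY, ← card_insert_of_notMem hpP]

theorem crossingEdges_sdiff_deletedVertices (hU : Pairwise (Disjoint on U))
    (hE : ∀ e ∈ E, #e = r) {α : ℕ → ℝ}
    (hα₀ : ∀ Q ∈ G, (#(crossingEdges U E Q ∅) : ℝ) ≤ α 0 * ∏ q ∈ Q, (#(U q) : ℝ))
    (hαr : α r < 1) {g : Finset ι} (hg : g ∈ G) (hgr : #g = r) :
    crossingEdges (fun m => U m \ deletedVertices U E G α r m) E g ∅ = ∅ := by
  refine eq_empty_of_forall_notMem fun e he => ?_
  obtain ⟨heE, -, hcross⟩ := mem_filter.1 he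
  have hle : #e ≤ #g := ((hE e heE).trans hgr.symm).le
  have hWU : ∀ p, U p \ deletedVertices U E G α r p ⊆ U p := fun _ => sdiff_subset
  have hinter := inter_eq_inter_of_card_inter_eq_one hU hWU hle hcross
  have hsurv : ∀ p ∈ g, ∃ v ∉ deletedVertices U E G α r p, e ∩ U p = {v} := by
    intro p hp
    obtain ⟨v, hv⟩ := card_eq_one.1 (hcross p hp)
    have hvW := (mem_inter.1 (hv ▸ mem_singleton_self v)).2
    exact ⟨v, (mem_sdiff.1 hvW).2, (hinter p).trans hv⟩
  have heg : e ∩ g.biUnion U = e := inter_eq_left.2 <|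
    (subset_biUnion_of_card_inter_eq_one hU hWU hle hcross).trans
      (biUnion_mono fun p _ => hWU p)
  refine not_isHeavy_inter_biUnion hU hα₀ hgr.le hsurv g subset_rfl
    ⟨∅, disjoint_empty_right g, by rwa [union_empty], ?_⟩
  rw [prod_empty, mul_one, union_empty, hgr, heg]
  have he' : e ∈ crossingEdges U E g e :=
    mem_filter.2 ⟨heE, subset_rfl, fun p hp => hinter p ▸ hcross p hp⟩
  exact hαr.trans_le (by exact_mod_cast card_pos.2 ⟨e, he'⟩)

theorem exists_cleaning (hr : 0 < r) (hU : Pairwise (Disjoint on U))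
    (hE : ∀ e ∈ E, #e = r) (hG : ∀ g ∈ G, #g = r)
    (hM : ∀ m, ¬ ∃ (Z : Fin s → Finset V) (z : Fin s → V), IsFocusedCopy r U E (U m) Z z)
    {ε : ℝ} (hε : 0 < ε)
    (hden : ∀ g ∈ G, (#(crossingEdges U E g ∅) : ℝ) ≤ ε * ∏ p ∈ g, (#(U p) : ℝ)) :
    ∃ W : ι → Finset V,
      (∀ m, W m ⊆ U m ∧ (1 - r * (s - 1) * (2 * ε) ^ (r : ℝ)⁻¹) * #(U m) ≤ #(W m)) ∧
      ∀ g ∈ G, crossingEdges W E g ∅ = ∅ := by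
  set δ := (2 * ε) ^ (r : ℝ)⁻¹
  have hδ : 0 < δ := by positivity
  have hδr : δ ^ r = 2 * ε := Real.rpow_inv_natCast_pow (by positivity) hr.ne'
  set α : ℕ → ℝ := fun j => ε / δ ^ j
  have hα : ∀ j, α j ≤ α (j + 1) * δ := fun j => by
    simp only [α, pow_succ]
    rw [div_mul_eq_mul_div, mul_div_mul_right _ _ hδ.ne']
  have hαr : α r < 1 := by
    simp only [α, hδr]
    rw [div_lt_one (by positivity)]
    linarith
  refine ⟨fun m => U m \ deletedVertices U E G α r m, fun m => ⟨sdiff_subset, ?_⟩,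
    fun g hg => crossingEdges_sdiff_deletedVertices hU hE (by simpa [α] using hden) hαr hg
      (hG g hg)⟩
  have hcard : (#(U m) : ℝ) ≤
      #(U m \ deletedVertices U E G α r m) + #(deletedVertices U E G α r m) := by
    exact_mod_cast card_le_card_sdiff_add_card
  linarith [card_deletedVertices_le hU hE hG hδ hα (hM m)]

end Cleaning

theorem two_mul_rpow_inv_le_of_le_one {ε : ℝ} (hε : 0 < ε) (hε1 : ε ≤ 1) {r : ℕ}
    (hr : 0 < r) :
    (2 * ε) ^ (r : ℝ)⁻¹ ≤ 2 * ε ^ ((1 : ℝ) / (r.factorial : ℝ)) := by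
  rw [Real.mul_rpow zero_le_two hε.le]
  have hr1 : (1 : ℝ) ≤ r := by exact_mod_cast hr
  refine mul_le_mul (Real.rpow_le_self_of_one_le one_le_two (inv_le_one_of_one_le₀ hr1))
    (Real.rpow_le_rpow_of_exponent_ge hε hε1 ?_) (by positivity) zero_le_two
  rw [one_div]
  exact inv_anti₀ (by positivity) (by exact_mod_cast r.self_le_factorial)

theorem stmt_15_general (r s : ℕ) (hr : 0 < r) :
    ∃ c : ℝ, 0 < c ∧
      ∀ (ε₀ : ℝ), 0 < ε₀ →
      ∀ (V : Type) [Fintype V] [DecidableEq V]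
        (E : Finset (Finset V)), (∀ e ∈ E, e.card = r) →
      ∀ (L : ℕ) (U : Fin L → Finset V), (∀ i j, i ≠ j → Disjoint (U i) (U j)) →
      -- no focused copy of a member of M(r,s)
      (¬ ∃ (Z : Fin s → Finset V) (z : Fin s → V) (l : Fin L),
        (∀ i, (Z i).card = r - 1) ∧ (∀ i, z i ∈ U l) ∧ (∀ i, z i ∉ Z i) ∧
        (∀ i, insert (z i) (Z i) ∈ E) ∧
        (∀ i i' : Fin s, i < i' → insert (z i') (Z i) ∉ E) ∧
        (∀ i, ∀ l' : Fin L, ((insert (z i) (Z i)) ∩ U l').card ≤ 1)) →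
      ∀ (G : Set (Finset (Fin L))), (∀ g ∈ G, g.card = r) →
      (∀ g ∈ G, ∀ σ : Fin r → Fin L, Function.Injective σ →
        Finset.image σ Finset.univ = g →
        ((E.filter (fun e => ∀ j, (e ∩ U (σ j)).card = 1)).card : ℝ) ≤
          ε₀ * ∏ j, ((U (σ j)).card : ℝ)) →
      ∃ W : Fin L → Finset V,
        (∀ i, W i ⊆ U i ∧
          (1 - c * ε₀ ^ ((1 : ℝ) / (r.factorial : ℝ))) * ((U i).card : ℝ) ≤
            ((W i).card : ℝ)) ∧
        (∀ g ∈ G, ∀ σ : Fin r → Fin L, Function.Injective σ →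
          Finset.image σ Finset.univ = g →
          E.filter (fun e => ∀ j, (e ∩ W (σ j)).card = 1) = ∅) := by
  refine ⟨2 * r * s + 1, by positivity, fun ε₀ hε V _ _ E hE L U hU hM G hG hden => ?_⟩
  have hden' : ∀ g ∈ G, (#(crossingEdges U E g ∅) : ℝ) ≤ ε₀ * ∏ p ∈ g, (#(U p) : ℝ) := by
    intro g hg
    set σ := g.orderEmbOfFin (hG g hg)
    have hσ : univ.image σ = g := g.image_orderEmbOfFin_univ (hG g hg)
    have hprod : ∏ j, (#(U (σ j)) : ℝ) = ∏ p ∈ g, (#(U p) : ℝ) := by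
      rw [← hσ, prod_image σ.injective.injOn]
    rw [crossingEdges_empty_eq_filter hσ, ← hprod]
    exact hden g hg σ σ.injective hσ
  set X := ε₀ ^ ((1 : ℝ) / (r.factorial : ℝ))
  rcases le_or_gt ε₀ 1 with hε1 | hε1
  · obtain ⟨W, hW, hclean⟩ :=
      exists_cleaning hr hU hE hG (fun m ⟨Z, z, h⟩ => hM ⟨Z, z, m, h⟩) hε hden'
    refine ⟨W, fun m => ⟨(hW m).1, ?_⟩, fun g hg σ _ hσ => ?_⟩
    · refine le_trans (mul_le_mul_of_nonneg_right ?_ (Nat.cast_nonneg _)) (hW m).2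
      have hδ := two_mul_rpow_inv_le_of_le_one hε hε1 hr
      have hrs : (0 : ℝ) ≤ r * s := by positivity
      nlinarith [mul_le_mul_of_nonneg_left hδ hrs, mul_nonneg (Nat.cast_nonneg (α := ℝ) r)
        (by positivity : (0 : ℝ) ≤ (2 * ε₀) ^ (r : ℝ)⁻¹), (by positivity : 0 ≤ X)]
    · rw [← crossingEdges_empty_eq_filter hσ]
      exact hclean g hg
  · refine ⟨fun _ => ∅, fun m => ⟨empty_subset _, ?_⟩, fun g hg σ _ hσ => ?_⟩
    · have hX : 1 ≤ X := Real.one_le_rpow hε1.le (by positivity)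
      rw [card_empty, Nat.cast_zero]
      refine mul_nonpos_of_nonpos_of_nonneg ?_ (Nat.cast_nonneg _)
      nlinarith [mul_nonneg (by positivity : (0 : ℝ) ≤ 2 * r * s) (hX.trans' zero_le_one)]
    · exact filter_eq_empty_iff.2 fun e _ h => by simpa using h ⟨0, hr⟩

/-- Cleaning lemma: in an r-uniform hypergraph with no focused copy of a member of
M(r,s), sparse r-tuples of parts can be made empty by deleting few vertices. -/
theorem stmt_15 (r s : ℕ) (hr : 0 < r) (hs : 0 < s) :
    ∃ c : ℝ, 0 < c ∧
      ∀ (ε₀ : ℝ), 0 < ε₀ →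
      ∀ (V : Type) [Fintype V] [DecidableEq V]
        (E : Finset (Finset V)), (∀ e ∈ E, e.card = r) →
      ∀ (L : ℕ) (U : Fin L → Finset V), (∀ i j, i ≠ j → Disjoint (U i) (U j)) →
      -- no focused copy of a member of M(r,s)
      (¬ ∃ (Z : Fin s → Finset V) (z : Fin s → V) (l : Fin L),
        (∀ i, (Z i).card = r - 1) ∧ (∀ i, z i ∈ U l) ∧ (∀ i, z i ∉ Z i) ∧
        (∀ i, insert (z i) (Z i) ∈ E) ∧
        (∀ i i' : Fin s, i < i' → insert (z i') (Z i) ∉ E) ∧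
        (∀ i, ∀ l' : Fin L, ((insert (z i) (Z i)) ∩ U l').card ≤ 1)) →
      ∀ (G : Set (Finset (Fin L))), (∀ g ∈ G, g.card = r) →
      (∀ g ∈ G, ∀ σ : Fin r → Fin L, Function.Injective σ →
        Finset.image σ Finset.univ = g →
        ((E.filter (fun e => ∀ j, (e ∩ U (σ j)).card = 1)).card : ℝ) ≤
          ε₀ * ∏ j, ((U (σ j)).card : ℝ)) →
      ∃ W : Fin L → Finset V,
        (∀ i, W i ⊆ U i ∧
          (1 - c * ε₀ ^ ((1 : ℝ) / (r.factorial : ℝ))) * ((U i).card : ℝ) ≤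
            ((W i).card : ℝ)) ∧
        (∀ g ∈ G, ∀ σ : Fin r → Fin L, Function.Injective σ →
          Finset.image σ Finset.univ = g →
          E.filter (fun e => ∀ j, (e ∩ W (σ j)).card = 1) = ∅) :=
  stmt_15_general r s hr
end

section
/- Every graph G on N vertices that is algebraic of complexity (n,d,m) over a field F has VC-dimension at most the least integer k such that C(kmd+n, n) < 2^k; in particular, its VC-dimension is O(n·log(ndm)). -/
open MvPolynomial Finset

def Tset (n D : ℕ) : Finset (Fin n → ℕ) :=
  (Fintype.piFinset fun _ : Fin n => Finset.range (D+1)).filter fun g => ∑ i, g i ≤ D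

lemma mem_Tset {n D : ℕ} {g : Fin n → ℕ} : g ∈ Tset n D ↔ ∑ i, g i ≤ D := by
  constructor
  · intro h; exact (Finset.mem_filter.mp h).2
  · intro h
    refine Finset.mem_filter.mpr ⟨Fintype.mem_piFinset.mpr fun i => ?_, h⟩
    rw [Finset.mem_range, Nat.lt_succ_iff]
    exact le_trans (Finset.single_le_sum (fun _ _ => Nat.zero_le _) (Finset.mem_univ i)) h

lemma card_Tset (n : ℕ) : ∀ D, (Tset n D).card = (D + n).choose n := by
  induction n with
  | zero =>
    intro D
    simp only [Nat.add_zero, Nat.choose_zero_right]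
    have : Tset 0 D = {fun i => i.elim0} := by
      ext g
      simp [mem_Tset, funext_iff, Fin.forall_iff]
    simp [this]
  | succ n ih =>
    intro D
    have hdecomp : Tset (n+1) D
        = (Finset.range (D+1)).biUnion (fun j => (Tset n (D - j)).image (fun h : Fin n → ℕ => (Fin.cons j h : Fin (n+1) → ℕ))) := by
      ext g
      simp only [mem_Tset, Finset.mem_biUnion, Finset.mem_range, Finset.mem_image,
        Nat.lt_succ_iff]
      constructor
      · intro h
        refine ⟨g 0, ?_, Fin.tail g, ?_, Fin.cons_self_tail g⟩
        · calc g 0 ≤ ∑ i, g i :=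
              Finset.single_le_sum (fun _ _ => Nat.zero_le _) (Finset.mem_univ 0)
          _ ≤ D := h
        · have := Fin.sum_univ_succ g
          have h2 : g 0 + ∑ i, Fin.tail g i ≤ D := by
            rw [show (∑ i, Fin.tail g i) = ∑ i : Fin n, g i.succ from rfl]; omega
          omega
      · rintro ⟨j, hj, h, hh, rfl⟩
        rw [Fin.sum_cons]
        omega
    rw [hdecomp, Finset.card_biUnion]
    · have hstep : ∀ j ∈ Finset.range (D+1),
          ((Tset n (D - j)).image (fun h : Fin n → ℕ => (Fin.cons j h : Fin (n+1) → ℕ))).card = ((D - j) + n).choose n := by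
        intro j hj
        have hinj : Function.Injective (fun h : Fin n → ℕ => (Fin.cons j h : Fin (n+1) → ℕ)) := by
          intro a b hab
          have := congrArg Fin.tail hab
          simpa [Fin.tail_cons] using this
        rw [Finset.card_image_of_injective _ hinj, ih]
      rw [Finset.sum_congr rfl hstep]
      have := Finset.sum_range_reflect (fun i => (i + n).choose n) (D+1)
      simp only [Nat.add_sub_cancel] at this
      calc ∑ j ∈ Finset.range (D+1), ((D - j) + n).choose n
          = ∑ j ∈ Finset.range (D+1), (j + n).choose n := by
            rw [← this]
        _ = (D + n + 1).choose (n + 1) := Nat.sum_range_add_choose D n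
        _ = (D + (n+1)).choose (n+1) := by
              have : D + n + 1 = D + (n+1) := by omega
              rw [this]
    · intro a ha b hb hab
      simp only [Finset.disjoint_left, Finset.mem_image]
      rintro g ⟨h1, _, rfl⟩ ⟨h2, _, hc⟩
      apply hab
      have := congrFun hc 0
      simpa [Fin.cons_zero] using this.symm

lemma finrank_restrictTotalDegree (F : Type) [Field F] (n D : ℕ) :
    Module.finrank F (restrictTotalDegree (Fin n) F D) = (D + n).choose n := by
  classical
  have hsum : ∀ t : Fin n →₀ ℕ, (t.sum fun _ e => e) = ∑ i, t i := by
    intro t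
    rw [Finsupp.sum_fintype]
    intro i; rfl
  let e : {t : Fin n →₀ ℕ | (t.sum fun _ e => e) ≤ D} ≃ {g // g ∈ Tset n D} :=
    Equiv.subtypeEquiv Finsupp.equivFunOnFinite (by
      intro t
      rw [Set.mem_setOf_eq, hsum, mem_Tset]
      rfl)
  haveI : Fintype {t : Fin n →₀ ℕ | (t.sum fun _ e => e) ≤ D} := Fintype.ofEquiv _ e.symm
  have hb := Module.finrank_eq_card_basis
    (MvPolynomial.basisRestrictSupport F {t : Fin n →₀ ℕ | (t.sum fun _ e => e) ≤ D})
  rw [show restrictTotalDegree (Fin n) F D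
      = MvPolynomial.restrictSupport F {t : Fin n →₀ ℕ | (t.sum fun _ e => e) ≤ D} from rfl]
  rw [hb, Fintype.card_congr e, Fintype.card_coe, card_Tset]

lemma zero_pattern_bound (F : Type) [Field F] (n D : ℕ) {ι κ : Type} [Fintype ι] [Fintype κ]
    (w : ι → (Fin n → F)) (p : κ → MvPolynomial (Fin n) F)
    (hD : ∀ s : Finset κ, (∑ j ∈ s, (p j).totalDegree) ≤ D)
    (hdist : Function.Injective (fun i : ι => fun j : κ => eval (w i) (p j) = 0)) :
    Fintype.card ι ≤ (D + n).choose n := by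
  classical
  set Z : ι → Finset κ := fun i => Finset.univ.filter (fun j => eval (w i) (p j) ≠ 0) with hZ
  set Q : ι → MvPolynomial (Fin n) F := fun i => ∏ j ∈ Z i, p j with hQ
  have hmemZ : ∀ i j, j ∈ Z i ↔ ¬ (eval (w i) (p j) = 0) := by
    intro i j; simp [hZ]
  have hQmem : ∀ i, Q i ∈ restrictTotalDegree (Fin n) F D := fun i =>
    (mem_restrictTotalDegree _ _ _).mpr (le_trans (totalDegree_finset_prod _ _) (hD _))
  have hself : ∀ i, eval (w i) (Q i) ≠ 0 := by
    intro i
    rw [hQ, map_prod, Finset.prod_ne_zero_iff]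
    intro j hj
    exact (hmemZ i j).mp hj
  have hsub : ∀ i i', eval (w i) (Q i') ≠ 0 → Z i' ⊆ Z i := by
    intro i i' h j hj
    rw [hQ, map_prod, Finset.prod_ne_zero_iff] at h
    exact (hmemZ i j).mpr (h j hj)
  have hZinj : Function.Injective Z := by
    intro a b hab
    apply hdist
    funext j
    apply propext
    show (eval (w a) (p j) = 0) ↔ (eval (w b) (p j) = 0)
    rw [← not_not (a := eval (w a) (p j) = 0), ← not_not (a := eval (w b) (p j) = 0), not_iff_not,
      ← hmemZ a j, ← hmemZ b j, hab]
  have hLI : LinearIndependent F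
      (fun i => (⟨Q i, hQmem i⟩ : restrictTotalDegree (Fin n) F D)) := by
    rw [linearIndependent_iff']
    intro s g hsum i hi
    by_contra hne
    set t := s.filter (fun i => g i ≠ 0) with ht
    have hit : i ∈ t := Finset.mem_filter.mpr ⟨hi, hne⟩
    obtain ⟨i₀, hi₀t, hmin⟩ := t.exists_min_image (fun i => (Z i).card) ⟨i, hit⟩
    have hi₀s : i₀ ∈ s := (Finset.mem_filter.mp hi₀t).1
    have hgi₀ : g i₀ ≠ 0 := (Finset.mem_filter.mp hi₀t).2
    have hsum' : ∑ i ∈ s, g i • Q i = 0 := by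
      have := congrArg (fun q : restrictTotalDegree (Fin n) F D => (q : MvPolynomial (Fin n) F))
        hsum
      simpa using this
    have h0 : ∑ i ∈ s, g i * eval (w i₀) (Q i) = 0 := by
      have := congrArg (eval (w i₀)) hsum'
      rw [map_sum, map_zero] at this
      rw [← this]
      refine Finset.sum_congr rfl fun i _ => ?_
      rw [smul_eq_C_mul, map_mul, eval_C]
    have hzero : ∀ b ∈ s, b ≠ i₀ → g b * eval (w i₀) (Q b) = 0 := by
      intro b hbs hbne
      by_cases hg : g b = 0
      · rw [hg, zero_mul]
      by_cases he : eval (w i₀) (Q b) = 0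
      · rw [he, mul_zero]
      exfalso
      have hZeq : Z b = Z i₀ :=
        Finset.eq_of_subset_of_card_le (hsub i₀ b he)
          (hmin b (Finset.mem_filter.mpr ⟨hbs, hg⟩))
      exact hbne (hZinj hZeq)
    have : g i₀ * eval (w i₀) (Q i₀) = 0 := by
      rw [← h0, Finset.sum_eq_single i₀ hzero (fun h => absurd hi₀s h)]
    rcases mul_eq_zero.mp this with h | h
    · exact hgi₀ h
    · exact hself i₀ h
  have := hLI.fintype_card_le_finrank
  rwa [finrank_restrictTotalDegree] at this

lemma totalDegree_aeval_le {F : Type} [CommRing F] {σ τ : Type} (g : σ → MvPolynomial τ F)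
    (hg : ∀ j, (g j).totalDegree ≤ 1) (q : MvPolynomial σ F) :
    (aeval g q).totalDegree ≤ q.totalDegree := by
  classical
  conv_lhs => rw [q.as_sum, map_sum]
  apply le_trans (totalDegree_finset_sum _ _)
  apply Finset.sup_le
  intro s hs
  rw [aeval_monomial]
  apply le_trans (totalDegree_mul _ _)
  have h1 : (algebraMap F (MvPolynomial τ F) (coeff s q)).totalDegree = 0 := totalDegree_C _
  rw [h1, zero_add, Finsupp.prod]
  apply le_trans (totalDegree_finset_prod _ _)
  calc ∑ j ∈ s.support, ((g j) ^ (s j)).totalDegree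
      ≤ ∑ j ∈ s.support, (s j) * 1 := Finset.sum_le_sum fun j _ =>
        le_trans (totalDegree_pow _ _) (Nat.mul_le_mul_left _ (hg j))
    _ = ∑ j ∈ s.support, s j := by simp
    _ ≤ q.totalDegree := le_totalDegree hs

/-- An algebraic graph of complexity (n,d,m) has VC-dimension at most the least k with
C(kmd+n, n) < 2^k. -/
theorem stmt_17 (F : Type) [Field F] (n d m : ℕ) (hn : 0 < n) (hd : 0 < d) (hm : 0 < m)
    (V : Finset (Fin n → F))
    (f : Fin m → MvPolynomial (Fin 2 × Fin n) F) (hdeg : ∀ i, (f i).totalDegree ≤ d)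
    (φ : (Fin m → Prop) → Prop)
    (Adj : (Fin n → F) → (Fin n → F) → Prop)
    (hAdj : ∀ x y, Adj x y ↔
      φ (fun i => eval (fun p : Fin 2 × Fin n =>
        if p.1 = 0 then x p.2 else y p.2) (f i) = 0))
    (k : ℕ) (hk : (k * m * d + n).choose n < 2 ^ k)
    (hkleast : ∀ k' < k, ¬ ((k' * m * d + n).choose n < 2 ^ k')) :
    ∀ U : Finset (Fin n → F), U ⊆ V →
      (∀ S ⊆ U, ∃ v ∈ V, ∀ u ∈ U, (u ∈ S ↔ Adj v u)) →
      U.card ≤ k := by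
  classical
  intro U hUV hshat
  by_contra hcon
  push_neg at hcon
  obtain ⟨U', hU'U, hU'card⟩ := Finset.exists_subset_card_eq (le_of_lt hcon)
  -- the partial-substitution polynomials
  set P : (Fin n → F) → Fin m → MvPolynomial (Fin n) F :=
    fun u i => aeval (fun q : Fin 2 × Fin n => if q.1 = 0 then X q.2 else C (u q.2)) (f i)
    with hP
  have hPdeg : ∀ u i, (P u i).totalDegree ≤ d := by
    intro u i
    refine le_trans (totalDegree_aeval_le _ ?_ (f i)) (hdeg i)
    intro q
    by_cases h : q.1 = 0
    · simp [h, totalDegree_X]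
    · simp [h, totalDegree_C]
  have hPeval : ∀ (x u : Fin n → F) (i : Fin m),
      eval x (P u i) = eval (fun q : Fin 2 × Fin n =>
        if q.1 = 0 then x q.2 else u q.2) (f i) := by
    intro x u i
    rw [hP]
    simp only
    rw [aeval_def, eval₂_comp_left (eval x)]
    have hc : (eval x).comp (algebraMap F (MvPolynomial (Fin n) F)) = RingHom.id F := by
      ext a
      simp
    rw [hc]
    have hg : (eval x) ∘ (fun q : Fin 2 × Fin n => if q.1 = 0 then X q.2 else C (u q.2))
        = fun q : Fin 2 × Fin n => if q.1 = 0 then x q.2 else u q.2 := by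
      funext q
      by_cases h : q.1 = 0 <;> simp [h]
    rw [hg]
    rfl
  -- choose shattering witnesses
  have hex : ∀ S : {S // S ∈ U'.powerset}, ∃ v, v ∈ V ∧ ∀ u ∈ U, (u ∈ S.1 ↔ Adj v u) := by
    intro S
    exact hshat S.1 (le_trans (Finset.mem_powerset.mp S.2) hU'U)
  set w : {S // S ∈ U'.powerset} → (Fin n → F) := fun S => (hex S).choose with hw
  have hwspec : ∀ S : {S // S ∈ U'.powerset}, ∀ u ∈ U, (u ∈ S.1 ↔ Adj (w S) u) :=
    fun S => ((hex S).choose_spec).2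
  -- apply zero pattern bound
  have hbound := zero_pattern_bound F n (k * m * d)
    (ι := {S // S ∈ U'.powerset}) (κ := {u // u ∈ U'} × Fin m)
    w (fun j => P j.1.1 j.2)
    (by
      intro s
      calc ∑ j ∈ s, (P j.1.1 j.2).totalDegree ≤ ∑ _j ∈ s, d :=
            Finset.sum_le_sum fun j _ => hPdeg _ _
        _ = s.card * d := by rw [Finset.sum_const, smul_eq_mul]
        _ ≤ (Fintype.card ({u // u ∈ U'} × Fin m)) * d := by
            exact Nat.mul_le_mul_right d (Finset.card_le_univ s)
        _ = k * m * d := by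
            rw [Fintype.card_prod, Fintype.card_coe, Fintype.card_fin, hU'card])
    (by
      intro S T hpat
      apply Subtype.ext
      apply Finset.ext
      intro u
      by_cases hu : u ∈ U'
      · have huU : u ∈ U := hU'U hu
        rw [hwspec S u huU, hwspec T u huU, hAdj, hAdj]
        have hfun : (fun i => eval (fun q : Fin 2 × Fin n =>
            if q.1 = 0 then (w S) q.2 else u q.2) (f i) = 0)
            = (fun i => eval (fun q : Fin 2 × Fin n =>
            if q.1 = 0 then (w T) q.2 else u q.2) (f i) = 0) := by
          funext i
          rw [← hPeval (w S) u i, ← hPeval (w T) u i]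
          exact congrFun hpat (⟨u, hu⟩, i)
        rw [hfun]
      · constructor
        · intro h
          exact absurd (Finset.mem_powerset.mp S.2 h) hu
        · intro h
          exact absurd (Finset.mem_powerset.mp T.2 h) hu)
  rw [Fintype.card_coe, Finset.card_powerset, hU'card] at hbound
  exact absurd hk (not_lt.mpr hbound)
end
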